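/- arXiv:2011.11877 — 7 statements merged into one kernel-verified Lean document; each statement's English description precedes it below -/
import Mathlib

section
/- There exists a constant C > 0 such that for every δ ∈ (0,1) there exists N so that for all n ≥ N and all m ≥ C·n·log n the following holds. Let w_1,…,w_m ∈ {0,1}^n be i.i.d. uniform over the set of indicator vectors of 2-element subsets of {1,…,n}, and let W ∈ {0,1}^{m×n} be the matrix whose i-th row is w_i. Then with probability at least 1 − δ, every matrix W' ∈ {0,1}^{m×n}, each of whose rows has exactly two entries equal to 1, satisfying W'(W')ᵀ = WWᵀ is obtained from W by permuting columns: there exists a permutation π of {1,…,n} such that W'_{i,j} = W_{i,π(j)} for all i ∈ {1,…,m} and j ∈ {1,…,n}. -/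
open Classical Matrix

/-- The `{0,1}` incidence matrix of a tuple `E` of 2-element subsets of `Fin n`:
row `i` is the indicator vector of `E i`. -/
def incMatrix {m n : ℕ} (E : Fin m → {s : Finset (Fin n) // s.card = 2}) :
    Matrix (Fin m) (Fin n) ℤ :=
  Matrix.of fun i j => if j ∈ (E i).1 then 1 else 0

variable {α : Type*} [DecidableEq α]

lemma pair_of_mem_card_two {s : Finset α} {x : α}
    (h2 : s.card = 2) (hx : x ∈ s) : ∃ y, y ≠ x ∧ s = {x, y} := by
  obtain ⟨a, b, hab, rfl⟩ := Finset.card_eq_two.mp h2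
  rcases Finset.mem_insert.mp hx with rfl | h
  · exact ⟨b, hab.symm, rfl⟩
  · rw [Finset.mem_singleton.mp h]
    exact ⟨a, hab, Finset.pair_comm a b⟩

lemma eq_pair_of_subset {s : Finset α} {x y : α} (h2 : s.card = 2) (hxy : x ≠ y)
    (hx : x ∈ s) (hy : y ∈ s) : s = {x, y} := by
  refine (Finset.eq_of_subset_of_card_le (fun z hz => ?_) ?_).symm
  · rcases Finset.mem_insert.mp hz with rfl | hz
    · exact hx
    · rw [Finset.mem_singleton.mp hz]; exact hy
  · rw [h2, Finset.card_insert_of_notMem (by simpa using hxy), Finset.card_singleton]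

-- helper: x ∈ z in the 4-set situation
lemma mem_of_inter_config {s t z z' : Finset α} {x p q : α}
    (hz : z.card = 2) (hz' : z'.card = 2)
    (hpx : p ≠ x) (hqx : q ≠ x) (hpq : p ≠ q)
    (hs : s = {x, p}) (ht : t = {x, q})
    (hsz : (s ∩ z).card = 1) (htz : (t ∩ z).card = 1)
    (hsz' : (s ∩ z').card = 1) (htz' : (t ∩ z').card = 1)
    (hzz' : (z ∩ z').card = 1) : x ∈ z := by
  by_contra hxz
  -- p ∈ z and q ∈ z, so z = {p, q}
  obtain ⟨y, hy⟩ := Finset.card_pos.mp (by omega : 0 < (s ∩ z).card)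
  obtain ⟨hys, hyz⟩ := Finset.mem_inter.mp hy
  have hpz : p ∈ z := by
    rcases (by rw [hs] at hys; simpa using hys : y = x ∨ y = p) with rfl | rfl
    · exact absurd hyz hxz
    · exact hyz
  obtain ⟨y2, hy2⟩ := Finset.card_pos.mp (by omega : 0 < (t ∩ z).card)
  obtain ⟨hy2t, hy2z⟩ := Finset.mem_inter.mp hy2
  have hqz : q ∈ z := by
    rcases (by rw [ht] at hy2t; simpa using hy2t : y2 = x ∨ y2 = q) with rfl | rfl
    · exact absurd hy2z hxz
    · exact hy2z
  have hzpq : z = {p, q} := eq_pair_of_subset hz hpq hpz hqz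
  by_cases hxz' : x ∈ z'
  · -- z' meets z in p or q, so z' = s or t, contradiction
    obtain ⟨y3, hy3⟩ := Finset.card_pos.mp (by omega : 0 < (z ∩ z').card)
    obtain ⟨hy3z, hy3z'⟩ := Finset.mem_inter.mp hy3
    rcases (by rw [hzpq] at hy3z; simpa using hy3z : y3 = p ∨ y3 = q) with rfl | rfl
    · have : z' = s := by rw [hs]; exact eq_pair_of_subset hz' (Ne.symm hpx) hxz' hy3z'
      rw [this, Finset.inter_self, (by rw [hs]; simp [hpx.symm] : s.card = 2)] at hsz'
      omega
    · have : z' = t := by rw [ht]; exact eq_pair_of_subset hz' (Ne.symm hqx) hxz' hy3z'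
      rw [this, Finset.inter_self, (by rw [ht]; simp [hqx.symm] : t.card = 2)] at htz'
      omega
  · -- p, q ∈ z', so z' = z, contradiction with (z ∩ z').card = 1
    obtain ⟨y4, hy4⟩ := Finset.card_pos.mp (by omega : 0 < (s ∩ z').card)
    obtain ⟨hy4s, hy4z'⟩ := Finset.mem_inter.mp hy4
    have hpz' : p ∈ z' := by
      rcases (by rw [hs] at hy4s; simpa using hy4s : y4 = x ∨ y4 = p) with rfl | rfl
      · exact absurd hy4z' hxz'
      · exact hy4z'
    obtain ⟨y5, hy5⟩ := Finset.card_pos.mp (by omega : 0 < (t ∩ z').card)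
    obtain ⟨hy5t, hy5z'⟩ := Finset.mem_inter.mp hy5
    have hqz' : q ∈ z' := by
      rcases (by rw [ht] at hy5t; simpa using hy5t : y5 = x ∨ y5 = q) with rfl | rfl
      · exact absurd hy5z' hxz'
      · exact hy5z'
    have : z' = z := by rw [hzpq]; exact eq_pair_of_subset hz' hpq hpz' hqz'
    rw [this, Finset.inter_self, hz] at hzz'
    omega

lemma four_common {s t u r : Finset α}
    (hs : s.card = 2) (ht : t.card = 2) (hu : u.card = 2) (hr : r.card = 2)
    (hst : (s ∩ t).card = 1) (hsu : (s ∩ u).card = 1) (hsr : (s ∩ r).card = 1)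
    (htu : (t ∩ u).card = 1) (htr : (t ∩ r).card = 1) (hur : (u ∩ r).card = 1) :
    ∃ w, w ∈ s ∧ w ∈ t ∧ w ∈ u ∧ w ∈ r := by
  obtain ⟨x, hx⟩ := Finset.card_eq_one.mp hst
  have hxs : x ∈ s := (Finset.mem_inter.mp (hx ▸ Finset.mem_singleton_self x)).1
  have hxt : x ∈ t := (Finset.mem_inter.mp (hx ▸ Finset.mem_singleton_self x)).2
  obtain ⟨p, hpx, hsp⟩ := pair_of_mem_card_two hs hxs
  obtain ⟨q, hqx, htq⟩ := pair_of_mem_card_two ht hxt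
  have hpq : p ≠ q := by
    rintro rfl
    have : p ∈ s ∩ t := Finset.mem_inter.mpr ⟨by rw [hsp]; simp, by rw [htq]; simp⟩
    rw [hx] at this
    exact hpx (Finset.mem_singleton.mp this)
  have hxu : x ∈ u := mem_of_inter_config hu hr hpx hqx hpq hsp htq hsu htu hsr htr hur
  have hxr : x ∈ r := mem_of_inter_config hr hu hpx hqx hpq hsp htq hsr htr hsu htu
    (by rwa [Finset.inter_comm])
  exact ⟨x, hxs, hxt, hxu, hxr⟩

lemma pair_inter_pair {v a b : α} (hav : a ≠ v) (hbv : b ≠ v) (hab : a ≠ b) :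
    ({v, a} : Finset α) ∩ {v, b} = {v} := by
  ext x
  simp only [Finset.mem_inter, Finset.mem_insert, Finset.mem_singleton]
  constructor
  · rintro ⟨h1 | h1, h2 | h2⟩
    · exact h1
    · exact h1
    · exact h2
    · exact absurd (h1.symm.trans h2) hab
  · rintro rfl; exact ⟨Or.inl rfl, Or.inl rfl⟩

lemma pair_inter_pair_empty {u a v b : α} (h1 : u ≠ v) (h2 : u ≠ b) (h3 : a ≠ v) (h4 : a ≠ b) :
    ({u, a} : Finset α) ∩ {v, b} = ∅ := by
  ext x
  simp only [Finset.mem_inter, Finset.mem_insert, Finset.mem_singleton, Finset.notMem_empty,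
    iff_false, not_and]
  rintro (rfl | rfl) (rfl | rfl)
  · exact h1 rfl
  · exact h2 rfl
  · exact h3 rfl
  · exact h4 rfl


lemma sum_mul_eq_card_inter {n : ℕ} (f g : Fin n → ℤ)
    (hf : ∀ k, f k = 0 ∨ f k = 1) (hg : ∀ k, g k = 0 ∨ g k = 1) :
    ∑ k, f k * g k =
      ((Finset.univ.filter fun k => f k = 1) ∩ (Finset.univ.filter fun k => g k = 1)).card := by
  rw [← Finset.filter_and, Finset.card_filter]
  push_cast
  refine Finset.sum_congr rfl fun k _ => ?_
  rcases hf k with h | h <;> rcases hg k with h' | h' <;> simp [h, h']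

lemma det_lemma {m n : ℕ} (E : Fin m → {s : Finset (Fin n) // s.card = 2})
    (hdeg : ∀ v : Fin n,
      4 ≤ (Finset.univ.filter fun u => u ≠ v ∧ ∃ i, v ∈ (E i).1 ∧ u ∈ (E i).1).card)
    (W' : Matrix (Fin m) (Fin n) ℤ)
    (h01 : ∀ i j, W' i j = 0 ∨ W' i j = 1)
    (hrow : ∀ i, (Finset.univ.filter (fun j => W' i j = 1)).card = 2)
    (hgram : W' * W'ᵀ = incMatrix E * (incMatrix E)ᵀ) :
    ∃ π : Equiv.Perm (Fin n), ∀ i j, W' i j = incMatrix E i (π j) := by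
  set e : Fin m → Finset (Fin n) := fun i => (E i).1 with he
  set e' : Fin m → Finset (Fin n) := fun i => Finset.univ.filter (fun j => W' i j = 1) with he'
  have hecard : ∀ i, (e i).card = 2 := fun i => (E i).2
  have he'card : ∀ i, (e' i).card = 2 := hrow
  -- Gram matrices give intersection cardinalities
  have hcard : ∀ i j, (e' i ∩ e' j).card = (e i ∩ e j).card := by
    intro i j
    have h1 : (W' * W'ᵀ) i j = ((e' i ∩ e' j).card : ℤ) := by
      rw [Matrix.mul_apply]
      simp only [Matrix.transpose_apply]
      exact sum_mul_eq_card_inter _ _ (h01 i) (h01 j)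
    have h2 : (incMatrix E * (incMatrix E)ᵀ) i j = ((e i ∩ e j).card : ℤ) := by
      rw [Matrix.mul_apply]
      simp only [Matrix.transpose_apply]
      have := sum_mul_eq_card_inter (fun k => incMatrix E i k) (fun k => incMatrix E j k)
        (fun k => by unfold incMatrix; simp only [Matrix.of_apply]; split <;> simp)
        (fun k => by unfold incMatrix; simp only [Matrix.of_apply]; split <;> simp)
      rw [this]
      congr 2 <;>
      · ext k
        simp [incMatrix, he]
    rw [hgram] at h1
    have := h1.symm.trans h2
    exact_mod_cast this
  -- existence of a common vertex for each star
  have hex : ∀ v : Fin n, ∃ w : Fin n, ∀ i, v ∈ e i → w ∈ e' i := by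
    intro v
    -- get 4 distinct neighbors
    obtain ⟨T, hTsub, hT4⟩ := Finset.exists_subset_card_eq (hdeg v)
    obtain ⟨a, haT⟩ := Finset.card_pos.mp (by omega : 0 < T.card)
    obtain ⟨b, hbT⟩ := Finset.card_pos.mp
      (by rw [Finset.card_erase_of_mem haT, hT4]; omega : 0 < (T.erase a).card)
    obtain ⟨c, hcT⟩ := Finset.card_pos.mp
      (by rw [Finset.card_erase_of_mem hbT, Finset.card_erase_of_mem haT, hT4]; omega :
        0 < ((T.erase a).erase b).card)
    obtain ⟨d, hdT⟩ := Finset.card_pos.mp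
      (by rw [Finset.card_erase_of_mem hcT, Finset.card_erase_of_mem hbT,
          Finset.card_erase_of_mem haT, hT4]; omega : 0 < (((T.erase a).erase b).erase c).card)
    have hba : b ≠ a := (Finset.mem_erase.mp hbT).1
    have hcb : c ≠ b := (Finset.mem_erase.mp hcT).1
    have hca : c ≠ a := (Finset.mem_erase.mp (Finset.mem_erase.mp hcT).2).1
    have hdc : d ≠ c := (Finset.mem_erase.mp hdT).1
    have hdb : d ≠ b := (Finset.mem_erase.mp (Finset.mem_erase.mp hdT).2).1
    have hda : d ≠ a := (Finset.mem_erase.mp (Finset.mem_erase.mp (Finset.mem_erase.mp hdT).2).2).1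
    have hb' : b ∈ T := (Finset.mem_erase.mp hbT).2
    have hc' : c ∈ T := (Finset.mem_erase.mp (Finset.mem_erase.mp hcT).2).2
    have hd' : d ∈ T :=
      (Finset.mem_erase.mp (Finset.mem_erase.mp (Finset.mem_erase.mp hdT).2).2).2
    have hmem : ∀ x ∈ T, x ≠ v ∧ ∃ i, v ∈ e i ∧ x ∈ e i := by
      intro x hx
      have := hTsub hx
      simpa using (Finset.mem_filter.mp this).2
    obtain ⟨hav, ia, hvia, haia⟩ := hmem a haT
    obtain ⟨hbv, ib, hvib, hbib⟩ := hmem b hb'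
    obtain ⟨hcv, ic, hvic, hcic⟩ := hmem c hc'
    obtain ⟨hdv, id', hvid, hdid⟩ := hmem d hd'
    have hea : e ia = {v, a} := eq_pair_of_subset (hecard ia) (Ne.symm hav) hvia haia
    have heb : e ib = {v, b} := eq_pair_of_subset (hecard ib) (Ne.symm hbv) hvib hbib
    have hec : e ic = {v, c} := eq_pair_of_subset (hecard ic) (Ne.symm hcv) hvic hcic
    have hed : e id' = {v, d} := eq_pair_of_subset (hecard id') (Ne.symm hdv) hvid hdid
    have hint : ∀ (i1 i2 : Fin m) (x y : Fin n), e i1 = {v, x} → e i2 = {v, y} →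
        x ≠ v → y ≠ v → x ≠ y → (e' i1 ∩ e' i2).card = 1 := by
      intro i1 i2 x y h1 h2 hxv hyv hxy
      rw [hcard, h1, h2, pair_inter_pair hxv hyv hxy, Finset.card_singleton]
    obtain ⟨w, hwa, hwb, hwc, hwd⟩ := four_common (he'card ia) (he'card ib) (he'card ic)
      (he'card id')
      (hint ia ib a b hea heb hav hbv (fun h => hba h.symm))
      (hint ia ic a c hea hec hav hcv (fun h => hca h.symm))
      (hint ia id' a d hea hed hav hdv (fun h => hda h.symm))
      (hint ib ic b c heb hec hbv hcv (fun h => hcb h.symm))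
      (hint ib id' b d heb hed hbv hdv (fun h => hdb h.symm))
      (hint ic id' c d hec hed hcv hdv (fun h => hdc h.symm))
    refine ⟨w, fun i hvi => ?_⟩
    by_contra hw
    obtain ⟨a', ha'w, hsa⟩ := pair_of_mem_card_two (he'card ia) hwa
    obtain ⟨b', hb'w, hsb⟩ := pair_of_mem_card_two (he'card ib) hwb
    obtain ⟨c', hc'w, hsc⟩ := pair_of_mem_card_two (he'card ic) hwc
    have hdist : a' ≠ b' ∧ a' ≠ c' ∧ b' ≠ c' := by
      refine ⟨?_, ?_, ?_⟩ <;> rintro rfl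
      · have h1 := hint ia ib a b hea heb hav hbv (fun h => hba h.symm)
        rw [hsa, ← hsb, Finset.inter_self, he'card ib] at h1; omega
      · have h1 := hint ia ic a c hea hec hav hcv (fun h => hca h.symm)
        rw [hsa, ← hsc, Finset.inter_self, he'card ic] at h1; omega
      · have h1 := hint ib ic b c heb hec hbv hcv (fun h => hcb h.symm)
        rw [hsb, ← hsc, Finset.inter_self, he'card ic] at h1; omega
    have hget : ∀ (i2 : Fin m) (x' : Fin n), e' i2 = {w, x'} → v ∈ e i2 → x' ∈ e' i := by
      intro i2 x' heq hv2
      have hpos : 0 < (e' i ∩ e' i2).card := by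
        rw [hcard]
        exact Finset.card_pos.mpr ⟨v, Finset.mem_inter.mpr ⟨hvi, hv2⟩⟩
      obtain ⟨y, hy⟩ := Finset.card_pos.mp hpos
      obtain ⟨hy1, hy2⟩ := Finset.mem_inter.mp hy
      rw [heq] at hy2
      rcases Finset.mem_insert.mp hy2 with rfl | hy3
      · exact absurd hy1 hw
      · rw [Finset.mem_singleton.mp hy3] at hy1; exact hy1
    have h1 := hget ia a' hsa hvia
    have h2 := hget ib b' hsb hvib
    have h3 := hget ic c' hsc hvic
    have hsub : ({a', b', c'} : Finset (Fin n)) ⊆ e' i := by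
      intro x hx
      rcases Finset.mem_insert.mp hx with rfl | hx
      · exact h1
      rcases Finset.mem_insert.mp hx with rfl | hx
      · exact h2
      · rw [Finset.mem_singleton.mp hx]; exact h3
    have h3c : ({a', b', c'} : Finset (Fin n)).card = 3 := by
      rw [Finset.card_insert_of_notMem (by simp [hdist.1, hdist.2.1]),
        Finset.card_insert_of_notMem (by simp [hdist.2.2]), Finset.card_singleton]
    have hle := Finset.card_le_card hsub
    rw [h3c, he'card i] at hle
    omega
  choose f hf using hex
  -- f is injective
  have hinj : Function.Injective f := by
    intro u v huv
    by_contra hne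
    obtain ⟨Tu, hTusub, hTu⟩ := Finset.exists_subset_card_eq (hdeg u)
    obtain ⟨Tv, hTvsub, hTv⟩ := Finset.exists_subset_card_eq (hdeg v)
    have hmemu : ∀ x ∈ Tu, x ≠ u ∧ ∃ i, u ∈ e i ∧ x ∈ e i := by
      intro x hx
      simpa using (Finset.mem_filter.mp (hTusub hx)).2
    have hmemv : ∀ x ∈ Tv, x ≠ v ∧ ∃ i, v ∈ e i ∧ x ∈ e i := by
      intro x hx
      simpa using (Finset.mem_filter.mp (hTvsub hx)).2
    obtain ⟨a, haT⟩ := Finset.card_pos.mp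
      (by have := Finset.card_erase_le (a := v) (s := Tu)
          have := Finset.pred_card_le_card_erase (a := v) (s := Tu)
          omega : 0 < (Tu.erase v).card)
    have hav : a ≠ v := (Finset.mem_erase.mp haT).1
    obtain ⟨hau, ia, huia, haia⟩ := hmemu a (Finset.mem_erase.mp haT).2
    obtain ⟨b, hbT⟩ := Finset.card_pos.mp
      (by have h1 := Finset.pred_card_le_card_erase (a := a) (s := Tv.erase u)
          have h2 := Finset.pred_card_le_card_erase (a := u) (s := Tv)
          omega : 0 < ((Tv.erase u).erase a).card)
    have hba : b ≠ a := (Finset.mem_erase.mp hbT).1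
    have hbu : b ≠ u := (Finset.mem_erase.mp (Finset.mem_erase.mp hbT).2).1
    obtain ⟨hbv, ib, hvib, hbib⟩ := hmemv b
      (Finset.mem_erase.mp (Finset.mem_erase.mp hbT).2).2
    have hea : e ia = {u, a} := eq_pair_of_subset (hecard ia) (Ne.symm hau) huia haia
    have heb : e ib = {v, b} := eq_pair_of_subset (hecard ib) (Ne.symm hbv) hvib hbib
    have hint0 : (e' ia ∩ e' ib).card = 0 := by
      rw [hcard, hea, heb, pair_inter_pair_empty hne (fun h => hbu h.symm) hav
        (fun h => hba h.symm), Finset.card_empty]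
    have h1 : f u ∈ e' ia := hf u ia huia
    have h2 : f v ∈ e' ib := hf v ib hvib
    rw [huv] at h1
    have : f v ∈ e' ia ∩ e' ib := Finset.mem_inter.mpr ⟨h1, h2⟩
    rw [Finset.card_eq_zero.mp hint0] at this
    exact absurd this (Finset.notMem_empty _)
  -- conclude
  have hbij : Function.Bijective f := (Finite.injective_iff_bijective).mp hinj
  set π0 : Equiv.Perm (Fin n) := Equiv.ofBijective f hbij with hπ0
  refine ⟨π0.symm, fun i j => ?_⟩
  have hkey : ∀ u : Fin n, u ∈ e i ↔ f u ∈ e' i := by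
    intro u
    constructor
    · exact fun h => hf u i h
    · intro hfu
      obtain ⟨x, y, hxy, hexy⟩ := Finset.card_eq_two.mp (hecard i)
      have hx : x ∈ e i := by rw [hexy]; simp
      have hy : y ∈ e i := by rw [hexy]; simp
      have hfx : f x ∈ e' i := hf x i hx
      have hfy : f y ∈ e' i := hf y i hy
      have hfxy : f x ≠ f y := fun h => hxy (hinj h)
      have he'i : e' i = {f x, f y} := eq_pair_of_subset (he'card i) hfxy hfx hfy
      rw [he'i] at hfu
      rcases Finset.mem_insert.mp hfu with h | h
      · rw [hinj h]; exact hx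
      · rw [hinj (Finset.mem_singleton.mp h)]; exact hy
  have hfsymm : f (π0.symm j) = j := π0.apply_symm_apply j
  have hmem_iff : π0.symm j ∈ e i ↔ W' i j = 1 := by
    rw [hkey, hfsymm]
    simp [he']
  show W' i j = incMatrix E i (π0.symm j)
  unfold incMatrix
  simp only [Matrix.of_apply]
  rcases h01 i j with h | h
  · rw [h, if_neg]
    intro hmem
    rw [hmem_iff.mp hmem] at h
    exact absurd h (by norm_num)
  · rw [h, if_pos (hmem_iff.mpr h)]

-- counting lemma
lemma count_bad (n m : ℕ) (hn : 8 ≤ n) :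
    ((Finset.univ : Finset (Fin m → {s : Finset (Fin n) // s.card = 2})).filter
      (fun E => ¬ ∀ v : Fin n,
        4 ≤ (Finset.univ.filter fun u => u ≠ v ∧ ∃ i, v ∈ (E i).1 ∧ u ∈ (E i).1).card)).card
    ≤ n * n.choose 3 *
      (Fintype.card {s : Finset (Fin n) // s.card = 2} - (n - 4)) ^ m := by
  classical
  set P := {s : Finset (Fin n) // s.card = 2}
  set K0 := Fintype.card P with hK0
  set Q : Fin n → Finset (Fin n) → Finset P :=
    fun v T => Finset.univ.filter (fun s : P => v ∈ s.1 → s.1 ⊆ insert v T) with hQ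
  -- the bad set is covered by the biUnion
  have hsub : (Finset.univ : Finset (Fin m → P)).filter
      (fun E => ¬ ∀ v : Fin n,
        4 ≤ (Finset.univ.filter fun u => u ≠ v ∧ ∃ i, v ∈ (E i).1 ∧ u ∈ (E i).1).card) ⊆
      Finset.univ.biUnion (fun v : Fin n =>
        ((Finset.univ : Finset (Fin n)).powersetCard 3).biUnion (fun T =>
          Finset.univ.filter (fun E : Fin m → P => ∀ i, E i ∈ Q v T))) := by
    intro E hE
    obtain ⟨-, hE⟩ := Finset.mem_filter.mp hE
    push_neg at hE
    obtain ⟨v, hv⟩ := hE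
    set Nv := (Finset.univ.filter fun u => u ≠ v ∧ ∃ i, v ∈ (E i).1 ∧ u ∈ (E i).1) with hNv
    obtain ⟨T, hTsup, hT3⟩ := Finset.exists_superset_card_eq (s := Nv) (n := 3)
      (by omega) (by simpa using hn.trans' (by norm_num))
    refine Finset.mem_biUnion.mpr ⟨v, Finset.mem_univ v, Finset.mem_biUnion.mpr
      ⟨T, ?_, Finset.mem_filter.mpr ⟨Finset.mem_univ _, fun i => ?_⟩⟩⟩
    · exact Finset.mem_powersetCard.mpr ⟨Finset.subset_univ T, hT3⟩
    · refine Finset.mem_filter.mpr ⟨Finset.mem_univ _, fun hvi u hu => ?_⟩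
      by_cases huv : u = v
      · subst huv; exact Finset.mem_insert_self _ _
      · refine Finset.mem_insert_of_mem (hTsup ?_)
        rw [hNv]
        exact Finset.mem_filter.mpr ⟨Finset.mem_univ _, huv, i, hvi, hu⟩
  -- cardinality of each piece
  have hpiece : ∀ (v : Fin n) (T : Finset (Fin n)), T.card = 3 →
      (Finset.univ.filter (fun E : Fin m → P => ∀ i, E i ∈ Q v T)).card ≤
        (K0 - (n - 4)) ^ m := by
    intro v T hT3
    have hpi : (Finset.univ.filter (fun E : Fin m → P => ∀ i, E i ∈ Q v T)) =
        Fintype.piFinset (fun _ : Fin m => Q v T) := by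
      ext E
      simp [Fintype.mem_piFinset]
    rw [hpi, Fintype.card_piFinset]
    rw [Finset.prod_const, Finset.card_univ, Fintype.card_fin]
    refine Nat.pow_le_pow_left ?_ m
    -- card of Q v T ≤ K0 - (n-4)
    have hcompl : (Q v T).card +
        (Finset.univ.filter (fun s : P => ¬ (v ∈ s.1 → s.1 ⊆ insert v T))).card = K0 := by
      rw [hQ]
      rw [Finset.card_filter_add_card_filter_not]
      exact (Finset.card_univ)
    -- lower bound on complement
    have hR : n - 4 ≤
        (Finset.univ.filter (fun s : P => ¬ (v ∈ s.1 → s.1 ⊆ insert v T))).card := by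
      have hne : Nonempty P := by
        refine ⟨⟨{(⟨0, by omega⟩ : Fin n), (⟨1, by omega⟩ : Fin n)}, ?_⟩⟩
        rw [Finset.card_insert_of_notMem (by simp), Finset.card_singleton]
      obtain ⟨s0⟩ := hne
      set g : Fin n → P := fun u =>
        if h : u = v then s0 else ⟨{v, u}, by
          rw [Finset.card_insert_of_notMem (by simpa using Ne.symm h),
            Finset.card_singleton]⟩ with hg
      have := Finset.card_le_card_of_injOn (s := Finset.univ \ insert v T)
        (t := Finset.univ.filter (fun s : P => ¬ (v ∈ s.1 → s.1 ⊆ insert v T)))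
        g ?_ ?_
      · refine le_trans ?_ this
        rw [Finset.card_sdiff_of_subset (Finset.subset_univ _), Finset.card_univ, Fintype.card_fin]
        have : (insert v T).card ≤ 4 := by
          refine le_trans (Finset.card_insert_le v T) ?_
          omega
        omega
      · intro u hu
        obtain ⟨-, hu2⟩ := Finset.mem_sdiff.mp hu
        have huv : u ≠ v := fun h => hu2 (h ▸ Finset.mem_insert_self v T)
        refine Finset.mem_filter.mpr ⟨Finset.mem_univ _, ?_⟩
        rw [hg]
        simp only [dif_neg huv]
        push_neg
        refine ⟨Finset.mem_insert_self _ _, fun hsub => hu2 (hsub ?_)⟩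
        exact Finset.mem_insert_of_mem (Finset.mem_singleton_self u)
      · intro u1 hu1 u2 hu2 heq
        obtain ⟨-, hu1'⟩ := Finset.mem_sdiff.mp hu1
        obtain ⟨-, hu2'⟩ := Finset.mem_sdiff.mp hu2
        have h1 : u1 ≠ v := fun h => hu1' (h ▸ Finset.mem_insert_self v T)
        have h2 : u2 ≠ v := fun h => hu2' (h ▸ Finset.mem_insert_self v T)
        rw [hg] at heq
        simp only [dif_neg h1, dif_neg h2] at heq
        have hset : ({v, u1} : Finset (Fin n)) = {v, u2} := congrArg Subtype.val heq
        have : u1 ∈ ({v, u2} : Finset (Fin n)) := by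
          rw [← hset]
          exact Finset.mem_insert_of_mem (Finset.mem_singleton_self u1)
        rcases Finset.mem_insert.mp this with h | h
        · exact absurd h h1
        · exact Finset.mem_singleton.mp h
    omega
  refine le_trans (Finset.card_le_card hsub) ?_
  refine le_trans (Finset.card_biUnion_le) ?_
  refine le_trans (Finset.sum_le_sum (fun v _ => Finset.card_biUnion_le)) ?_
  have : ∀ v : Fin n, ∑ T ∈ (Finset.univ : Finset (Fin n)).powersetCard 3,
      (Finset.univ.filter (fun E : Fin m → P => ∀ i, E i ∈ Q v T)).card ≤
      n.choose 3 * (K0 - (n - 4)) ^ m := by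
    intro v
    refine le_trans (Finset.sum_le_sum (fun T hT =>
      hpiece v T (Finset.mem_powersetCard.mp hT).2)) ?_
    rw [Finset.sum_const, Finset.card_powersetCard, Finset.card_univ, Fintype.card_fin,
      smul_eq_mul]
  refine le_trans (Finset.sum_le_sum (fun v _ => this v)) ?_
  rw [Finset.sum_const, Finset.card_univ, Fintype.card_fin, smul_eq_mul, mul_assoc]

lemma real_bound (n m K0 C3 B : ℕ) (δ : ℝ) (hδ0 : 0 < δ) (hn8 : 8 ≤ n)
    (hδn : 1/(n:ℝ) ≤ δ) (hm : 7 * (n:ℝ) * Real.log n ≤ (m:ℝ))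
    (hK0le : K0 ≤ n * (n - 4)) (hK0ge : n - 4 ≤ K0) (hC3 : C3 ≤ n ^ 3)
    (hB : B ≤ n * C3 * (K0 - (n - 4)) ^ m) : (B:ℝ) ≤ δ * (K0:ℝ) ^ m := by
  have h4n : 4 ≤ n := by omega
  have hnpos : (0:ℝ) < n := by exact_mod_cast (by omega : 0 < n)
  have hc2 : (((K0 - (n - 4) : ℕ)):ℝ) = (K0:ℝ) - ((n:ℝ) - 4) := by
    rw [Nat.cast_sub hK0ge, Nat.cast_sub h4n]
    norm_num
  have hc3 : (K0:ℝ) ≤ (n:ℝ) * ((n:ℝ) - 4) := by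
    have h : ((n * (n-4) : ℕ) : ℝ) = (n:ℝ) * ((n:ℝ) - 4) := by
      rw [Nat.cast_mul, Nat.cast_sub h4n]; norm_num
    rw [← h]
    exact_mod_cast hK0le
  have hbase_nonneg : (0:ℝ) ≤ (K0:ℝ) - ((n:ℝ) - 4) := by
    rw [← hc2]; positivity
  have hstep : (K0:ℝ) - ((n:ℝ) - 4) ≤ (1 - 1/(n:ℝ)) * K0 := by
    have hdiv : (K0:ℝ) / n ≤ (n:ℝ) - 4 := by
      rw [div_le_iff₀ hnpos]
      nlinarith [hc3]
    have heq : (1 - 1/(n:ℝ)) * K0 = (K0:ℝ) - (K0:ℝ)/n := by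
      rw [sub_mul, one_mul, one_div, inv_mul_eq_div]
    rw [heq]
    linarith
  have hpow1 : ((K0:ℝ) - ((n:ℝ) - 4)) ^ m ≤ ((1 - 1/(n:ℝ)) * K0) ^ m :=
    pow_le_pow_left₀ hbase_nonneg hstep m
  have hfrac_nonneg : (0:ℝ) ≤ 1 - 1/(n:ℝ) := by
    have h : 1/(n:ℝ) ≤ 1 := by
      rw [div_le_one hnpos]
      exact_mod_cast (by omega : 1 ≤ n)
    linarith
  have hexp1 : (1 - 1/(n:ℝ)) ≤ Real.exp (-(1/(n:ℝ))) := by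
    have := Real.add_one_le_exp (-(1/(n:ℝ)))
    linarith
  have hpow2 : (1 - 1/(n:ℝ)) ^ m ≤ Real.exp (-(1/(n:ℝ))) ^ m :=
    pow_le_pow_left₀ hfrac_nonneg hexp1 m
  have hexp2 : Real.exp (-(1/(n:ℝ))) ^ m = Real.exp (-((m:ℝ)/(n:ℝ))) := by
    rw [← Real.exp_nat_mul]
    congr 1
    ring
  have hexp3 : Real.exp (-((m:ℝ)/(n:ℝ))) ≤ Real.exp (-(7 * Real.log n)) := by
    rw [Real.exp_le_exp]
    have h : 7 * Real.log n ≤ (m:ℝ)/(n:ℝ) := by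
      rw [le_div_iff₀ hnpos]
      nlinarith [hm]
    linarith
  have hexp4 : Real.exp (-(7 * Real.log n)) = ((n:ℝ) ^ 7)⁻¹ := by
    rw [Real.exp_neg]
    congr 1
    rw [show (7 : ℝ) * Real.log n = ((7:ℕ):ℝ) * Real.log n by norm_num,
      Real.exp_nat_mul, Real.exp_log hnpos]
  have hK0pow_nonneg : (0:ℝ) ≤ (K0:ℝ) ^ m := by positivity
  have hch : (n:ℝ) * (C3 : ℝ) ≤ (n:ℝ)^4 := by
    have h1 : (C3 : ℝ) ≤ (n:ℝ)^3 := by exact_mod_cast hC3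
    have h2 : (0:ℝ) ≤ (n:ℝ)^3 := by positivity
    calc (n:ℝ) * C3 ≤ (n:ℝ) * (n:ℝ)^3 := by
          exact mul_le_mul_of_nonneg_left h1 (le_of_lt hnpos)
      _ = (n:ℝ)^4 := by ring
  have hBc : (B:ℝ) ≤ (n:ℝ) * (C3 : ℝ) * ((K0:ℝ) - ((n:ℝ) - 4)) ^ m := by
    have h : (B:ℝ) ≤ ((n * C3 * (K0 - (n - 4)) ^ m : ℕ) : ℝ) := by exact_mod_cast hB
    rw [Nat.cast_mul, Nat.cast_mul, Nat.cast_pow, hc2] at h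
    exact h
  have hchain : (B : ℝ) ≤ (n:ℝ)^4 * ((n:ℝ)^7)⁻¹ * (K0:ℝ)^m := by
    calc (B:ℝ) ≤ (n:ℝ) * (C3 : ℝ) * ((K0:ℝ) - ((n:ℝ) - 4)) ^ m := hBc
      _ ≤ (n:ℝ)^4 * ((K0:ℝ) - ((n:ℝ) - 4)) ^ m := by
          refine mul_le_mul_of_nonneg_right hch ?_
          positivity
      _ ≤ (n:ℝ)^4 * ((1 - 1/(n:ℝ)) * K0) ^ m := by
          refine mul_le_mul_of_nonneg_left hpow1 (by positivity)
      _ = (n:ℝ)^4 * ((1 - 1/(n:ℝ)) ^ m * (K0:ℝ)^m) := by rw [mul_pow]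
      _ ≤ (n:ℝ)^4 * (Real.exp (-(1/(n:ℝ))) ^ m * (K0:ℝ)^m) := by
          refine mul_le_mul_of_nonneg_left (mul_le_mul_of_nonneg_right hpow2 hK0pow_nonneg)
            (by positivity)
      _ = (n:ℝ)^4 * (Real.exp (-((m:ℝ)/(n:ℝ))) * (K0:ℝ)^m) := by rw [hexp2]
      _ ≤ (n:ℝ)^4 * (Real.exp (-(7 * Real.log n)) * (K0:ℝ)^m) := by
          refine mul_le_mul_of_nonneg_left (mul_le_mul_of_nonneg_right hexp3 hK0pow_nonneg)
            (by positivity)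
      _ = (n:ℝ)^4 * ((n:ℝ)^7)⁻¹ * (K0:ℝ)^m := by rw [hexp4]; ring
  refine le_trans hchain ?_
  have hfinal : (n:ℝ)^4 * ((n:ℝ)^7)⁻¹ ≤ δ := by
    have he : (n:ℝ)^4 * ((n:ℝ)^7)⁻¹ = ((n:ℝ)^3)⁻¹ := by
      rw [show (n:ℝ)^7 = (n:ℝ)^4 * (n:ℝ)^3 by ring, mul_inv,
        ← mul_assoc, mul_inv_cancel₀ (by positivity), one_mul]
    rw [he]
    refine le_trans ?_ hδn
    rw [one_div]
    refine inv_anti₀ hnpos ?_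
    nlinarith
  exact mul_le_mul_of_nonneg_right hfinal hK0pow_nonneg

lemma final_arith (K B G F : ℕ) (δ : ℝ) (hGB : G + B = K) (hGF : G ≤ F)
    (hB : (B:ℝ) ≤ δ * (K:ℝ)) : (1 - δ) * (K:ℝ) ≤ (F:ℝ) := by
  have h1 : (G:ℝ) + (B:ℝ) = (K:ℝ) := by exact_mod_cast hGB
  have h2 : (G:ℝ) ≤ (F:ℝ) := by exact_mod_cast hGF
  nlinarith

lemma choose_two_facts (n : ℕ) (hn : 8 ≤ n) :
    n.choose 2 ≤ n * (n - 4) ∧ n - 4 ≤ n.choose 2 := by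
  constructor
  · rw [Nat.choose_two_right]
    refine Nat.div_le_of_le_mul ?_
    have h1 : n - 1 ≤ 2 * (n - 4) := by omega
    calc n * (n-1) ≤ n * (2 * (n-4)) := Nat.mul_le_mul_left n h1
      _ = 2 * (n * (n-4)) := by ring
  · rw [Nat.choose_two_right]
    have h2 : 2 * (n - 1) ≤ n * (n - 1) := Nat.mul_le_mul_right _ (by omega)
    have h3 := Nat.div_le_div_right (c := 2) h2
    rw [Nat.mul_div_cancel_left _ (by norm_num : 0 < 2)] at h3
    omega

lemma card_pairs (n : ℕ) :
    Fintype.card {s : Finset (Fin n) // s.card = 2} = n.choose 2 := by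
  rw [Fintype.card_subtype]
  have h : (Finset.univ : Finset (Finset (Fin n))).filter (fun s => s.card = 2) =
      Finset.powersetCard 2 (Finset.univ : Finset (Fin n)) := by
    rw [Finset.powersetCard_eq_filter, Finset.powerset_univ]
  rw [h, Finset.card_powersetCard, Finset.card_univ, Fintype.card_fin]

/-- For `W ∈ {0,1}^{m×n}` with rows the indicators of i.i.d. uniformly random 2-element subsets
of `{1,…,n}` (here, a uniformly random tuple `E` of such subsets), once `m ≥ C·n·log n`, with
probability at least `1 − δ` every row-2-sparse `{0,1}` matrix `W'` with `W'(W')ᵀ = WWᵀ` is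
obtained from `W` by permuting columns. Probability is expressed by counting tuples `E`. -/
theorem gram_determines_incidence_whp :
    ∃ C : ℝ, 0 < C ∧ ∀ δ : ℝ, δ ∈ Set.Ioo (0 : ℝ) 1 → ∃ N : ℕ, ∀ n : ℕ, N ≤ n → ∀ m : ℕ,
      C * n * Real.log n ≤ m →
      (1 - δ) * (Fintype.card (Fin m → {s : Finset (Fin n) // s.card = 2}) : ℝ) ≤
        (((Finset.univ :
            Finset (Fin m → {s : Finset (Fin n) // s.card = 2})).filter
          (fun E =>
            ∀ W' : Matrix (Fin m) (Fin n) ℤ,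
              (∀ i j, W' i j = 0 ∨ W' i j = 1) →
              (∀ i, (Finset.univ.filter (fun j => W' i j = 1)).card = 2) →
              W' * W'ᵀ = incMatrix E * (incMatrix E)ᵀ →
              ∃ π : Equiv.Perm (Fin n), ∀ i j, W' i j = incMatrix E i (π j))).card : ℝ) := by
  refine ⟨7, by norm_num, fun δ hδ => ⟨max 8 ⌈δ⁻¹⌉₊, fun n hn m hm => ?_⟩⟩
  obtain ⟨hδ0, hδ1⟩ := hδ
  have hn8 : 8 ≤ n := le_trans (le_max_left _ _) hn
  have hnpos : (0:ℝ) < n := by exact_mod_cast (by omega : 0 < n)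
  have hδn : 1 / (n:ℝ) ≤ δ := by
    have h1 : δ⁻¹ ≤ (n:ℝ) := by
      refine le_trans (Nat.le_ceil _) ?_
      exact_mod_cast le_trans (le_max_right _ _) hn
    have h2 := inv_anti₀ (inv_pos.mpr hδ0) h1
    rwa [inv_inv, one_div] at *
  -- good set ⊆ target set
  have hsub : (Finset.univ : Finset (Fin m → {s : Finset (Fin n) // s.card = 2})).filter
      (fun E => ∀ v : Fin n,
        4 ≤ (Finset.univ.filter fun u => u ≠ v ∧ ∃ i, v ∈ (E i).1 ∧ u ∈ (E i).1).card) ⊆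
      (Finset.univ : Finset (Fin m → {s : Finset (Fin n) // s.card = 2})).filter
      (fun E =>
        ∀ W' : Matrix (Fin m) (Fin n) ℤ,
          (∀ i j, W' i j = 0 ∨ W' i j = 1) →
          (∀ i, (Finset.univ.filter (fun j => W' i j = 1)).card = 2) →
          W' * W'ᵀ = incMatrix E * (incMatrix E)ᵀ →
          ∃ π : Equiv.Perm (Fin n), ∀ i j, W' i j = incMatrix E i (π j)) := by
    intro E hE
    obtain ⟨-, hE⟩ := Finset.mem_filter.mp hE
    exact Finset.mem_filter.mpr ⟨Finset.mem_univ _,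
      fun W' h01 hrow hgram => det_lemma E hE W' h01 hrow hgram⟩
  have hGoodBad : ((Finset.univ : Finset (Fin m → {s : Finset (Fin n) // s.card = 2})).filter
      (fun E => ∀ v : Fin n,
        4 ≤ (Finset.univ.filter fun u => u ≠ v ∧ ∃ i, v ∈ (E i).1 ∧ u ∈ (E i).1).card)).card +
      ((Finset.univ : Finset (Fin m → {s : Finset (Fin n) // s.card = 2})).filter
        (fun E => ¬ ∀ v : Fin n,
          4 ≤ (Finset.univ.filter fun u => u ≠ v ∧ ∃ i, v ∈ (E i).1 ∧ u ∈ (E i).1).card)).card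
      = Fintype.card (Fin m → {s : Finset (Fin n) // s.card = 2}) := by
    rw [Finset.card_filter_add_card_filter_not, Finset.card_univ]
  have htotal : Fintype.card (Fin m → {s : Finset (Fin n) // s.card = 2})
      = (Fintype.card {s : Finset (Fin n) // s.card = 2}) ^ m := by
    rw [Fintype.card_fun, Fintype.card_fin]
  obtain ⟨hle, hge⟩ := choose_two_facts n hn8
  rw [← card_pairs n] at hle hge
  have hBreal : ((((Finset.univ : Finset (Fin m → {s : Finset (Fin n) // s.card = 2})).filter
        (fun E => ¬ ∀ v : Fin n,
          4 ≤ (Finset.univ.filter fun u => u ≠ v ∧ ∃ i, v ∈ (E i).1 ∧ u ∈ (E i).1).card)).card : ℝ))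
      ≤ δ * ((Fintype.card {s : Finset (Fin n) // s.card = 2} : ℝ)) ^ m := by
    refine real_bound n m _ (n.choose 3) _ δ hδ0 hn8 hδn ?_ hle hge (Nat.choose_le_pow n 3)
      (count_bad n m hn8)
    calc 7 * (n:ℝ) * Real.log n = 7 * n * Real.log n := by norm_num
      _ ≤ m := hm
  rw [htotal] at hGoodBad ⊢
  have := final_arith _ _ _ _ δ hGoodBad (Finset.card_le_card hsub)
    (by exact_mod_cast hBreal)
  exact_mod_cast this
end

section
/- Let G be a finite connected simple graph on vertex set {1,…,n} with n ≥ 5 vertices and distinct edges e_1,…,e_m, and let W ∈ {0,1}^{m×n} be its incidence matrix. If W' ∈ {0,1}^{m×n} is any matrix each of whose rows has exactly two entries equal to 1 and which satisfies W'(W')ᵀ = WWᵀ, then there exists a permutation π of {1,…,n} such that W'_{i,j} = W_{i,π(j)} for all i ∈ {1,…,m} and j ∈ {1,…,n}. -/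
/-!
Read the rows of `W` as the edges `A i` of `G` and the rows of `W'` as 2-sets `B i`; equal Gram
matrices say exactly that `#(B i ∩ B j) = #(A i ∩ A j)` for all `i, j`. It suffices to find, for
every vertex `v`, a point `y` lying on exactly those `B j` with `v ∈ A j`: these points are
pairwise distinct and form the permutation.

If `v` lies on two edges, `y` is the common point of their images. The images of all edges at `v`
pass through `y`, for otherwise three of them would form a triangle, and an edge leaving the claw
at `v` (which exists as there are at least five vertices) tells claw and triangle apart by parity.
No other image passes through `y`, for otherwise `v` would lie on a triangle whose three images
share `y`, and an edge leaving that triangle would meet its opposite side. A vertex on a single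
edge takes the other point of that edge's image.
-/

open Matrix Finset

namespace Finset

variable {α : Type*} [DecidableEq α]

theorem card_inter_le_one_of_card_eq_two {s t : Finset α} (hs : #s = 2) (ht : #t = 2)
    (hst : s ≠ t) : #(s ∩ t) ≤ 1 := by
  by_contra! h
  have hs' : s ∩ t = s := eq_of_subset_of_card_le inter_subset_left (by omega)
  have ht' : s ∩ t = t := eq_of_subset_of_card_le inter_subset_right (by omega)
  exact hst (hs'.symm.trans ht')

theorem exists_ne_eq_pair_of_card_eq_two {s : Finset α} (hs : #s = 2) {a : α} (ha : a ∈ s) :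
    ∃ b, b ≠ a ∧ s = {a, b} := by
  obtain ⟨x, y, hxy, rfl⟩ := card_eq_two.mp hs
  rcases mem_insert.mp ha with rfl | h
  · exact ⟨y, hxy.symm, rfl⟩
  · rw [mem_singleton.mp h]; exact ⟨x, hxy, pair_comm _ _⟩

theorem eq_pair_of_card_eq_two {s : Finset α} (hs : #s = 2) {a b : α} (ha : a ∈ s) (hb : b ∈ s)
    (hab : a ≠ b) : s = {a, b} :=
  (eq_of_subset_of_card_le (by simp [insert_subset_iff, ha, hb]) (by rw [hs, card_pair hab])).symm

theorem mem_of_inter_nonempty_of_notMem {a b : α} {s : Finset α} (h : ({a, b} ∩ s).Nonempty)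
    (ha : a ∉ s) : b ∈ s := by
  obtain ⟨z, hz⟩ := h
  rw [mem_inter, mem_insert, mem_singleton] at hz
  rcases hz with ⟨rfl | rfl, hz⟩
  · exact absurd hz ha
  · exact hz

-- Each vertex of a triangle lies on two of its sides.
theorem even_card_inter_pair_add {a b c : α} (hab : a ≠ b) (hac : a ≠ c) (hbc : b ≠ c)
    (D : Finset α) : Even (#(D ∩ {a, b}) + #(D ∩ {b, c}) + #(D ∩ {a, c})) := by
  by_cases ha : a ∈ D <;> by_cases hb : b ∈ D <;> by_cases hc : c ∈ D <;>
    simp [inter_insert_of_mem, inter_insert_of_notMem, *] <;> decide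

end Finset

theorem Matrix.mul_transpose_apply_eq_card_inter {R m n : Type*} [Semiring R] [Nontrivial R]
    [DecidableEq R] [Fintype n] [DecidableEq n] (M : Matrix m n R)
    (hM : ∀ i v, M i v = 0 ∨ M i v = 1) (i j : m) :
    (M * Mᵀ) i j = #(univ.filter (M i · = 1) ∩ univ.filter (M j · = 1)) := by
  rw [Matrix.mul_apply, ← filter_and, card_filter, Nat.cast_sum]
  refine sum_congr rfl fun v _ => ?_
  rcases hM i v with h | h <;> rcases hM j v with h' | h' <;> simp [h, h']

namespace Whitney

variable {V W ι : Type*} [DecidableEq V] [DecidableEq W] {A : ι → Finset V} {B : ι → Finset W}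

def ExitsSmallSets (A : ι → Finset V) : Prop :=
  ∀ T : Finset V, T.Nonempty → #T ≤ 4 → ∃ i, ∃ t ∈ T, ∃ y ∉ T, A i = {t, y}

theorem _root_.SimpleGraph.Connected.exitsSmallSets [Fintype V] {G : SimpleGraph V}
    (hG : G.Connected) (hV : 5 ≤ Fintype.card V) (hGA : ∀ p q, G.Adj p q → ∃ i, A i = {p, q}) :
    ExitsSmallSets A := by
  intro T ⟨v, hv⟩ hT
  obtain ⟨w, -, hw⟩ := exists_mem_notMem_of_card_lt_card (s := T) (t := univ)
    (by rw [card_univ]; omega)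
  obtain ⟨d, -, hd₁, hd₂⟩ := (hG.preconnected v w).some.exists_boundary_dart (T : Set V) hv hw
  obtain ⟨i, hi⟩ := hGA _ _ d.adj
  exact ⟨i, d.fst, hd₁, d.snd, hd₂, hi⟩

theorem ExitsSmallSets.exists_mem (hexit : ExitsSmallSets A) (v : V) : ∃ i, v ∈ A i := by
  obtain ⟨i, t, ht, y, -, hi⟩ := hexit {v} (singleton_nonempty v) (by simp)
  exact ⟨i, by simp [hi, mem_singleton.mp ht]⟩

theorem ExitsSmallSets.eq_of_forall_mem_iff (hexit : ExitsSmallSets A) {v w : V}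
    (h : ∀ j, v ∈ A j ↔ w ∈ A j) : v = w := by
  by_contra hvw
  obtain ⟨l, t, ht, y, hy, hl⟩ :=
    hexit {v, w} (insert_nonempty _ _) (card_le_two.trans (by norm_num))
  have hyv : y ≠ v := fun h => hy (by simp [h])
  have hyw : y ≠ w := fun h => hy (by simp [h])
  rcases mem_insert.mp ht with rfl | ht
  · have := (h l).mp (by simp [hl])
    simp [hl, Ne.symm hvw, Ne.symm hyw] at this
  · rw [mem_singleton.mp ht] at hl
    have := (h l).mpr (by simp [hl])
    simp [hl, hvw, Ne.symm hyv] at this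

theorem card_inter_eq_one_of_mem (hA : ∀ i, #(A i) = 2) (hAinj : Function.Injective A)
    {v : V} {i j : ι} (hij : i ≠ j) (hvi : v ∈ A i) (hvj : v ∈ A j) : #(A i ∩ A j) = 1 :=
  le_antisymm (card_inter_le_one_of_card_eq_two (hA i) (hA j) (hAinj.ne hij))
    (card_pos.mpr ⟨v, mem_inter.mpr ⟨hvi, hvj⟩⟩)

theorem card_eq_two_of_card_inter_eq (hA : ∀ i, #(A i) = 2)
    (hAB : ∀ i j, #(B i ∩ B j) = #(A i ∩ A j)) (i : ι) : #(B i) = 2 := by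
  rw [← inter_self (B i), hAB, inter_self, hA]

theorem inter_nonempty_of_mem (hA : ∀ i, #(A i) = 2) (hAinj : Function.Injective A)
    (hAB : ∀ i j, #(B i ∩ B j) = #(A i ∩ A j)) {v : V} {i j : ι} (hij : i ≠ j) (hvi : v ∈ A i)
    (hvj : v ∈ A j) : (B i ∩ B j).Nonempty := by
  rw [← card_pos, hAB, card_inter_eq_one_of_mem hA hAinj hij hvi hvj]
  exact one_pos

theorem inter_nonempty_of_mem_inter (hAB : ∀ i j, #(B i ∩ B j) = #(A i ∩ A j)) {i j : ι}
    {x : W} (hxi : x ∈ B i) (hxj : x ∈ B j) : (A i ∩ A j).Nonempty := by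
  rw [← card_pos, ← hAB]
  exact card_pos.mpr ⟨x, mem_inter.mpr ⟨hxi, hxj⟩⟩

theorem ExitsSmallSets.exists_not_even_of_claw (hA : ∀ i, #(A i) = 2)
    (hAinj : Function.Injective A) (hexit : ExitsSmallSets A) {v : V} {i₁ i₂ i₃ : ι}
    (h₁₂ : i₁ ≠ i₂) (h₁₃ : i₁ ≠ i₃) (h₂₃ : i₂ ≠ i₃) (hv₁ : v ∈ A i₁) (hv₂ : v ∈ A i₂)
    (hv₃ : v ∈ A i₃) :
    ∃ k, ¬ Even (#(A k ∩ A i₁) + #(A k ∩ A i₂) + #(A k ∩ A i₃)) := by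
  obtain ⟨u₁, hu₁, ha₁⟩ := exists_ne_eq_pair_of_card_eq_two (hA i₁) hv₁
  obtain ⟨u₂, hu₂, ha₂⟩ := exists_ne_eq_pair_of_card_eq_two (hA i₂) hv₂
  obtain ⟨u₃, hu₃, ha₃⟩ := exists_ne_eq_pair_of_card_eq_two (hA i₃) hv₃
  have hu₁₂ : u₁ ≠ u₂ := fun h => h₁₂ (hAinj (by rw [ha₁, ha₂, h]))
  have hu₁₃ : u₁ ≠ u₃ := fun h => h₁₃ (hAinj (by rw [ha₁, ha₃, h]))
  have hu₂₃ : u₂ ≠ u₃ := fun h => h₂₃ (hAinj (by rw [ha₂, ha₃, h]))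
  by_cases hdeg : ∀ k, v ∈ A k → k = i₁ ∨ k = i₂ ∨ k = i₃
  · obtain ⟨k, t, ht, y, hy, hk⟩ := hexit {v, u₁, u₂, u₃} (insert_nonempty _ _) card_le_four
    refine ⟨k, ?_⟩
    simp only [mem_insert, mem_singleton, not_or] at ht hy
    obtain ⟨hyv, hy₁, hy₂, hy₃⟩ := hy
    rcases ht with rfl | rfl | rfl | rfl
    · have hyk : y ∈ A k := by simp [hk]
      rcases hdeg k (by simp [hk]) with rfl | rfl | rfl <;>
        simp [ha₁, ha₂, ha₃, hyv, hy₁, hy₂, hy₃] at hyk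
    all_goals
      rw [hk, ha₁, ha₂, ha₃]
      simp [*, Ne.symm hu₁₂, Ne.symm hu₁₃, Ne.symm hu₂₃]
  · push Not at hdeg
    obtain ⟨k, hvk, hk₁, hk₂, hk₃⟩ := hdeg
    refine ⟨k, ?_⟩
    rw [card_inter_eq_one_of_mem hA hAinj hk₁ hvk hv₁,
      card_inter_eq_one_of_mem hA hAinj hk₂ hvk hv₂, card_inter_eq_one_of_mem hA hAinj hk₃ hvk hv₃]
    decide

theorem mem_of_mem_of_mem_star (hA : ∀ i, #(A i) = 2) (hAinj : Function.Injective A)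
    (hAB : ∀ i j, #(B i ∩ B j) = #(A i ∩ A j)) (hexit : ExitsSmallSets A) {v : V}
    {i₁ i₂ j : ι} (h₁₂ : i₁ ≠ i₂) (hv₁ : v ∈ A i₁) (hv₂ : v ∈ A i₂) (hvj : v ∈ A j) {x : W}
    (hx₁ : x ∈ B i₁) (hx₂ : x ∈ B i₂) : x ∈ B j := by
  by_contra hxj
  have hB := card_eq_two_of_card_inter_eq hA hAB
  have h₁j : i₁ ≠ j := by rintro rfl; exact hxj hx₁
  have h₂j : i₂ ≠ j := by rintro rfl; exact hxj hx₂
  obtain ⟨a, hax, ha⟩ := exists_ne_eq_pair_of_card_eq_two (hB i₁) hx₁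
  obtain ⟨b, hbx, hb⟩ := exists_ne_eq_pair_of_card_eq_two (hB i₂) hx₂
  have hab : a ≠ b := by
    rintro rfl
    have h := (hAB i₁ i₂).trans (card_inter_eq_one_of_mem hA hAinj h₁₂ hv₁ hv₂)
    rw [ha, hb, inter_self, card_pair hax.symm] at h
    omega
  have haj : a ∈ B j :=
    mem_of_inter_nonempty_of_notMem (ha ▸ inter_nonempty_of_mem hA hAinj hAB h₁j hv₁ hvj) hxj
  have hbj : b ∈ B j :=
    mem_of_inter_nonempty_of_notMem (hb ▸ inter_nonempty_of_mem hA hAinj hAB h₂j hv₂ hvj) hxj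
  have hBj : B j = {a, b} := eq_pair_of_card_eq_two (hB j) haj hbj hab
  obtain ⟨k, hk⟩ := hexit.exists_not_even_of_claw hA hAinj h₁₂ h₁j h₂j hv₁ hv₂ hvj
  have heven := even_card_inter_pair_add hax.symm hbx.symm hab (B k)
  rw [← ha, ← hBj, ← hb, hAB, hAB, hAB, add_right_comm] at heven
  exact hk heven

theorem notMem_of_triangle (hA : ∀ i, #(A i) = 2) (hAinj : Function.Injective A)
    (hAB : ∀ i j, #(B i ∩ B j) = #(A i ∩ A j)) (hexit : ExitsSmallSets A) {p q r : V}
    (hpq : p ≠ q) (hpr : p ≠ r) (hqr : q ≠ r) {i j k : ι} (hi : A i = {p, q})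
    (hj : A j = {q, r}) (hk : A k = {p, r}) {x : W} (hxi : x ∈ B i) (hxj : x ∈ B j) :
    x ∉ B k := by
  intro hxk
  obtain ⟨l, t, ht, y, hy, hl⟩ :=
    hexit {p, q, r} (insert_nonempty _ _) (card_le_three.trans (by norm_num))
  simp only [mem_insert, mem_singleton, not_or] at ht hy
  obtain ⟨hyp, hyq, hyr⟩ := hy
  have hij : i ≠ j := fun h => by
    have hp : p ∈ A j := h ▸ (by simp [hi])
    simp [hj, hpq, hpr] at hp
  have hik : i ≠ k := fun h => by
    have hq : q ∈ A k := h ▸ (by simp [hi])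
    simp [hk, hpq.symm, hqr] at hq
  have hjk : j ≠ k := fun h => by
    have hq : q ∈ A k := h ▸ (by simp [hj])
    simp [hk, hpq.symm, hqr] at hq
  have htl : t ∈ A l := by simp [hl]
  have hmeet : ∀ {s₁ s₂ s₃}, s₁ ≠ s₂ → t ∈ A s₁ → t ∈ A s₂ → x ∈ B s₁ → x ∈ B s₂ → x ∈ B s₃ →
      (A l ∩ A s₃).Nonempty := fun h₁₂ ht₁ ht₂ hx₁ hx₂ hx₃ =>
    inter_nonempty_of_mem_inter hAB
      (mem_of_mem_of_mem_star hA hAinj hAB hexit h₁₂ ht₁ ht₂ htl hx₁ hx₂) hx₃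
  rcases ht with rfl | rfl | rfl
  · simpa [hl, hj, hpq, hpr, hyq, hyr] using
      hmeet hik (by simp [hi]) (by simp [hk]) hxi hxk hxj
  · simpa [hl, hk, hpq.symm, hqr, hyp, hyr] using
      hmeet hij (by simp [hi]) (by simp [hj]) hxi hxj hxk
  · simpa [hl, hi, hpr.symm, hqr.symm, hyp, hyq] using
      hmeet hjk (by simp [hj]) (by simp [hk]) hxj hxk hxi

theorem mem_iff_mem_of_mem_inter (hA : ∀ i, #(A i) = 2) (hAinj : Function.Injective A)
    (hAB : ∀ i j, #(B i ∩ B j) = #(A i ∩ A j)) (hexit : ExitsSmallSets A) {v : V}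
    {i₁ i₂ : ι} (h₁₂ : i₁ ≠ i₂) (hv₁ : v ∈ A i₁) (hv₂ : v ∈ A i₂) {x : W} (hx₁ : x ∈ B i₁)
    (hx₂ : x ∈ B i₂) (j : ι) : x ∈ B j ↔ v ∈ A j := by
  refine ⟨fun hxj => ?_,
    fun hvj => mem_of_mem_of_mem_star hA hAinj hAB hexit h₁₂ hv₁ hv₂ hvj hx₁ hx₂⟩
  by_contra hvj
  obtain ⟨a, hav, ha⟩ := exists_ne_eq_pair_of_card_eq_two (hA i₁) hv₁
  obtain ⟨b, hbv, hb⟩ := exists_ne_eq_pair_of_card_eq_two (hA i₂) hv₂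
  have hab : a ≠ b := fun h => h₁₂ (hAinj (by rw [ha, hb, h]))
  have haj : a ∈ A j :=
    mem_of_inter_nonempty_of_notMem (ha ▸ inter_nonempty_of_mem_inter hAB hx₁ hxj) hvj
  have hbj : b ∈ A j :=
    mem_of_inter_nonempty_of_notMem (hb ▸ inter_nonempty_of_mem_inter hAB hx₂ hxj) hvj
  have hj : A j = {a, b} := eq_pair_of_card_eq_two (hA j) haj hbj hab
  exact notMem_of_triangle hA hAinj hAB hexit hav.symm hbv.symm hab ha hj hb hx₁ hxj hx₂

theorem exists_forall_mem_iff_mem_of_unique (hA : ∀ i, #(A i) = 2)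
    (hAinj : Function.Injective A) (hAB : ∀ i j, #(B i ∩ B j) = #(A i ∩ A j))
    (hexit : ExitsSmallSets A) {v : V} {i : ι} (hvi : v ∈ A i) (huniq : ∀ j, v ∈ A j → j = i) :
    ∃ y, ∀ j, y ∈ B j ↔ v ∈ A j := by
  obtain ⟨u, huv, hi⟩ := exists_ne_eq_pair_of_card_eq_two (hA i) hvi
  have hui : u ∈ A i := by simp [hi]
  obtain ⟨l, hli, hul⟩ : ∃ l, l ≠ i ∧ u ∈ A l := by
    obtain ⟨l, t, ht, y, hy, hl⟩ :=
      hexit {v, u} (insert_nonempty _ _) (card_le_two.trans (by norm_num))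
    have hyl : y ∈ A l := by simp [hl]
    have hli : l ≠ i := by rintro rfl; exact hy (hi ▸ hyl)
    rcases mem_insert.mp ht with rfl | ht
    · exact absurd (huniq l (by simp [hl])) hli
    · exact ⟨l, hli, by simp [hl, mem_singleton.mp ht]⟩
  obtain ⟨x, hx⟩ := inter_nonempty_of_mem hA hAinj hAB hli.symm hui hul
  have hxu := mem_iff_mem_of_mem_inter hA hAinj hAB hexit hli.symm hui hul
    (mem_inter.mp hx).1 (mem_inter.mp hx).2
  obtain ⟨y, hyx, hBi⟩ :=
    exists_ne_eq_pair_of_card_eq_two (card_eq_two_of_card_inter_eq hA hAB i) (mem_inter.mp hx).1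
  refine ⟨y, fun j => ⟨fun hyj => ?_, fun hvj => huniq j hvj ▸ by simp [hBi]⟩⟩
  by_contra hvj
  have hij : i ≠ j := by rintro rfl; exact hvj hvi
  have huj : u ∈ A j :=
    mem_of_inter_nonempty_of_notMem (hi ▸ inter_nonempty_of_mem_inter hAB (by simp [hBi]) hyj) hvj
  have h2 : 2 ≤ #(B i ∩ B j) := by
    rw [← card_pair hyx.symm]
    exact card_le_card (by simp [hBi, (hxu j).mpr huj, hyj])
  have h1 := card_inter_le_one_of_card_eq_two (hA i) (hA j) (hAinj.ne hij)
  rw [hAB] at h2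
  omega

theorem exists_forall_mem_iff_mem (hA : ∀ i, #(A i) = 2) (hAinj : Function.Injective A)
    (hAB : ∀ i j, #(B i ∩ B j) = #(A i ∩ A j)) (hexit : ExitsSmallSets A) (v : V) :
    ∃ y, ∀ j, y ∈ B j ↔ v ∈ A j := by
  obtain ⟨i, hvi⟩ := hexit.exists_mem v
  by_cases hdeg : ∀ j, v ∈ A j → j = i
  · exact exists_forall_mem_iff_mem_of_unique hA hAinj hAB hexit hvi hdeg
  push Not at hdeg
  obtain ⟨j, hvj, hji⟩ := hdeg
  obtain ⟨x, hx⟩ := inter_nonempty_of_mem hA hAinj hAB hji.symm hvi hvj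
  exact ⟨x, mem_iff_mem_of_mem_inter hA hAinj hAB hexit hji.symm hvi hvj
    (mem_inter.mp hx).1 (mem_inter.mp hx).2⟩

theorem exists_embedding_map_eq (hA : ∀ i, #(A i) = 2) (hAinj : Function.Injective A)
    (hAB : ∀ i j, #(B i ∩ B j) = #(A i ∩ A j)) (hexit : ExitsSmallSets A) :
    ∃ φ : V ↪ W, ∀ i, B i = (A i).map φ := by
  choose φ hφ using exists_forall_mem_iff_mem hA hAinj hAB hexit
  have hφinj : Function.Injective φ := fun v w h =>
    hexit.eq_of_forall_mem_iff fun j => by rw [← hφ, ← hφ, h]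
  refine ⟨⟨φ, hφinj⟩, fun i => (eq_of_subset_of_card_le ?_ ?_).symm⟩
  · intro y hy
    obtain ⟨v, hv, rfl⟩ := mem_map.mp hy
    exact (hφ v i).mpr hv
  · rw [card_eq_two_of_card_inter_eq hA hAB, card_map, hA]

end Whitney

theorem gram_determines_incidence_of_connected_general {n m : ℕ} (hn : 5 ≤ n)
    (G : SimpleGraph (Fin n)) (hG : G.Connected)
    (e : Fin m → Sym2 (Fin n)) (he : Function.Injective e)
    (heE : ∀ i, e i ∈ G.edgeSet) (hsurj : ∀ f ∈ G.edgeSet, ∃ i, e i = f)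
    (W W' : Matrix (Fin m) (Fin n) ℤ)
    (hW : ∀ i v, W i v = if v ∈ e i then 1 else 0)
    (hW'01 : ∀ i v, W' i v = 0 ∨ W' i v = 1)
    (hGram : W' * W'ᵀ = W * Wᵀ) :
    ∃ π : Equiv.Perm (Fin n), ∀ i v, W' i v = W i (π v) := by
  set A : Fin m → Finset (Fin n) := fun i => (e i).toFinset
  have hW01 : ∀ i v, W i v = 0 ∨ W i v = 1 := fun i v => by rw [hW]; split_ifs <;> simp
  have hWA : ∀ i v, W i v = 1 ↔ v ∈ A i := fun i v => by simp [A, hW]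
  have hA : ∀ i, #(A i) = 2 := fun i =>
    Sym2.card_toFinset_of_not_isDiag _ (G.not_isDiag_of_mem_edgeSet (heE i))
  have hAinj : Function.Injective A := fun i j h => he <| Sym2.ext fun v => by
    rw [← Sym2.mem_toFinset, ← Sym2.mem_toFinset]
    exact Finset.ext_iff.mp h v
  have hAB : ∀ i j, #(univ.filter (W' i · = 1) ∩ univ.filter (W' j · = 1)) = #(A i ∩ A j) := by
    intro i j
    have h := congrFun (congrFun hGram i) j
    rw [Matrix.mul_transpose_apply_eq_card_inter W' hW'01,
      Matrix.mul_transpose_apply_eq_card_inter W hW01] at h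
    simpa [hWA] using h
  have hexit : Whitney.ExitsSmallSets A := hG.exitsSmallSets (by simpa using hn) fun p q hpq => by
    obtain ⟨i, hi⟩ := hsurj s(p, q) hpq
    exact ⟨i, by ext; simp [A, hi]⟩
  obtain ⟨φ, hφ⟩ := Whitney.exists_embedding_map_eq hA hAinj hAB hexit
  let π := Equiv.ofBijective φ (Finite.injective_iff_bijective.mp φ.injective)
  refine ⟨π.symm, fun i v => ?_⟩
  have hv : W' i v = 1 ↔ W i (π.symm v) = 1 := by
    have hφv : φ (π.symm v) = v := π.apply_symm_apply v
    rw [hWA, ← mem_map' φ, ← hφ, hφv, mem_filter]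
    simp
  rcases hW'01 i v with h | h <;> rcases hW01 i (π.symm v) with h' | h' <;> simp_all

/-- Deterministic core of Whitney's theorem: if `G` is a connected simple graph on `n ≥ 5`
vertices with distinct edges `e 0, …, e (m-1)` and incidence matrix `W ∈ {0,1}^{m×n}`, then any
row-2-sparse `{0,1}` matrix `W'` with `W'(W')ᵀ = WWᵀ` equals `W` up to a permutation of the
columns. -/
theorem gram_determines_incidence_of_connected {n m : ℕ} (hn : 5 ≤ n)
    (G : SimpleGraph (Fin n)) (hG : G.Connected)
    (e : Fin m → Sym2 (Fin n)) (he : Function.Injective e)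
    (heE : ∀ i, e i ∈ G.edgeSet) (hsurj : ∀ f ∈ G.edgeSet, ∃ i, e i = f)
    (W W' : Matrix (Fin m) (Fin n) ℤ)
    (hW : ∀ i v, W i v = if v ∈ e i then 1 else 0)
    (hW'01 : ∀ i v, W' i v = 0 ∨ W' i v = 1)
    (hW'row : ∀ i, (Finset.univ.filter (fun v => W' i v = 1)).card = 2)
    (hGram : W' * W'ᵀ = W * Wᵀ) :
    ∃ π : Equiv.Perm (Fin n), ∀ i v, W' i v = W i (π v) :=
  gram_determines_incidence_of_connected_general hn G hG e he heE hsurj W W' hW hW'01 hGram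
end

section
/- Let G and H be finite connected simple graphs whose line graphs L(G) and L(H) are isomorphic. If it is not the case that one of G, H is isomorphic to the triangle K₃ and the other is isomorphic to the star K_{1,3}, then G and H are isomorphic. -/
/-- The star `K_{1,3}`: one center (`0`) joined to three leaves. -/
def starK13 : SimpleGraph (Fin 4) where
  Adj u v := (u = 0 ∧ v ≠ 0) ∨ (v = 0 ∧ u ≠ 0)
  symm := ⟨fun u v h => h.symm⟩
  loopless := ⟨by rintro u (⟨h1, h2⟩ | ⟨h1, h2⟩) <;> exact h2 h1⟩

open SimpleGraph

section Whitney
variable {V W : Type*} {G : SimpleGraph V} {H : SimpleGraph W}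


/-- Two distinct `Sym2`s share at most one element. -/
lemma sym2_shared_eq {e f : Sym2 V} (hne : e ≠ f) {x y : V}
    (hxe : x ∈ e) (hxf : x ∈ f) (hye : y ∈ e) (hyf : y ∈ f) : x = y := by
  by_contra hxy
  exact hne (((Sym2.mem_and_mem_iff hxy).1 ⟨hxe, hye⟩).trans
    (((Sym2.mem_and_mem_iff hxy).1 ⟨hxf, hyf⟩).symm))

lemma sym2_eq_of_mem {e : Sym2 V} {x y : V} (hxy : x ≠ y) (hx : x ∈ e) (hy : y ∈ e) :
    e = s(x, y) := (Sym2.mem_and_mem_iff hxy).1 ⟨hx, hy⟩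

/-- A set closed under adjacency contains everything reachable from its members. -/
lemma sym2_exists_rep (e : Sym2 V) : ∃ x y, e = s(x, y) := by
  induction e using Sym2.ind with
  | _ x y => exact ⟨x, y, rfl⟩

lemma reach_closed {S : Set V} (hS : ∀ a ∈ S, ∀ b, G.Adj a b → b ∈ S) {u v : V}
    (h : G.Reachable u v) (hu : u ∈ S) : v ∈ S := by
  obtain ⟨p⟩ := h
  induction p with
  | nil => exact hu
  | cons h p ih => exact ih (hS _ hu _ h)

/-- In a connected graph with an edge, every vertex lies on an edge. -/
lemma exists_edge_mem (hG : G.Connected) (e0 : G.edgeSet) (v : V) :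
    ∃ e : G.edgeSet, v ∈ (e : Sym2 V) := by
  obtain ⟨x, y, hxy⟩ := sym2_exists_rep (e0 : Sym2 V)
  obtain ⟨p⟩ := hG.preconnected v x
  cases p with
  | nil => exact ⟨e0, by rw [hxy]; simp⟩
  | cons h p => exact ⟨⟨s(v, _), h⟩, by simp⟩

/-- In a connected graph with at least two edges, every edge has a distinct neighbouring edge. -/
lemma exists_adj_edge (hG : G.Connected) {e f : G.edgeSet} (hef : e ≠ f) (e' : G.edgeSet) :
    ∃ g : G.edgeSet, g ≠ e' ∧ ∃ z, z ∈ (g : Sym2 V) ∧ z ∈ (e' : Sym2 V) := by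
  by_contra hno
  push_neg at hno
  -- the set of endpoints of e' is closed
  have hclosed : ∀ a ∈ {t | t ∈ (e' : Sym2 V)}, ∀ b, G.Adj a b → b ∈ {t | t ∈ (e' : Sym2 V)} := by
    intro a ha b hab
    have : (⟨s(a,b), hab⟩ : G.edgeSet) = e' := by
      by_contra hne
      obtain ⟨z, hz1, hz2⟩ : ∃ z, z ∈ s(a,b) ∧ z ∈ (e' : Sym2 V) := ⟨a, by simp, ha⟩
      exact (hno ⟨s(a,b), hab⟩ hne z hz1) hz2
    have : s(a, b) = (e' : Sym2 V) := congrArg Subtype.val this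
    rw [← this]; simp
  -- pick an edge different from e'
  obtain ⟨h, hh⟩ : ∃ h : G.edgeSet, h ≠ e' := by
    by_cases h1 : e = e'
    · exact ⟨f, by rw [← h1]; exact fun hh => hef hh.symm⟩
    · exact ⟨e, h1⟩
  obtain ⟨x, y, hxy⟩ := sym2_exists_rep (h : Sym2 V)
  obtain ⟨u, hu⟩ : ∃ u, u ∈ (e' : Sym2 V) := by
    obtain ⟨x', y', h'⟩ := sym2_exists_rep (e' : Sym2 V)
    exact ⟨x', by rw [h']; simp⟩
  have hx : x ∈ {t | t ∈ (e' : Sym2 V)} :=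
    reach_closed hclosed (hG.preconnected u x) hu
  exact hno h hh x (by rw [hxy]; simp) hx

/-- No claw of `G` is mapped by `φ` to a triangle of `H`. -/
def NoBad (φ : G.lineGraph ≃g H.lineGraph) : Prop :=
  ∀ e0 e1 e2 : G.edgeSet, e0 ≠ e1 → e0 ≠ e2 → e1 ≠ e2 →
    (∃ v, v ∈ (e0 : Sym2 V) ∧ v ∈ (e1 : Sym2 V) ∧ v ∈ (e2 : Sym2 V)) →
    ∃ w, w ∈ (φ e0 : Sym2 W) ∧ w ∈ (φ e1 : Sym2 W) ∧ w ∈ (φ e2 : Sym2 W)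

/-- `w` is the vertex of `H` corresponding to the vertex `v` of `G`. -/
def Corr (φ : G.lineGraph ≃g H.lineGraph) (v : V) (w : W) : Prop :=
  (∀ e : G.edgeSet, v ∈ (e : Sym2 V) → w ∈ (φ e : Sym2 W)) ∧
  (∀ f : H.edgeSet, w ∈ (f : Sym2 W) → v ∈ (φ.symm f : Sym2 V))

lemma rel_iso_symm_symm (φ : G.lineGraph ≃g H.lineGraph) : φ.symm.symm = φ := rfl

lemma corr_symm {φ : G.lineGraph ≃g H.lineGraph} {v : V} {w : W} (h : Corr φ v w) :
    Corr φ.symm w v := ⟨h.2, h.1⟩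

lemma corr_symm' {φ : G.lineGraph ≃g H.lineGraph} {v : V} {w : W} (h : Corr φ.symm w v) :
    Corr φ v w := ⟨h.2, h.1⟩

lemma vne {s : Set (Sym2 V)} {e f : s} (h : e ≠ f) : (e : Sym2 V) ≠ (f : Sym2 V) :=
  fun hh => h (Subtype.ext hh)

lemma lg_adj {e f : G.edgeSet} (hne : e ≠ f) {z : V} (hz1 : z ∈ (e : Sym2 V))
    (hz2 : z ∈ (f : Sym2 V)) : G.lineGraph.Adj e f :=
  lineGraph_adj_iff_exists.2 ⟨hne, z, hz1, hz2⟩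

lemma map_lg_adj (φ : G.lineGraph ≃g H.lineGraph) {e f : G.edgeSet}
    (h : G.lineGraph.Adj e f) : H.lineGraph.Adj (φ e) (φ f) := φ.map_rel_iff.2 h

lemma star_common {φ : G.lineGraph ≃g H.lineGraph} (hnb1 : NoBad φ) {v : V}
    {e0 e1 : G.edgeSet} (h01 : e0 ≠ e1) (hv0 : v ∈ (e0 : Sym2 V)) (hv1 : v ∈ (e1 : Sym2 V)) :
    ∃ w, w ∈ (φ e0 : Sym2 W) ∧ w ∈ (φ e1 : Sym2 W) ∧
      ∀ e : G.edgeSet, v ∈ (e : Sym2 V) → w ∈ (φ e : Sym2 W) := by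
  obtain ⟨hne', w, hw0, hw1⟩ := lineGraph_adj_iff_exists.1 (map_lg_adj φ (lg_adj h01 hv0 hv1))
  refine ⟨w, hw0, hw1, fun e hv => ?_⟩
  by_cases he0 : e = e0
  · rw [he0]; exact hw0
  by_cases he1 : e = e1
  · rw [he1]; exact hw1
  obtain ⟨w', hw'0, hw'1, hw'e⟩ := hnb1 e0 e1 e h01 (Ne.symm he0) (Ne.symm he1) ⟨v, hv0, hv1, hv⟩
  rwa [sym2_shared_eq (vne hne') hw'0 hw'1 hw0 hw1] at hw'e

lemma exists_unique_corr (hG : G.Connected) (φ : G.lineGraph ≃g H.lineGraph)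
    (hnb1 : NoBad φ) (hnb2 : NoBad φ.symm)
    (h2 : ∃ e f : G.edgeSet, e ≠ f) (v : V) : ∃! w : W, Corr φ v w := by
  obtain ⟨ea, eb, hab⟩ := h2
  obtain ⟨ev, hv_ev⟩ := exists_edge_mem hG ea v
  by_cases hdeg : ∃ e' : G.edgeSet, e' ≠ ev ∧ v ∈ (e' : Sym2 V)
  · -- degree at least two
    obtain ⟨e1, h1ne, hv1⟩ := hdeg
    obtain ⟨w, hw0, hw1, hstar⟩ := star_common hnb1 (Ne.symm h1ne) hv_ev hv1
    have hfne : φ ev ≠ φ e1 := fun h => h1ne (φ.injective h).symm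
    refine ⟨w, ⟨hstar, ?_⟩, ?_⟩
    · -- second clause
      intro f hwf
      by_contra hvf
      have hne0 : φ.symm f ≠ ev := fun h => hvf (h ▸ hv_ev)
      have hne1 : φ.symm f ≠ e1 := fun h => hvf (h ▸ hv1)
      have hfne0 : f ≠ φ ev := fun h => hne0 (by rw [h, φ.symm_apply_apply])
      have hfne1 : f ≠ φ e1 := fun h => hne1 (by rw [h, φ.symm_apply_apply])
      obtain ⟨z, hz_f, hz_ev, hz_e1⟩ := hnb2 f (φ ev) (φ e1) hfne0 hfne1 hfne ⟨w, hwf, hw0, hw1⟩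
      rw [φ.symm_apply_apply] at hz_ev hz_e1
      have : z = v := sym2_shared_eq (vne (Ne.symm h1ne)) hz_ev hz_e1 hv_ev hv1
      exact hvf (this ▸ hz_f)
    · intro w' hw'
      exact sym2_shared_eq (vne hfne) (hw'.1 ev hv_ev) (hw'.1 e1 hv1) hw0 hw1
  · -- degree one
    push_neg at hdeg
    have hdeg : ∀ e' : G.edgeSet, v ∈ (e' : Sym2 V) → e' = ev := by
      intro e' h
      by_contra hne
      exact hdeg e' hne h
    have hnd : ¬(ev : Sym2 V).IsDiag := G.not_isDiag_of_mem_edgeSet ev.2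
    set u := Sym2.Mem.other hv_ev with hu_def
    have hu : u ∈ (ev : Sym2 V) := Sym2.other_mem hv_ev
    have huv : u ≠ v := Sym2.other_ne hnd hv_ev
    have hspec : s(v, u) = (ev : Sym2 V) := Sym2.other_spec hv_ev
    obtain ⟨g, hg_ne, z, hz_g, hz_ev⟩ := exists_adj_edge hG hab ev
    have hzvu : z = v ∨ z = u := by rw [← hspec] at hz_ev; exact Sym2.mem_iff.1 hz_ev
    have hu_g : u ∈ (g : Sym2 V) := by
      rcases hzvu with h | h
      · exact absurd (hdeg g (h ▸ hz_g)) hg_ne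
      · exact h ▸ hz_g
    obtain ⟨wu, hwu_ev, hwu_g, hstar_u⟩ := star_common hnb1 (Ne.symm hg_ne) hu hu_g
    have hndH : ¬((φ ev : H.edgeSet) : Sym2 W).IsDiag := H.not_isDiag_of_mem_edgeSet (φ ev).2
    set p := Sym2.Mem.other hwu_ev with hp_def
    have hp : p ∈ (φ ev : Sym2 W) := Sym2.other_mem hwu_ev
    have hpwu : p ≠ wu := Sym2.other_ne hndH hwu_ev
    have hspec2 : s(wu, p) = ((φ ev : H.edgeSet) : Sym2 W) := Sym2.other_spec hwu_ev
    refine ⟨p, ⟨?_, ?_⟩, ?_⟩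
    · intro e hv_e
      rw [hdeg e hv_e]; exact hp
    · intro f hpf
      by_cases hfev : f = φ ev
      · rw [hfev, φ.symm_apply_apply]; exact hv_ev
      · exfalso
        have hne' : φ.symm f ≠ ev := fun h => hfev (by rw [← h, φ.apply_symm_apply])
        have hadj : H.lineGraph.Adj f (φ ev) := lg_adj hfev hpf hp
        have hadj' : G.lineGraph.Adj (φ.symm f) ev := by
          have := φ.symm.map_rel_iff.2 hadj
          rwa [φ.symm_apply_apply] at this
        obtain ⟨_, z', hz'_f, hz'_ev⟩ := lineGraph_adj_iff_exists.1 hadj'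
        have hz'vu : z' = v ∨ z' = u := by rw [← hspec] at hz'_ev; exact Sym2.mem_iff.1 hz'_ev
        rcases hz'vu with h | h
        · exact hne' (hdeg _ (h ▸ hz'_f))
        · have hwu_f : wu ∈ (f : Sym2 W) := by
            have := hstar_u (φ.symm f) (h ▸ hz'_f)
            rwa [φ.apply_symm_apply] at this
          have : (f : Sym2 W) = s(wu, p) := sym2_eq_of_mem (Ne.symm hpwu) hwu_f hpf
          exact hfev (Subtype.ext (this.trans hspec2))
    · intro w' hw'
      have hw'_ev : w' ∈ ((φ ev : H.edgeSet) : Sym2 W) := hw'.1 ev hv_ev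
      rw [← hspec2, Sym2.mem_iff] at hw'_ev
      rcases hw'_ev with h | h
      · exfalso
        have := hw'.2 (φ g) (h ▸ hwu_g)
        rw [φ.symm_apply_apply] at this
        exact hg_ne (hdeg g this)
      · exact h

lemma corr_adj (hG : G.Connected) (φ : G.lineGraph ≃g H.lineGraph)
    (h2 : ∃ e f : G.edgeSet, e ≠ f) {u v : V} {wu wv : W}
    (hu : Corr φ u wu) (hv : Corr φ v wv) (huv : G.Adj u v) : H.Adj wu wv := by
  set e : G.edgeSet := ⟨s(u, v), huv⟩ with he_def
  have hu_e : u ∈ (e : Sym2 V) := by simp [he_def]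
  have hv_e : v ∈ (e : Sym2 V) := by simp [he_def]
  have hwu : wu ∈ (φ e : Sym2 W) := hu.1 e hu_e
  have hwv : wv ∈ (φ e : Sym2 W) := hv.1 e hv_e
  have hne : wu ≠ wv := by
    intro heq
    obtain ⟨ea, eb, hab⟩ := h2
    obtain ⟨g, hg_ne, z, hz_g, hz_e⟩ := exists_adj_edge hG hab e
    have hz : z = u ∨ z = v := by simpa [he_def] using hz_e
    rcases hz with rfl | rfl
    · have h1 : wu ∈ (φ g : Sym2 W) := hu.1 g hz_g
      have h2' : v ∈ (φ.symm (φ g) : Sym2 V) := hv.2 (φ g) (heq ▸ h1)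
      rw [φ.symm_apply_apply] at h2'
      exact hg_ne (Subtype.ext (sym2_eq_of_mem (G.ne_of_adj huv) hz_g h2'))
    · have h1 : wv ∈ (φ g : Sym2 W) := hv.1 g hz_g
      have h2' : u ∈ (φ.symm (φ g) : Sym2 V) := hu.2 (φ g) (heq ▸ h1)
      rw [φ.symm_apply_apply] at h2'
      exact hg_ne (Subtype.ext (sym2_eq_of_mem (G.ne_of_adj huv) h2' hz_g))
  have : (φ e : Sym2 W) = s(wu, wv) := sym2_eq_of_mem hne hwu hwv
  have hmem := (φ e).2
  rw [this] at hmem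
  exact hmem

lemma whitney_main (hG : G.Connected) (hH : H.Connected) (φ : G.lineGraph ≃g H.lineGraph)
    (hnb1 : NoBad φ) (hnb2 : NoBad φ.symm) (h2 : ∃ e f : G.edgeSet, e ≠ f) :
    Nonempty (G ≃g H) := by
  have h2' : ∃ f g : H.edgeSet, f ≠ g := by
    obtain ⟨e, f, hef⟩ := h2
    exact ⟨φ e, φ f, fun h => hef (φ.injective h)⟩
  have hnb2' : NoBad φ.symm.symm := hnb1
  have hex : ∀ v, ∃! w, Corr φ v w := exists_unique_corr hG φ hnb1 hnb2 h2
  have hex' : ∀ w, ∃! v, Corr φ.symm w v := exists_unique_corr hH φ.symm hnb2 hnb2' h2'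
  have hψ : ∀ v, Corr φ v (Classical.choose (hex v).exists) :=
    fun v => Classical.choose_spec (hex v).exists
  have hψ' : ∀ w, Corr φ.symm w (Classical.choose (hex' w).exists) :=
    fun w => Classical.choose_spec (hex' w).exists
  set ψ : V → W := fun v => Classical.choose (hex v).exists with hψdef
  set ψ' : W → V := fun w => Classical.choose (hex' w).exists with hψ'def
  have hli : Function.LeftInverse ψ' ψ :=
    fun v => (hex' (ψ v)).unique (hψ' (ψ v)) (corr_symm (hψ v))
  have hri : Function.RightInverse ψ' ψ :=
    fun w => (hex (ψ' w)).unique (hψ (ψ' w)) (corr_symm' (hψ' w))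
  refine ⟨⟨⟨ψ, ψ', hli, hri⟩, ?_⟩⟩
  intro a b
  constructor
  · intro h
    exact corr_adj hH φ.symm h2' (corr_symm (hψ a)) (corr_symm (hψ b)) h
  · intro h
    exact corr_adj hG φ h2 (hψ a) (hψ b) h

lemma whitney_small (hG : G.Connected) (hH : H.Connected) (φ : G.lineGraph ≃g H.lineGraph)
    (h2 : ¬ ∃ e f : G.edgeSet, e ≠ f) : Nonempty (G ≃g H) := by
  classical
  push_neg at h2
  by_cases hne : Nonempty G.edgeSet
  · -- exactly one edge
    obtain ⟨e⟩ := hne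
    obtain ⟨u1, u2, he⟩ := sym2_exists_rep (e : Sym2 V)
    have hadj : G.Adj u1 u2 := by have := e.2; rwa [he, mem_edgeSet] at this
    have hu12 : u1 ≠ u2 := G.ne_of_adj hadj
    obtain ⟨w1, w2, hf⟩ := sym2_exists_rep ((φ e : H.edgeSet) : Sym2 W)
    have hadjH : H.Adj w1 w2 := by have := (φ e).2; rwa [hf, mem_edgeSet] at this
    have hw12 : w1 ≠ w2 := H.ne_of_adj hadjH
    have h2H : ∀ f g : H.edgeSet, f = g := by
      intro f g
      have h1 : φ.symm f = φ.symm g := h2 _ _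
      have := congrArg φ h1
      rwa [φ.apply_symm_apply, φ.apply_symm_apply] at this
    -- vertex characterizations
    have hVchar : ∀ t : V, t = u1 ∨ t = u2 := by
      intro t
      have hcl : ∀ a ∈ {z | z ∈ (e : Sym2 V)}, ∀ b, G.Adj a b → b ∈ {z | z ∈ (e : Sym2 V)} := by
        intro a ha b hab
        have : (⟨s(a,b), hab⟩ : G.edgeSet) = e := h2 _ _
        have hval : s(a,b) = (e : Sym2 V) := congrArg Subtype.val this
        rw [← hval]; simp
      have hu1 : u1 ∈ {z | z ∈ (e : Sym2 V)} := by rw [he]; simp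
      have := reach_closed hcl (hG.preconnected u1 t) hu1
      rw [he] at this
      simpa using this
    have hWchar : ∀ t : W, t = w1 ∨ t = w2 := by
      intro t
      have hcl : ∀ a ∈ {z | z ∈ ((φ e : H.edgeSet) : Sym2 W)}, ∀ b, H.Adj a b →
          b ∈ {z | z ∈ ((φ e : H.edgeSet) : Sym2 W)} := by
        intro a ha b hab
        have : (⟨s(a,b), hab⟩ : H.edgeSet) = φ e := h2H _ _
        have hval : s(a,b) = ((φ e : H.edgeSet) : Sym2 W) := congrArg Subtype.val this
        rw [← hval]; simp
      have hw1 : w1 ∈ {z | z ∈ ((φ e : H.edgeSet) : Sym2 W)} := by rw [hf]; simp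
      have := reach_closed hcl (hH.preconnected w1 t) hw1
      rw [hf] at this
      simpa using this
    have hGadj : ∀ t1 t2 : V, G.Adj t1 t2 ↔ s(t1, t2) = s(u1, u2) := by
      intro t1 t2
      constructor
      · intro h
        have : (⟨s(t1,t2), h⟩ : G.edgeSet) = e := h2 _ _
        have := congrArg Subtype.val this
        simpa [he] using this
      · intro h
        rw [← mem_edgeSet, h]
        exact he ▸ e.2
    have hHadj : ∀ t1 t2 : W, H.Adj t1 t2 ↔ s(t1, t2) = s(w1, w2) := by
      intro t1 t2
      constructor
      · intro h
        have : (⟨s(t1,t2), h⟩ : H.edgeSet) = φ e := h2H _ _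
        have := congrArg Subtype.val this
        simpa [hf] using this
      · intro h
        rw [← mem_edgeSet, h]
        exact hf ▸ (φ e).2
    refine ⟨⟨⟨fun t => if t = u1 then w1 else w2, fun s => if s = w1 then u1 else u2, ?_, ?_⟩, ?_⟩⟩
    · intro t
      rcases hVchar t with rfl | rfl <;> simp [hu12, hw12, Ne.symm hu12, Ne.symm hw12]
    · intro s
      rcases hWchar s with rfl | rfl <;> simp [hu12, hw12, Ne.symm hu12, Ne.symm hw12]
    · intro t1 t2
      rcases hVchar t1 with rfl | rfl <;> rcases hVchar t2 with rfl | rfl <;>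
        simp [hGadj, hHadj, Sym2.eq_iff, hu12, hw12, Ne.symm hu12, Ne.symm hw12]
  · -- no edges
    have hneH : ¬ Nonempty H.edgeSet := fun ⟨f⟩ => hne ⟨φ.symm f⟩
    have hsubV : ∀ u t : V, u = t := by
      intro u t
      have hcl : ∀ a ∈ ({u} : Set V), ∀ b, G.Adj a b → b ∈ ({u} : Set V) := by
        intro a ha b hab
        exact absurd ⟨⟨s(a,b), hab⟩⟩ hne
      exact (reach_closed hcl (hG.preconnected u t) rfl).symm
    have hsubW : ∀ u t : W, u = t := by
      intro u t
      have hcl : ∀ a ∈ ({u} : Set W), ∀ b, H.Adj a b → b ∈ ({u} : Set W) := by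
        intro a ha b hab
        exact absurd ⟨⟨s(a,b), hab⟩⟩ hneH
      exact (reach_closed hcl (hH.preconnected u t) rfl).symm
    obtain ⟨v0⟩ := hG.nonempty
    obtain ⟨w0⟩ := hH.nonempty
    refine ⟨⟨⟨fun _ => w0, fun _ => v0, fun t => hsubV v0 t, fun s => hsubW w0 s⟩, ?_⟩⟩
    intro t1 t2
    constructor
    · intro h
      exact (hneH ⟨⟨s(w0, w0), h⟩⟩).elim
    · intro h
      exact (hne ⟨⟨s(t1, t2), h⟩⟩).elim

/-- Build a graph isomorphism from complete enumeration tables. -/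
lemma build_iso {n : ℕ} (tV : Fin n → V) (tW : Fin n → W)
    (hV : ∀ u, ∃ i, u = tV i) (hW : ∀ u, ∃ i, u = tW i)
    (hinjV : ∀ i j, tV i = tV j → i = j) (hinjW : ∀ i j, tW i = tW j → i = j)
    (hadj : ∀ i j, G.Adj (tV i) (tV j) ↔ H.Adj (tW i) (tW j)) : Nonempty (G ≃g H) := by
  classical
  set fV : V → Fin n := fun u => (hV u).choose with hfV
  set fW : W → Fin n := fun u => (hW u).choose with hfW
  have hfVs : ∀ u, u = tV (fV u) := fun u => (hV u).choose_spec
  have hfWs : ∀ u, u = tW (fW u) := fun u => (hW u).choose_spec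
  have hVt : ∀ i, fV (tV i) = i := fun i => (hinjV _ _ (hfVs (tV i)).symm)
  have hWt : ∀ i, fW (tW i) = i := fun i => (hinjW _ _ (hfWs (tW i)).symm)
  refine ⟨⟨⟨fun u => tW (fV u), fun w => tV (fW w), ?_, ?_⟩, ?_⟩⟩
  · intro u
    simp only [hWt]
    exact (hfVs u).symm
  · intro w
    simp only [hVt]
    exact (hfWs w).symm
  · intro u1 u2
    simp only [Equiv.coe_fn_mk]
    rw [← hadj]
    rw [← hfVs u1, ← hfVs u2]

set_option maxHeartbeats 4000000 in
lemma whitney_exceptional (hG : G.Connected) (hH : H.Connected)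
    (φ : G.lineGraph ≃g H.lineGraph) (hbad : ¬ NoBad φ) :
    Nonempty (G ≃g H) ∨
      (Nonempty (G ≃g starK13) ∧ Nonempty (H ≃g (⊤ : SimpleGraph (Fin 3)))) := by
  classical
  unfold NoBad at hbad
  push_neg at hbad
  obtain ⟨e0, e1, e2, h01, h02, h12, ⟨v, hv0, hv1, hv2⟩, hno⟩ := hbad
  obtain ⟨hne01, y, hy0, hy1⟩ := lineGraph_adj_iff_exists.1 (map_lg_adj φ (lg_adj h01 hv0 hv1))
  obtain ⟨hne12, z, hz1, hz2⟩ := lineGraph_adj_iff_exists.1 (map_lg_adj φ (lg_adj h12 hv1 hv2))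
  obtain ⟨hne02, x, hx0, hx2⟩ := lineGraph_adj_iff_exists.1 (map_lg_adj φ (lg_adj h02 hv0 hv2))
  have hxy : x ≠ y := fun h => hno x hx0 (by rw [h]; exact hy1) hx2
  have hyz : y ≠ z := fun h => hno y hy0 hy1 (by rw [h]; exact hz2)
  have hxz : x ≠ z := fun h => hno x hx0 (by rw [h]; exact hz1) hx2
  have hf0 : ((φ e0 : H.edgeSet) : Sym2 W) = s(x, y) := sym2_eq_of_mem hxy hx0 hy0
  have hf1 : ((φ e1 : H.edgeSet) : Sym2 W) = s(y, z) := sym2_eq_of_mem hyz hy1 hz1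
  have hf2 : ((φ e2 : H.edgeSet) : Sym2 W) = s(x, z) := sym2_eq_of_mem hxz hx2 hz2
  -- other endpoints of the claw
  have hnd0 : ¬(e0 : Sym2 V).IsDiag := G.not_isDiag_of_mem_edgeSet e0.2
  have hnd1 : ¬(e1 : Sym2 V).IsDiag := G.not_isDiag_of_mem_edgeSet e1.2
  have hnd2 : ¬(e2 : Sym2 V).IsDiag := G.not_isDiag_of_mem_edgeSet e2.2
  set a := Sym2.Mem.other hv0 with ha_def
  set b := Sym2.Mem.other hv1 with hb_def
  set c := Sym2.Mem.other hv2 with hc_def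
  have ha0 : a ∈ (e0 : Sym2 V) := Sym2.other_mem hv0
  have hb1 : b ∈ (e1 : Sym2 V) := Sym2.other_mem hv1
  have hc2 : c ∈ (e2 : Sym2 V) := Sym2.other_mem hv2
  have hav : a ≠ v := Sym2.other_ne hnd0 hv0
  have hbv : b ≠ v := Sym2.other_ne hnd1 hv1
  have hcv : c ≠ v := Sym2.other_ne hnd2 hv2
  have hsa : s(v, a) = (e0 : Sym2 V) := Sym2.other_spec hv0
  have hsb : s(v, b) = (e1 : Sym2 V) := Sym2.other_spec hv1
  have hsc : s(v, c) = (e2 : Sym2 V) := Sym2.other_spec hv2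
  have hab : a ≠ b := fun h => h01 (Subtype.ext (by rw [← hsa, ← hsb, h]))
  have hbc : b ≠ c := fun h => h12 (Subtype.ext (by rw [← hsb, ← hsc, h]))
  have hac : a ≠ c := fun h => h02 (Subtype.ext (by rw [← hsa, ← hsc, h]))
  -- F1 : the only edges through v are e0, e1, e2
  have F1 : ∀ e : G.edgeSet, v ∈ (e : Sym2 V) → e = e0 ∨ e = e1 ∨ e = e2 := by
    intro e hv_e
    by_contra hcon
    push_neg at hcon
    obtain ⟨hne0, hne1, hne2⟩ := hcon
    obtain ⟨hB0, t0, ht0e, ht0⟩ := lineGraph_adj_iff_exists.1 (map_lg_adj φ (lg_adj hne0 hv_e hv0))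
    obtain ⟨hB1, t1, ht1e, ht1⟩ := lineGraph_adj_iff_exists.1 (map_lg_adj φ (lg_adj hne1 hv_e hv1))
    obtain ⟨hB2, t2, ht2e, ht2⟩ := lineGraph_adj_iff_exists.1 (map_lg_adj φ (lg_adj hne2 hv_e hv2))
    rw [hf0, Sym2.mem_iff] at ht0
    rw [hf1, Sym2.mem_iff] at ht1
    rw [hf2, Sym2.mem_iff] at ht2
    by_cases hy' : y ∈ ((φ e : H.edgeSet) : Sym2 W)
    · rcases ht2 with h | h
      · exact hB0 (Subtype.ext ((sym2_eq_of_mem hxy (h ▸ ht2e) hy').trans hf0.symm))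
      · exact hB1 (Subtype.ext ((sym2_eq_of_mem hyz hy' (h ▸ ht2e)).trans hf1.symm))
    · have hx' : x ∈ ((φ e : H.edgeSet) : Sym2 W) := by
        rcases ht0 with h | h
        · exact h ▸ ht0e
        · exact absurd (h ▸ ht0e) hy'
      have hz' : z ∈ ((φ e : H.edgeSet) : Sym2 W) := by
        rcases ht1 with h | h
        · exact absurd (h ▸ ht1e) hy'
        · exact h ▸ ht1e
      exact hB2 (Subtype.ext ((sym2_eq_of_mem hxz hx' hz').trans hf2.symm))
  -- F2 : edges through a (resp. b, c) not in the claw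
  have F2a : ∀ e : G.edgeSet, e ≠ e0 → e ≠ e1 → e ≠ e2 → a ∈ (e : Sym2 V) →
      (e : Sym2 V) = s(a, b) ∨ (e : Sym2 V) = s(a, c) := by
    intro e hne0 hne1 hne2 ha_e
    have hv_e : v ∉ (e : Sym2 V) := by
      intro hv_e
      rcases F1 e hv_e with h | h | h
      exacts [hne0 h, hne1 h, hne2 h]
    obtain ⟨hB0, t, hte, ht0⟩ := lineGraph_adj_iff_exists.1 (map_lg_adj φ (lg_adj hne0 ha_e ha0))
    rw [hf0, Sym2.mem_iff] at ht0
    rcases ht0 with h | h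
    · -- x ∈ φ e, so e meets e2, hence c ∈ e
      have hadjH : H.lineGraph.Adj (φ e) (φ e2) :=
        lg_adj (fun hh => hne2 (φ.injective hh)) (h ▸ hte) (by rw [hf2]; simp)
      obtain ⟨_, t', ht'e, ht'2⟩ := lineGraph_adj_iff_exists.1 (φ.map_rel_iff.1 hadjH)
      rw [← hsc, Sym2.mem_iff] at ht'2
      rcases ht'2 with h' | h'
      · exact absurd (h' ▸ ht'e) hv_e
      · exact Or.inr (sym2_eq_of_mem hac ha_e (h' ▸ ht'e))
    · have hadjH : H.lineGraph.Adj (φ e) (φ e1) :=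
        lg_adj (fun hh => hne1 (φ.injective hh)) (h ▸ hte) (by rw [hf1]; simp)
      obtain ⟨_, t', ht'e, ht'1⟩ := lineGraph_adj_iff_exists.1 (φ.map_rel_iff.1 hadjH)
      rw [← hsb, Sym2.mem_iff] at ht'1
      rcases ht'1 with h' | h'
      · exact absurd (h' ▸ ht'e) hv_e
      · exact Or.inl (sym2_eq_of_mem hab ha_e (h' ▸ ht'e))
  have F2b : ∀ e : G.edgeSet, e ≠ e0 → e ≠ e1 → e ≠ e2 → b ∈ (e : Sym2 V) →
      (e : Sym2 V) = s(a, b) ∨ (e : Sym2 V) = s(b, c) := by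
    intro e hne0 hne1 hne2 hb_e
    have hv_e : v ∉ (e : Sym2 V) := by
      intro hv_e
      rcases F1 e hv_e with h | h | h
      exacts [hne0 h, hne1 h, hne2 h]
    obtain ⟨hB1, t, hte, ht1⟩ := lineGraph_adj_iff_exists.1 (map_lg_adj φ (lg_adj hne1 hb_e hb1))
    rw [hf1, Sym2.mem_iff] at ht1
    rcases ht1 with h | h
    · -- y ∈ φ e, so e meets e0, hence a ∈ e
      have hadjH : H.lineGraph.Adj (φ e) (φ e0) :=
        lg_adj (fun hh => hne0 (φ.injective hh)) (h ▸ hte) (by rw [hf0]; simp)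
      obtain ⟨_, t', ht'e, ht'0⟩ := lineGraph_adj_iff_exists.1 (φ.map_rel_iff.1 hadjH)
      rw [← hsa, Sym2.mem_iff] at ht'0
      rcases ht'0 with h' | h'
      · exact absurd (h' ▸ ht'e) hv_e
      · exact Or.inl ((sym2_eq_of_mem hab (h' ▸ ht'e) hb_e))
    · have hadjH : H.lineGraph.Adj (φ e) (φ e2) :=
        lg_adj (fun hh => hne2 (φ.injective hh)) (h ▸ hte) (by rw [hf2]; simp)
      obtain ⟨_, t', ht'e, ht'2⟩ := lineGraph_adj_iff_exists.1 (φ.map_rel_iff.1 hadjH)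
      rw [← hsc, Sym2.mem_iff] at ht'2
      rcases ht'2 with h' | h'
      · exact absurd (h' ▸ ht'e) hv_e
      · exact Or.inr (sym2_eq_of_mem hbc hb_e (h' ▸ ht'e))
  have F2c : ∀ e : G.edgeSet, e ≠ e0 → e ≠ e1 → e ≠ e2 → c ∈ (e : Sym2 V) →
      (e : Sym2 V) = s(a, c) ∨ (e : Sym2 V) = s(b, c) := by
    intro e hne0 hne1 hne2 hc_e
    have hv_e : v ∉ (e : Sym2 V) := by
      intro hv_e
      rcases F1 e hv_e with h | h | h
      exacts [hne0 h, hne1 h, hne2 h]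
    obtain ⟨hB2, t, hte, ht2⟩ := lineGraph_adj_iff_exists.1 (map_lg_adj φ (lg_adj hne2 hc_e hc2))
    rw [hf2, Sym2.mem_iff] at ht2
    rcases ht2 with h | h
    · -- x ∈ φ e : e meets e0, a ∈ e
      have hadjH : H.lineGraph.Adj (φ e) (φ e0) :=
        lg_adj (fun hh => hne0 (φ.injective hh)) (h ▸ hte) (by rw [hf0]; simp)
      obtain ⟨_, t', ht'e, ht'0⟩ := lineGraph_adj_iff_exists.1 (φ.map_rel_iff.1 hadjH)
      rw [← hsa, Sym2.mem_iff] at ht'0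
      rcases ht'0 with h' | h'
      · exact absurd (h' ▸ ht'e) hv_e
      · exact Or.inl (sym2_eq_of_mem hac (h' ▸ ht'e) hc_e)
    · have hadjH : H.lineGraph.Adj (φ e) (φ e1) :=
        lg_adj (fun hh => hne1 (φ.injective hh)) (h ▸ hte) (by rw [hf1]; simp)
      obtain ⟨_, t', ht'e, ht'1⟩ := lineGraph_adj_iff_exists.1 (φ.map_rel_iff.1 hadjH)
      rw [← hsb, Sym2.mem_iff] at ht'1
      rcases ht'1 with h' | h'
      · exact absurd (h' ▸ ht'e) hv_e
      · exact Or.inr (sym2_eq_of_mem hbc (h' ▸ ht'e) hc_e)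
  -- every edge whose one endpoint is among {v,a,b,c} is in the 6-element list
  have memlist : ∀ (ev : Sym2 V) (he : ev ∈ G.edgeSet), ∀ u, u ∈ ev →
      (u = v ∨ u = a ∨ u = b ∨ u = c) →
      ev = s(v,a) ∨ ev = s(v,b) ∨ ev = s(v,c) ∨
      ev = s(a,b) ∨ ev = s(b,c) ∨ ev = s(a,c) := by
    intro ev he u hue hu
    set e : G.edgeSet := ⟨ev, he⟩ with he_def
    have hval : ev = (e : Sym2 V) := rfl
    rw [hval] at hue ⊢
    by_cases hge0 : e = e0
    · exact Or.inl (by rw [hge0, ← hsa])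
    by_cases hge1 : e = e1
    · exact Or.inr (Or.inl (by rw [hge1, ← hsb]))
    by_cases hge2 : e = e2
    · exact Or.inr (Or.inr (Or.inl (by rw [hge2, ← hsc])))
    rcases hu with rfl | rfl | rfl | rfl
    · rcases F1 e hue with h | h | h <;> [exact absurd h hge0; exact absurd h hge1;
        exact absurd h hge2]
    · rcases F2a e hge0 hge1 hge2 hue with h | h <;> tauto
    · rcases F2b e hge0 hge1 hge2 hue with h | h <;> tauto
    · rcases F2c e hge0 hge1 hge2 hue with h | h <;> tauto
  -- vertex characterization of V
  have hVchar : ∀ t : V, t = v ∨ t = a ∨ t = b ∨ t = c := by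
    intro t
    refine reach_closed (S := {s | s = v ∨ s = a ∨ s = b ∨ s = c}) ?_
      (hG.preconnected v t) (Or.inl rfl)
    intro u hu w' hadj
    have h6 := memlist s(u, w') (G.mem_edgeSet.2 hadj) u (Sym2.mem_mk_left u w') hu
    simp only [Sym2.eq_iff] at h6
    simp only [Set.mem_setOf_eq]
    rcases h6 with (⟨_,rfl⟩|⟨_,rfl⟩)|(⟨_,rfl⟩|⟨_,rfl⟩)|(⟨_,rfl⟩|⟨_,rfl⟩)|(⟨_,rfl⟩|⟨_,rfl⟩)|
      (⟨_,rfl⟩|⟨_,rfl⟩)|(⟨_,rfl⟩|⟨_,rfl⟩) <;> simp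
  -- edge characterization of G
  have F4 : ∀ e : G.edgeSet,
      (e : Sym2 V) = s(v,a) ∨ (e : Sym2 V) = s(v,b) ∨ (e : Sym2 V) = s(v,c) ∨
      (e : Sym2 V) = s(a,b) ∨ (e : Sym2 V) = s(b,c) ∨ (e : Sym2 V) = s(a,c) := by
    intro e
    obtain ⟨t1, t2, ht⟩ := sym2_exists_rep (e : Sym2 V)
    exact memlist (e : Sym2 V) e.2 t1 (by rw [ht]; simp) (hVchar t1)
  -- edge characterization of H
  have Hchar : ∀ f : H.edgeSet,
      ((f : Sym2 W) = s(x,y) ∨ (f : Sym2 W) = s(y,z) ∨ (f : Sym2 W) = s(x,z)) ∨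
      (∃ h : G.Adj a b, f = φ ⟨s(a,b), h⟩) ∨ (∃ h : G.Adj b c, f = φ ⟨s(b,c), h⟩) ∨
      (∃ h : G.Adj a c, f = φ ⟨s(a,c), h⟩) := by
    intro f
    rcases F4 (φ.symm f) with h | h | h | h | h | h
    · left; left
      have he : φ.symm f = e0 := Subtype.ext (by rw [h, ← hsa])
      have : f = φ e0 := by rw [← he, φ.apply_symm_apply]
      rw [this]; exact hf0
    · left; right; left
      have he : φ.symm f = e1 := Subtype.ext (by rw [h, ← hsb])
      have : f = φ e1 := by rw [← he, φ.apply_symm_apply]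
      rw [this]; exact hf1
    · left; right; right
      have he : φ.symm f = e2 := Subtype.ext (by rw [h, ← hsc])
      have : f = φ e2 := by rw [← he, φ.apply_symm_apply]
      rw [this]; exact hf2
    · right; left
      have hadj : G.Adj a b := G.mem_edgeSet.1 (h ▸ (φ.symm f).2)
      exact ⟨hadj, by rw [← φ.apply_symm_apply f, (Subtype.ext h :
        φ.symm f = ⟨s(a,b), G.mem_edgeSet.2 hadj⟩)]⟩
    · right; right; left
      have hadj : G.Adj b c := G.mem_edgeSet.1 (h ▸ (φ.symm f).2)
      exact ⟨hadj, by rw [← φ.apply_symm_apply f, (Subtype.ext h :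
        φ.symm f = ⟨s(b,c), G.mem_edgeSet.2 hadj⟩)]⟩
    · right; right; right
      have hadj : G.Adj a c := G.mem_edgeSet.1 (h ▸ (φ.symm f).2)
      exact ⟨hadj, by rw [← φ.apply_symm_apply f, (Subtype.ext h :
        φ.symm f = ⟨s(a,c), G.mem_edgeSet.2 hadj⟩)]⟩
  -- images of pendant (leaf-leaf) edges
  have pend_ab : ∀ h : G.Adj a b,
      y ∈ ((φ ⟨s(a,b), G.mem_edgeSet.2 h⟩ : H.edgeSet) : Sym2 W) ∧
      x ∉ ((φ ⟨s(a,b), G.mem_edgeSet.2 h⟩ : H.edgeSet) : Sym2 W) ∧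
      z ∉ ((φ ⟨s(a,b), G.mem_edgeSet.2 h⟩ : H.edgeSet) : Sym2 W) := by
    intro h
    have hval : ((⟨s(a,b), G.mem_edgeSet.2 h⟩ : G.edgeSet) : Sym2 V) = s(a,b) := rfl
    have hne2 : (⟨s(a,b), G.mem_edgeSet.2 h⟩ : G.edgeSet) ≠ e2 := by
      intro hh
      have hv2' := congrArg Subtype.val hh
      rw [hval, ← hsc] at hv2'
      rcases Sym2.eq_iff.1 hv2' with ⟨h1, _⟩ | ⟨h1, h2⟩
      exacts [hav h1, hbv h2]
    have hne0 : (⟨s(a,b), G.mem_edgeSet.2 h⟩ : G.edgeSet) ≠ e0 := by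
      intro hh
      have hv0' := congrArg Subtype.val hh
      rw [hval, ← hsa] at hv0'
      rcases Sym2.eq_iff.1 hv0' with ⟨h1, _⟩ | ⟨_, h2⟩
      exacts [hav h1, hbv h2]
    have hnadj : ¬ H.lineGraph.Adj (φ ⟨s(a,b), G.mem_edgeSet.2 h⟩) (φ e2) := by
      intro hA
      obtain ⟨_, t, ht_ab, ht_2⟩ := lineGraph_adj_iff_exists.1 (φ.map_rel_iff.1 hA)
      rw [hval, Sym2.mem_iff] at ht_ab
      rw [← hsc, Sym2.mem_iff] at ht_2
      rcases ht_ab with rfl | rfl <;> rcases ht_2 with h' | h'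
      exacts [hav h', hac h', hbv h', hbc h']
    have hfne2 : φ (⟨s(a,b), G.mem_edgeSet.2 h⟩ : G.edgeSet) ≠ φ e2 :=
      fun hh => hne2 (φ.injective hh)
    have hx_not : x ∉ ((φ ⟨s(a,b), G.mem_edgeSet.2 h⟩ : H.edgeSet) : Sym2 W) :=
      fun hx' => hnadj (lg_adj hfne2 hx' (by rw [hf2]; simp))
    have hz_not : z ∉ ((φ ⟨s(a,b), G.mem_edgeSet.2 h⟩ : H.edgeSet) : Sym2 W) :=
      fun hz' => hnadj (lg_adj hfne2 hz' (by rw [hf2]; simp))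
    refine ⟨?_, hx_not, hz_not⟩
    obtain ⟨_, t, ht_ab, ht_0⟩ := lineGraph_adj_iff_exists.1
      (map_lg_adj φ (lg_adj hne0 (by rw [hval]; simp) ha0))
    rw [hf0, Sym2.mem_iff] at ht_0
    rcases ht_0 with rfl | rfl
    exacts [absurd ht_ab hx_not, ht_ab]
  have pend_bc : ∀ h : G.Adj b c,
      z ∈ ((φ ⟨s(b,c), G.mem_edgeSet.2 h⟩ : H.edgeSet) : Sym2 W) ∧
      x ∉ ((φ ⟨s(b,c), G.mem_edgeSet.2 h⟩ : H.edgeSet) : Sym2 W) ∧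
      y ∉ ((φ ⟨s(b,c), G.mem_edgeSet.2 h⟩ : H.edgeSet) : Sym2 W) := by
    intro h
    have hval : ((⟨s(b,c), G.mem_edgeSet.2 h⟩ : G.edgeSet) : Sym2 V) = s(b,c) := rfl
    have hne0 : (⟨s(b,c), G.mem_edgeSet.2 h⟩ : G.edgeSet) ≠ e0 := by
      intro hh
      have hv0' := congrArg Subtype.val hh
      rw [hval, ← hsa] at hv0'
      rcases Sym2.eq_iff.1 hv0' with ⟨h1, _⟩ | ⟨_, h2⟩
      exacts [hbv h1, hcv h2]
    have hne1 : (⟨s(b,c), G.mem_edgeSet.2 h⟩ : G.edgeSet) ≠ e1 := by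
      intro hh
      have hv1' := congrArg Subtype.val hh
      rw [hval, ← hsb] at hv1'
      rcases Sym2.eq_iff.1 hv1' with ⟨h1, _⟩ | ⟨_, h2⟩
      exacts [hbv h1, hcv h2]
    have hnadj : ¬ H.lineGraph.Adj (φ ⟨s(b,c), G.mem_edgeSet.2 h⟩) (φ e0) := by
      intro hA
      obtain ⟨_, t, ht_bc, ht_0⟩ := lineGraph_adj_iff_exists.1 (φ.map_rel_iff.1 hA)
      rw [hval, Sym2.mem_iff] at ht_bc
      rw [← hsa, Sym2.mem_iff] at ht_0
      rcases ht_bc with rfl | rfl <;> rcases ht_0 with h' | h'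
      exacts [hbv h', (hab h'.symm), hcv h', (hac h'.symm)]
    have hfne0 : φ (⟨s(b,c), G.mem_edgeSet.2 h⟩ : G.edgeSet) ≠ φ e0 :=
      fun hh => hne0 (φ.injective hh)
    have hx_not : x ∉ ((φ ⟨s(b,c), G.mem_edgeSet.2 h⟩ : H.edgeSet) : Sym2 W) :=
      fun hx' => hnadj (lg_adj hfne0 hx' (by rw [hf0]; simp))
    have hy_not : y ∉ ((φ ⟨s(b,c), G.mem_edgeSet.2 h⟩ : H.edgeSet) : Sym2 W) :=
      fun hy' => hnadj (lg_adj hfne0 hy' (by rw [hf0]; simp))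
    refine ⟨?_, hx_not, hy_not⟩
    obtain ⟨_, t, ht_bc, ht_1⟩ := lineGraph_adj_iff_exists.1
      (map_lg_adj φ (lg_adj hne1 (by rw [hval]; simp) hb1))
    rw [hf1, Sym2.mem_iff] at ht_1
    rcases ht_1 with rfl | rfl
    exacts [absurd ht_bc hy_not, ht_bc]
  have pend_ac : ∀ h : G.Adj a c,
      x ∈ ((φ ⟨s(a,c), G.mem_edgeSet.2 h⟩ : H.edgeSet) : Sym2 W) ∧
      y ∉ ((φ ⟨s(a,c), G.mem_edgeSet.2 h⟩ : H.edgeSet) : Sym2 W) ∧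
      z ∉ ((φ ⟨s(a,c), G.mem_edgeSet.2 h⟩ : H.edgeSet) : Sym2 W) := by
    intro h
    have hval : ((⟨s(a,c), G.mem_edgeSet.2 h⟩ : G.edgeSet) : Sym2 V) = s(a,c) := rfl
    have hne0 : (⟨s(a,c), G.mem_edgeSet.2 h⟩ : G.edgeSet) ≠ e0 := by
      intro hh
      have hv0' := congrArg Subtype.val hh
      rw [hval, ← hsa] at hv0'
      rcases Sym2.eq_iff.1 hv0' with ⟨h1, _⟩ | ⟨_, h2⟩
      exacts [hav h1, hcv h2]
    have hne1 : (⟨s(a,c), G.mem_edgeSet.2 h⟩ : G.edgeSet) ≠ e1 := by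
      intro hh
      have hv1' := congrArg Subtype.val hh
      rw [hval, ← hsb] at hv1'
      rcases Sym2.eq_iff.1 hv1' with ⟨h1, _⟩ | ⟨_, h2⟩
      exacts [hav h1, hcv h2]
    have hnadj : ¬ H.lineGraph.Adj (φ ⟨s(a,c), G.mem_edgeSet.2 h⟩) (φ e1) := by
      intro hA
      obtain ⟨_, t, ht_ac, ht_1⟩ := lineGraph_adj_iff_exists.1 (φ.map_rel_iff.1 hA)
      rw [hval, Sym2.mem_iff] at ht_ac
      rw [← hsb, Sym2.mem_iff] at ht_1
      rcases ht_ac with rfl | rfl <;> rcases ht_1 with h' | h'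
      exacts [hav h', hab h', hcv h', (hbc h'.symm)]
    have hfne1 : φ (⟨s(a,c), G.mem_edgeSet.2 h⟩ : G.edgeSet) ≠ φ e1 :=
      fun hh => hne1 (φ.injective hh)
    have hy_not : y ∉ ((φ ⟨s(a,c), G.mem_edgeSet.2 h⟩ : H.edgeSet) : Sym2 W) :=
      fun hy' => hnadj (lg_adj hfne1 hy' (by rw [hf1]; simp))
    have hz_not : z ∉ ((φ ⟨s(a,c), G.mem_edgeSet.2 h⟩ : H.edgeSet) : Sym2 W) :=
      fun hz' => hnadj (lg_adj hfne1 hz' (by rw [hf1]; simp))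
    refine ⟨?_, hy_not, hz_not⟩
    obtain ⟨_, t, ht_ac, ht_0⟩ := lineGraph_adj_iff_exists.1
      (map_lg_adj φ (lg_adj hne0 (by rw [hval]; simp) ha0))
    rw [hf0, Sym2.mem_iff] at ht_0
    rcases ht_0 with rfl | rfl
    exacts [ht_ac, absurd ht_ac hy_not]
  -- universal adjacency characterizations
  have hGadj : ∀ t1 t2 : V, G.Adj t1 t2 ↔
      (s(t1,t2) = s(v,a) ∨ s(t1,t2) = s(v,b) ∨ s(t1,t2) = s(v,c) ∨
       (G.Adj a b ∧ s(t1,t2) = s(a,b)) ∨ (G.Adj b c ∧ s(t1,t2) = s(b,c)) ∨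
       (G.Adj a c ∧ s(t1,t2) = s(a,c))) := by
    intro t1 t2
    constructor
    · intro h
      rcases F4 ⟨s(t1,t2), G.mem_edgeSet.2 h⟩ with h'|h'|h'|h'|h'|h'
      · exact Or.inl h'
      · exact Or.inr (Or.inl h')
      · exact Or.inr (Or.inr (Or.inl h'))
      · exact Or.inr (Or.inr (Or.inr (Or.inl
          ⟨G.mem_edgeSet.1 (by rw [← h']; exact G.mem_edgeSet.2 h), h'⟩)))
      · exact Or.inr (Or.inr (Or.inr (Or.inr (Or.inl
          ⟨G.mem_edgeSet.1 (by rw [← h']; exact G.mem_edgeSet.2 h), h'⟩))))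
      · exact Or.inr (Or.inr (Or.inr (Or.inr (Or.inr
          ⟨G.mem_edgeSet.1 (by rw [← h']; exact G.mem_edgeSet.2 h), h'⟩))))
    · rintro (h|h|h|⟨ha',h⟩|⟨ha',h⟩|⟨ha',h⟩)
      · exact G.mem_edgeSet.1 (by rw [h, hsa]; exact e0.2)
      · exact G.mem_edgeSet.1 (by rw [h, hsb]; exact e1.2)
      · exact G.mem_edgeSet.1 (by rw [h, hsc]; exact e2.2)
      · exact G.mem_edgeSet.1 (by rw [h]; exact G.mem_edgeSet.2 ha')
      · exact G.mem_edgeSet.1 (by rw [h]; exact G.mem_edgeSet.2 ha')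
      · exact G.mem_edgeSet.1 (by rw [h]; exact G.mem_edgeSet.2 ha')
  have hHadjU : ∀ s1 s2 : W, H.Adj s1 s2 ↔
      (s(s1,s2) = s(x,y) ∨ s(s1,s2) = s(y,z) ∨ s(s1,s2) = s(x,z) ∨
       (∃ h : G.Adj a b, s(s1,s2) = ((φ ⟨s(a,b), G.mem_edgeSet.2 h⟩ : H.edgeSet) : Sym2 W)) ∨
       (∃ h : G.Adj b c, s(s1,s2) = ((φ ⟨s(b,c), G.mem_edgeSet.2 h⟩ : H.edgeSet) : Sym2 W)) ∨
       (∃ h : G.Adj a c, s(s1,s2) = ((φ ⟨s(a,c), G.mem_edgeSet.2 h⟩ : H.edgeSet) : Sym2 W))) := by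
    intro s1 s2
    constructor
    · intro h
      rcases Hchar ⟨s(s1,s2), H.mem_edgeSet.2 h⟩ with (h'|h'|h')|⟨ha',h'⟩|⟨ha',h'⟩|⟨ha',h'⟩
      · exact Or.inl h'
      · exact Or.inr (Or.inl h')
      · exact Or.inr (Or.inr (Or.inl h'))
      · exact Or.inr (Or.inr (Or.inr (Or.inl ⟨ha', congrArg Subtype.val h'⟩)))
      · exact Or.inr (Or.inr (Or.inr (Or.inr (Or.inl ⟨ha', congrArg Subtype.val h'⟩))))
      · exact Or.inr (Or.inr (Or.inr (Or.inr (Or.inr ⟨ha', congrArg Subtype.val h'⟩))))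
    · rintro (h|h|h|⟨ha',h⟩|⟨ha',h⟩|⟨ha',h⟩)
      · exact H.mem_edgeSet.1 (by rw [h, ← hf0]; exact (φ e0).2)
      · exact H.mem_edgeSet.1 (by rw [h, ← hf1]; exact (φ e1).2)
      · exact H.mem_edgeSet.1 (by rw [h, ← hf2]; exact (φ e2).2)
      · exact H.mem_edgeSet.1 (by rw [h]; exact (φ ⟨s(a,b), G.mem_edgeSet.2 ha'⟩).2)
      · exact H.mem_edgeSet.1 (by rw [h]; exact (φ ⟨s(b,c), G.mem_edgeSet.2 ha'⟩).2)
      · exact H.mem_edgeSet.1 (by rw [h]; exact (φ ⟨s(a,c), G.mem_edgeSet.2 ha'⟩).2)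
  by_cases Gab : G.Adj a b
  · by_cases Gbc : G.Adj b c
    · by_cases Gac : G.Adj a c
      · -- all three
        left
        obtain ⟨hf1_ab, hf2_ab, hf3_ab⟩ := pend_ab Gab
        set p := Sym2.Mem.other hf1_ab with hp_def
        have hpF_ab : p ∈ ((φ ⟨s(a,b), G.mem_edgeSet.2 Gab⟩ : H.edgeSet) : Sym2 W) :=
          Sym2.other_mem hf1_ab
        have hsp_ab : s(y, p) = ((φ ⟨s(a,b), G.mem_edgeSet.2 Gab⟩ : H.edgeSet) : Sym2 W) :=
          Sym2.other_spec hf1_ab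
        have hpny : p ≠ y := Sym2.other_ne
          (H.not_isDiag_of_mem_edgeSet (φ ⟨s(a,b), G.mem_edgeSet.2 Gab⟩).2) hf1_ab
        have hpnx : p ≠ x := fun hh => hf2_ab (hh ▸ hpF_ab)
        have hpnz : p ≠ z := fun hh => hf3_ab (hh ▸ hpF_ab)
        obtain ⟨hf1_bc, hf2_bc, hf3_bc⟩ := pend_bc Gbc
        have hnee_bc : (⟨s(a,b), G.mem_edgeSet.2 Gab⟩ : G.edgeSet) ≠
            ⟨s(b,c), G.mem_edgeSet.2 Gbc⟩ := by
          intro hh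
          have hvv := congrArg Subtype.val hh
          rcases Sym2.eq_iff.1 hvv with ⟨h1, h2⟩ | ⟨h1, h2⟩
          exacts [hab h1, hac h1]
        obtain ⟨_, t, htP_bc, hte_bc⟩ := lineGraph_adj_iff_exists.1 (map_lg_adj φ
          (lg_adj hnee_bc (Sym2.mem_mk_right a b) (Sym2.mem_mk_left b c)))
        have hpe_bc : p ∈ ((φ ⟨s(b,c), G.mem_edgeSet.2 Gbc⟩ : H.edgeSet) : Sym2 W) := by
          rw [← hsp_ab, Sym2.mem_iff] at htP_bc
          rcases htP_bc with rfl | rfl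
          · exact absurd hte_bc hf3_bc
          · exact hte_bc
        have hsp_bc : s(z, p) = ((φ ⟨s(b,c), G.mem_edgeSet.2 Gbc⟩ : H.edgeSet) : Sym2 W) :=
          (sym2_eq_of_mem (Ne.symm hpnz) hf1_bc hpe_bc).symm
        obtain ⟨hf1_ac, hf2_ac, hf3_ac⟩ := pend_ac Gac
        have hnee_ac : (⟨s(a,b), G.mem_edgeSet.2 Gab⟩ : G.edgeSet) ≠
            ⟨s(a,c), G.mem_edgeSet.2 Gac⟩ := by
          intro hh
          have hvv := congrArg Subtype.val hh
          rcases Sym2.eq_iff.1 hvv with ⟨h1, h2⟩ | ⟨h1, h2⟩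
          exacts [hbc h2, hac h1]
        obtain ⟨_, t, htP_ac, hte_ac⟩ := lineGraph_adj_iff_exists.1 (map_lg_adj φ
          (lg_adj hnee_ac (Sym2.mem_mk_left a b) (Sym2.mem_mk_left a c)))
        have hpe_ac : p ∈ ((φ ⟨s(a,c), G.mem_edgeSet.2 Gac⟩ : H.edgeSet) : Sym2 W) := by
          rw [← hsp_ab, Sym2.mem_iff] at htP_ac
          rcases htP_ac with rfl | rfl
          · exact absurd hte_ac hf2_ac
          · exact hte_ac
        have hsp_ac : s(x, p) = ((φ ⟨s(a,c), G.mem_edgeSet.2 Gac⟩ : H.edgeSet) : Sym2 W) :=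
          (sym2_eq_of_mem (Ne.symm hpnx) hf1_ac hpe_ac).symm
        have hHadj : ∀ s1 s2 : W, H.Adj s1 s2 ↔
            (s(s1,s2) = s(x,y) ∨ s(s1,s2) = s(y,z) ∨ s(s1,s2) = s(x,z) ∨ s(s1,s2) = s(y, p) ∨ s(s1,s2) = s(z, p) ∨ s(s1,s2) = s(x, p)) := by
          intro s1 s2
          rw [hHadjU s1 s2]
          constructor
          · rintro (h1|h2|h3|⟨hxab,hhab⟩|⟨hxbc,hhbc⟩|⟨hxac,hhac⟩)
            exacts [Or.inl h1, Or.inr (Or.inl h2), Or.inr (Or.inr (Or.inl h3)), Or.inr (Or.inr (Or.inr (Or.inl (hhab.trans hsp_ab.symm)))), Or.inr (Or.inr (Or.inr (Or.inr (Or.inl (hhbc.trans hsp_bc.symm))))), Or.inr (Or.inr (Or.inr (Or.inr (Or.inr ((hhac.trans hsp_ac.symm))))))]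
          · rintro (g0|g1|g2|g3|g4|g5)
            exacts [Or.inl g0, Or.inr (Or.inl g1), Or.inr (Or.inr (Or.inl g2)), Or.inr (Or.inr (Or.inr (Or.inl (⟨Gab, g3.trans hsp_ab⟩)))), Or.inr (Or.inr (Or.inr (Or.inr (Or.inl (⟨Gbc, g4.trans hsp_bc⟩))))), Or.inr (Or.inr (Or.inr (Or.inr (Or.inr (⟨Gac, g5.trans hsp_ac⟩)))))]
        have hGadj' : ∀ t1 t2 : V, G.Adj t1 t2 ↔
            (s(t1,t2) = s(v,a) ∨ s(t1,t2) = s(v,b) ∨ s(t1,t2) = s(v,c) ∨ s(t1,t2) = s(a,b) ∨ s(t1,t2) = s(b,c) ∨ s(t1,t2) = s(a,c)) := by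
          intro t1 t2
          rw [hGadj t1 t2]
          constructor
          · rintro (h1|h2|h3|⟨hxab,hhab⟩|⟨hxbc,hhbc⟩|⟨hxac,hhac⟩)
            exacts [Or.inl h1, Or.inr (Or.inl h2), Or.inr (Or.inr (Or.inl h3)), Or.inr (Or.inr (Or.inr (Or.inl hhab))), Or.inr (Or.inr (Or.inr (Or.inr (Or.inl hhbc)))), Or.inr (Or.inr (Or.inr (Or.inr (Or.inr (hhac)))))]
          · rintro (g0|g1|g2|g3|g4|g5)
            exacts [Or.inl g0, Or.inr (Or.inl g1), Or.inr (Or.inr (Or.inl g2)), Or.inr (Or.inr (Or.inr (Or.inl (⟨Gab, g3⟩)))), Or.inr (Or.inr (Or.inr (Or.inr (Or.inl (⟨Gbc, g4⟩))))), Or.inr (Or.inr (Or.inr (Or.inr (Or.inr (⟨Gac, g5⟩)))))]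
        have hWchar : ∀ t : W, t = x ∨ t = y ∨ t = z ∨ t = p := by
          intro t
          obtain ⟨f, htf⟩ := exists_edge_mem hH (φ e0) t
          rcases Hchar f with (h'|h'|h')|⟨h',hf'⟩|⟨h',hf'⟩|⟨h',hf'⟩
          · rw [h', Sym2.mem_iff] at htf
            rcases htf with rfl | rfl
            exacts [Or.inl rfl, Or.inr (Or.inl rfl)]
          · rw [h', Sym2.mem_iff] at htf
            rcases htf with rfl | rfl
            exacts [Or.inr (Or.inl rfl), Or.inr (Or.inr (Or.inl rfl))]
          · rw [h', Sym2.mem_iff] at htf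
            rcases htf with rfl | rfl
            exacts [Or.inl rfl, Or.inr (Or.inr (Or.inl rfl))]
          · have htf' : t ∈ ((φ ⟨s(a,b), G.mem_edgeSet.2 Gab⟩ : H.edgeSet) : Sym2 W) :=
              hf' ▸ htf
            rw [← hsp_ab, Sym2.mem_iff] at htf'
            rcases htf' with rfl | rfl
            exacts [Or.inr (Or.inl rfl), Or.inr (Or.inr (Or.inr rfl))]
          · have htf' : t ∈ ((φ ⟨s(b,c), G.mem_edgeSet.2 Gbc⟩ : H.edgeSet) : Sym2 W) :=
              hf' ▸ htf
            rw [← hsp_bc, Sym2.mem_iff] at htf'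
            rcases htf' with rfl | rfl
            exacts [Or.inr (Or.inr (Or.inl rfl)), Or.inr (Or.inr (Or.inr rfl))]
          · have htf' : t ∈ ((φ ⟨s(a,c), G.mem_edgeSet.2 Gac⟩ : H.edgeSet) : Sym2 W) :=
              hf' ▸ htf
            rw [← hsp_ac, Sym2.mem_iff] at htf'
            rcases htf' with rfl | rfl
            exacts [Or.inl rfl, Or.inr (Or.inr (Or.inr rfl))]
        refine build_iso ![v,a,b,c] ![y,x,z,p] ?_ ?_ ?_ ?_ ?_
        · intro u
          rcases hVchar u with rfl|rfl|rfl|rfl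
          exacts [⟨0,rfl⟩,⟨1,rfl⟩,⟨2,rfl⟩,⟨3,rfl⟩]
        · intro u
          rcases hWchar u with rfl|rfl|rfl|rfl
          exacts [⟨1,rfl⟩,⟨0,rfl⟩,⟨2,rfl⟩,⟨3,rfl⟩]
        · intro i j h
          fin_cases i <;> fin_cases j <;> revert h <;>
            simp [hav, hbv, hcv, hab, hbc, hac, Ne.symm hav, Ne.symm hbv, Ne.symm hcv, Ne.symm hab, Ne.symm hbc, Ne.symm hac]
        · intro i j h
          fin_cases i <;> fin_cases j <;> revert h <;>
            simp [hxy, hyz, hxz, hpnx, hpny, hpnz, Ne.symm hxy, Ne.symm hyz, Ne.symm hxz, Ne.symm hpnx, Ne.symm hpny, Ne.symm hpnz]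
        · intro i j
          fin_cases i <;> fin_cases j <;>
            simp [hGadj', hHadj, Sym2.eq_iff, hav, hbv, hcv, hab, hbc, hac, Ne.symm hav, Ne.symm hbv, Ne.symm hcv, Ne.symm hab, Ne.symm hbc, Ne.symm hac, hxy, hyz, hxz, hpnx, hpny, hpnz, Ne.symm hxy, Ne.symm hyz, Ne.symm hxz, Ne.symm hpnx, Ne.symm hpny, Ne.symm hpnz]
      · -- ab, bc
        left
        obtain ⟨hf1_ab, hf2_ab, hf3_ab⟩ := pend_ab Gab
        set p := Sym2.Mem.other hf1_ab with hp_def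
        have hpF_ab : p ∈ ((φ ⟨s(a,b), G.mem_edgeSet.2 Gab⟩ : H.edgeSet) : Sym2 W) :=
          Sym2.other_mem hf1_ab
        have hsp_ab : s(y, p) = ((φ ⟨s(a,b), G.mem_edgeSet.2 Gab⟩ : H.edgeSet) : Sym2 W) :=
          Sym2.other_spec hf1_ab
        have hpny : p ≠ y := Sym2.other_ne
          (H.not_isDiag_of_mem_edgeSet (φ ⟨s(a,b), G.mem_edgeSet.2 Gab⟩).2) hf1_ab
        have hpnx : p ≠ x := fun hh => hf2_ab (hh ▸ hpF_ab)
        have hpnz : p ≠ z := fun hh => hf3_ab (hh ▸ hpF_ab)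
        obtain ⟨hf1_bc, hf2_bc, hf3_bc⟩ := pend_bc Gbc
        have hnee_bc : (⟨s(a,b), G.mem_edgeSet.2 Gab⟩ : G.edgeSet) ≠
            ⟨s(b,c), G.mem_edgeSet.2 Gbc⟩ := by
          intro hh
          have hvv := congrArg Subtype.val hh
          rcases Sym2.eq_iff.1 hvv with ⟨h1, h2⟩ | ⟨h1, h2⟩
          exacts [hab h1, hac h1]
        obtain ⟨_, t, htP_bc, hte_bc⟩ := lineGraph_adj_iff_exists.1 (map_lg_adj φ
          (lg_adj hnee_bc (Sym2.mem_mk_right a b) (Sym2.mem_mk_left b c)))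
        have hpe_bc : p ∈ ((φ ⟨s(b,c), G.mem_edgeSet.2 Gbc⟩ : H.edgeSet) : Sym2 W) := by
          rw [← hsp_ab, Sym2.mem_iff] at htP_bc
          rcases htP_bc with rfl | rfl
          · exact absurd hte_bc hf3_bc
          · exact hte_bc
        have hsp_bc : s(z, p) = ((φ ⟨s(b,c), G.mem_edgeSet.2 Gbc⟩ : H.edgeSet) : Sym2 W) :=
          (sym2_eq_of_mem (Ne.symm hpnz) hf1_bc hpe_bc).symm
        have hHadj : ∀ s1 s2 : W, H.Adj s1 s2 ↔
            (s(s1,s2) = s(x,y) ∨ s(s1,s2) = s(y,z) ∨ s(s1,s2) = s(x,z) ∨ s(s1,s2) = s(y, p) ∨ s(s1,s2) = s(z, p)) := by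
          intro s1 s2
          rw [hHadjU s1 s2]
          constructor
          · rintro (h1|h2|h3|⟨hxab,hhab⟩|⟨hxbc,hhbc⟩|⟨hxac,hhac⟩)
            exacts [Or.inl h1, Or.inr (Or.inl h2), Or.inr (Or.inr (Or.inl h3)), Or.inr (Or.inr (Or.inr (Or.inl (hhab.trans hsp_ab.symm)))), Or.inr (Or.inr (Or.inr (Or.inr ((hhbc.trans hsp_bc.symm))))), absurd hxac Gac]
          · rintro (g0|g1|g2|g3|g4)
            exacts [Or.inl g0, Or.inr (Or.inl g1), Or.inr (Or.inr (Or.inl g2)), Or.inr (Or.inr (Or.inr (Or.inl (⟨Gab, g3.trans hsp_ab⟩)))), Or.inr (Or.inr (Or.inr (Or.inr (Or.inl (⟨Gbc, g4.trans hsp_bc⟩)))))]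
        have hGadj' : ∀ t1 t2 : V, G.Adj t1 t2 ↔
            (s(t1,t2) = s(v,a) ∨ s(t1,t2) = s(v,b) ∨ s(t1,t2) = s(v,c) ∨ s(t1,t2) = s(a,b) ∨ s(t1,t2) = s(b,c)) := by
          intro t1 t2
          rw [hGadj t1 t2]
          constructor
          · rintro (h1|h2|h3|⟨hxab,hhab⟩|⟨hxbc,hhbc⟩|⟨hxac,hhac⟩)
            exacts [Or.inl h1, Or.inr (Or.inl h2), Or.inr (Or.inr (Or.inl h3)), Or.inr (Or.inr (Or.inr (Or.inl hhab))), Or.inr (Or.inr (Or.inr (Or.inr (hhbc)))), absurd hxac Gac]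
          · rintro (g0|g1|g2|g3|g4)
            exacts [Or.inl g0, Or.inr (Or.inl g1), Or.inr (Or.inr (Or.inl g2)), Or.inr (Or.inr (Or.inr (Or.inl (⟨Gab, g3⟩)))), Or.inr (Or.inr (Or.inr (Or.inr (Or.inl (⟨Gbc, g4⟩)))))]
        have hWchar : ∀ t : W, t = x ∨ t = y ∨ t = z ∨ t = p := by
          intro t
          obtain ⟨f, htf⟩ := exists_edge_mem hH (φ e0) t
          rcases Hchar f with (h'|h'|h')|⟨h',hf'⟩|⟨h',hf'⟩|⟨h',hf'⟩
          · rw [h', Sym2.mem_iff] at htf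
            rcases htf with rfl | rfl
            exacts [Or.inl rfl, Or.inr (Or.inl rfl)]
          · rw [h', Sym2.mem_iff] at htf
            rcases htf with rfl | rfl
            exacts [Or.inr (Or.inl rfl), Or.inr (Or.inr (Or.inl rfl))]
          · rw [h', Sym2.mem_iff] at htf
            rcases htf with rfl | rfl
            exacts [Or.inl rfl, Or.inr (Or.inr (Or.inl rfl))]
          · have htf' : t ∈ ((φ ⟨s(a,b), G.mem_edgeSet.2 Gab⟩ : H.edgeSet) : Sym2 W) :=
              hf' ▸ htf
            rw [← hsp_ab, Sym2.mem_iff] at htf'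
            rcases htf' with rfl | rfl
            exacts [Or.inr (Or.inl rfl), Or.inr (Or.inr (Or.inr rfl))]
          · have htf' : t ∈ ((φ ⟨s(b,c), G.mem_edgeSet.2 Gbc⟩ : H.edgeSet) : Sym2 W) :=
              hf' ▸ htf
            rw [← hsp_bc, Sym2.mem_iff] at htf'
            rcases htf' with rfl | rfl
            exacts [Or.inr (Or.inr (Or.inl rfl)), Or.inr (Or.inr (Or.inr rfl))]
          · exact absurd h' Gac
        refine build_iso ![v,a,b,c] ![y,x,z,p] ?_ ?_ ?_ ?_ ?_
        · intro u
          rcases hVchar u with rfl|rfl|rfl|rfl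
          exacts [⟨0,rfl⟩,⟨1,rfl⟩,⟨2,rfl⟩,⟨3,rfl⟩]
        · intro u
          rcases hWchar u with rfl|rfl|rfl|rfl
          exacts [⟨1,rfl⟩,⟨0,rfl⟩,⟨2,rfl⟩,⟨3,rfl⟩]
        · intro i j h
          fin_cases i <;> fin_cases j <;> revert h <;>
            simp [hav, hbv, hcv, hab, hbc, hac, Ne.symm hav, Ne.symm hbv, Ne.symm hcv, Ne.symm hab, Ne.symm hbc, Ne.symm hac]
        · intro i j h
          fin_cases i <;> fin_cases j <;> revert h <;>
            simp [hxy, hyz, hxz, hpnx, hpny, hpnz, Ne.symm hxy, Ne.symm hyz, Ne.symm hxz, Ne.symm hpnx, Ne.symm hpny, Ne.symm hpnz]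
        · intro i j
          fin_cases i <;> fin_cases j <;>
            simp [hGadj', hHadj, Sym2.eq_iff, hav, hbv, hcv, hab, hbc, hac, Ne.symm hav, Ne.symm hbv, Ne.symm hcv, Ne.symm hab, Ne.symm hbc, Ne.symm hac, hxy, hyz, hxz, hpnx, hpny, hpnz, Ne.symm hxy, Ne.symm hyz, Ne.symm hxz, Ne.symm hpnx, Ne.symm hpny, Ne.symm hpnz]
    · by_cases Gac : G.Adj a c
      · -- ab, ac
        left
        obtain ⟨hf1_ab, hf2_ab, hf3_ab⟩ := pend_ab Gab
        set p := Sym2.Mem.other hf1_ab with hp_def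
        have hpF_ab : p ∈ ((φ ⟨s(a,b), G.mem_edgeSet.2 Gab⟩ : H.edgeSet) : Sym2 W) :=
          Sym2.other_mem hf1_ab
        have hsp_ab : s(y, p) = ((φ ⟨s(a,b), G.mem_edgeSet.2 Gab⟩ : H.edgeSet) : Sym2 W) :=
          Sym2.other_spec hf1_ab
        have hpny : p ≠ y := Sym2.other_ne
          (H.not_isDiag_of_mem_edgeSet (φ ⟨s(a,b), G.mem_edgeSet.2 Gab⟩).2) hf1_ab
        have hpnx : p ≠ x := fun hh => hf2_ab (hh ▸ hpF_ab)
        have hpnz : p ≠ z := fun hh => hf3_ab (hh ▸ hpF_ab)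
        obtain ⟨hf1_ac, hf2_ac, hf3_ac⟩ := pend_ac Gac
        have hnee_ac : (⟨s(a,b), G.mem_edgeSet.2 Gab⟩ : G.edgeSet) ≠
            ⟨s(a,c), G.mem_edgeSet.2 Gac⟩ := by
          intro hh
          have hvv := congrArg Subtype.val hh
          rcases Sym2.eq_iff.1 hvv with ⟨h1, h2⟩ | ⟨h1, h2⟩
          exacts [hbc h2, hac h1]
        obtain ⟨_, t, htP_ac, hte_ac⟩ := lineGraph_adj_iff_exists.1 (map_lg_adj φ
          (lg_adj hnee_ac (Sym2.mem_mk_left a b) (Sym2.mem_mk_left a c)))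
        have hpe_ac : p ∈ ((φ ⟨s(a,c), G.mem_edgeSet.2 Gac⟩ : H.edgeSet) : Sym2 W) := by
          rw [← hsp_ab, Sym2.mem_iff] at htP_ac
          rcases htP_ac with rfl | rfl
          · exact absurd hte_ac hf2_ac
          · exact hte_ac
        have hsp_ac : s(x, p) = ((φ ⟨s(a,c), G.mem_edgeSet.2 Gac⟩ : H.edgeSet) : Sym2 W) :=
          (sym2_eq_of_mem (Ne.symm hpnx) hf1_ac hpe_ac).symm
        have hHadj : ∀ s1 s2 : W, H.Adj s1 s2 ↔
            (s(s1,s2) = s(x,y) ∨ s(s1,s2) = s(y,z) ∨ s(s1,s2) = s(x,z) ∨ s(s1,s2) = s(y, p) ∨ s(s1,s2) = s(x, p)) := by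
          intro s1 s2
          rw [hHadjU s1 s2]
          constructor
          · rintro (h1|h2|h3|⟨hxab,hhab⟩|⟨hxbc,hhbc⟩|⟨hxac,hhac⟩)
            exacts [Or.inl h1, Or.inr (Or.inl h2), Or.inr (Or.inr (Or.inl h3)), Or.inr (Or.inr (Or.inr (Or.inl (hhab.trans hsp_ab.symm)))), absurd hxbc Gbc, Or.inr (Or.inr (Or.inr (Or.inr ((hhac.trans hsp_ac.symm)))))]
          · rintro (g0|g1|g2|g3|g4)
            exacts [Or.inl g0, Or.inr (Or.inl g1), Or.inr (Or.inr (Or.inl g2)), Or.inr (Or.inr (Or.inr (Or.inl (⟨Gab, g3.trans hsp_ab⟩)))), Or.inr (Or.inr (Or.inr (Or.inr (Or.inr (⟨Gac, g4.trans hsp_ac⟩)))))]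
        have hGadj' : ∀ t1 t2 : V, G.Adj t1 t2 ↔
            (s(t1,t2) = s(v,a) ∨ s(t1,t2) = s(v,b) ∨ s(t1,t2) = s(v,c) ∨ s(t1,t2) = s(a,b) ∨ s(t1,t2) = s(a,c)) := by
          intro t1 t2
          rw [hGadj t1 t2]
          constructor
          · rintro (h1|h2|h3|⟨hxab,hhab⟩|⟨hxbc,hhbc⟩|⟨hxac,hhac⟩)
            exacts [Or.inl h1, Or.inr (Or.inl h2), Or.inr (Or.inr (Or.inl h3)), Or.inr (Or.inr (Or.inr (Or.inl hhab))), absurd hxbc Gbc, Or.inr (Or.inr (Or.inr (Or.inr (hhac))))]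
          · rintro (g0|g1|g2|g3|g4)
            exacts [Or.inl g0, Or.inr (Or.inl g1), Or.inr (Or.inr (Or.inl g2)), Or.inr (Or.inr (Or.inr (Or.inl (⟨Gab, g3⟩)))), Or.inr (Or.inr (Or.inr (Or.inr (Or.inr (⟨Gac, g4⟩)))))]
        have hWchar : ∀ t : W, t = x ∨ t = y ∨ t = z ∨ t = p := by
          intro t
          obtain ⟨f, htf⟩ := exists_edge_mem hH (φ e0) t
          rcases Hchar f with (h'|h'|h')|⟨h',hf'⟩|⟨h',hf'⟩|⟨h',hf'⟩
          · rw [h', Sym2.mem_iff] at htf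
            rcases htf with rfl | rfl
            exacts [Or.inl rfl, Or.inr (Or.inl rfl)]
          · rw [h', Sym2.mem_iff] at htf
            rcases htf with rfl | rfl
            exacts [Or.inr (Or.inl rfl), Or.inr (Or.inr (Or.inl rfl))]
          · rw [h', Sym2.mem_iff] at htf
            rcases htf with rfl | rfl
            exacts [Or.inl rfl, Or.inr (Or.inr (Or.inl rfl))]
          · have htf' : t ∈ ((φ ⟨s(a,b), G.mem_edgeSet.2 Gab⟩ : H.edgeSet) : Sym2 W) :=
              hf' ▸ htf
            rw [← hsp_ab, Sym2.mem_iff] at htf'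
            rcases htf' with rfl | rfl
            exacts [Or.inr (Or.inl rfl), Or.inr (Or.inr (Or.inr rfl))]
          · exact absurd h' Gbc
          · have htf' : t ∈ ((φ ⟨s(a,c), G.mem_edgeSet.2 Gac⟩ : H.edgeSet) : Sym2 W) :=
              hf' ▸ htf
            rw [← hsp_ac, Sym2.mem_iff] at htf'
            rcases htf' with rfl | rfl
            exacts [Or.inl rfl, Or.inr (Or.inr (Or.inr rfl))]
        refine build_iso ![v,a,b,c] ![y,x,z,p] ?_ ?_ ?_ ?_ ?_
        · intro u
          rcases hVchar u with rfl|rfl|rfl|rfl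
          exacts [⟨0,rfl⟩,⟨1,rfl⟩,⟨2,rfl⟩,⟨3,rfl⟩]
        · intro u
          rcases hWchar u with rfl|rfl|rfl|rfl
          exacts [⟨1,rfl⟩,⟨0,rfl⟩,⟨2,rfl⟩,⟨3,rfl⟩]
        · intro i j h
          fin_cases i <;> fin_cases j <;> revert h <;>
            simp [hav, hbv, hcv, hab, hbc, hac, Ne.symm hav, Ne.symm hbv, Ne.symm hcv, Ne.symm hab, Ne.symm hbc, Ne.symm hac]
        · intro i j h
          fin_cases i <;> fin_cases j <;> revert h <;>
            simp [hxy, hyz, hxz, hpnx, hpny, hpnz, Ne.symm hxy, Ne.symm hyz, Ne.symm hxz, Ne.symm hpnx, Ne.symm hpny, Ne.symm hpnz]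
        · intro i j
          fin_cases i <;> fin_cases j <;>
            simp [hGadj', hHadj, Sym2.eq_iff, hav, hbv, hcv, hab, hbc, hac, Ne.symm hav, Ne.symm hbv, Ne.symm hcv, Ne.symm hab, Ne.symm hbc, Ne.symm hac, hxy, hyz, hxz, hpnx, hpny, hpnz, Ne.symm hxy, Ne.symm hyz, Ne.symm hxz, Ne.symm hpnx, Ne.symm hpny, Ne.symm hpnz]
      · -- only ab
        left
        obtain ⟨hyF, hxF, hzF⟩ := pend_ab Gab
        set p := Sym2.Mem.other hyF with hp_def
        have hpF : p ∈ ((φ ⟨s(a,b), G.mem_edgeSet.2 Gab⟩ : H.edgeSet) : Sym2 W) :=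
          Sym2.other_mem hyF
        have hsp : s(y, p) = ((φ ⟨s(a,b), G.mem_edgeSet.2 Gab⟩ : H.edgeSet) : Sym2 W) :=
          Sym2.other_spec hyF
        have hpy : p ≠ y := Sym2.other_ne
          (H.not_isDiag_of_mem_edgeSet (φ ⟨s(a,b), G.mem_edgeSet.2 Gab⟩).2) hyF
        have hpx : p ≠ x := fun hh => hxF (hh ▸ hpF)
        have hpz : p ≠ z := fun hh => hzF (hh ▸ hpF)
        have hHadj : ∀ s1 s2 : W, H.Adj s1 s2 ↔
            (s(s1,s2) = s(x,y) ∨ s(s1,s2) = s(y,z) ∨ s(s1,s2) = s(x,z) ∨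
             s(s1,s2) = s(y,p)) := by
          intro s1 s2
          rw [hHadjU s1 s2]
          constructor
          · rintro (h|h|h|⟨h',hh⟩|⟨h',hh⟩|⟨h',hh⟩)
            exacts [Or.inl h, Or.inr (Or.inl h), Or.inr (Or.inr (Or.inl h)),
              Or.inr (Or.inr (Or.inr (hh.trans hsp.symm))),
              absurd h' Gbc, absurd h' Gac]
          · rintro (h|h|h|h)
            exacts [Or.inl h, Or.inr (Or.inl h), Or.inr (Or.inr (Or.inl h)),
              Or.inr (Or.inr (Or.inr (Or.inl ⟨Gab, h.trans hsp⟩)))]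
        have hGadj' : ∀ t1 t2 : V, G.Adj t1 t2 ↔
            (s(t1,t2) = s(v,a) ∨ s(t1,t2) = s(v,b) ∨ s(t1,t2) = s(v,c) ∨
             s(t1,t2) = s(a,b)) := by
          intro t1 t2
          rw [hGadj t1 t2]
          constructor
          · rintro (h|h|h|⟨_,h⟩|⟨h',_⟩|⟨h',_⟩)
            exacts [Or.inl h, Or.inr (Or.inl h), Or.inr (Or.inr (Or.inl h)),
              Or.inr (Or.inr (Or.inr h)), absurd h' Gbc, absurd h' Gac]
          · rintro (h|h|h|h)
            exacts [Or.inl h, Or.inr (Or.inl h), Or.inr (Or.inr (Or.inl h)),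
              Or.inr (Or.inr (Or.inr (Or.inl ⟨Gab, h⟩)))]
        have hWchar : ∀ t : W, t = x ∨ t = y ∨ t = z ∨ t = p := by
          intro t
          obtain ⟨f, htf⟩ := exists_edge_mem hH (φ e0) t
          rcases Hchar f with (h'|h'|h')|⟨h',hf'⟩|⟨h',hf'⟩|⟨h',hf'⟩
          · rw [h', Sym2.mem_iff] at htf
            rcases htf with rfl|rfl
            exacts [Or.inl rfl, Or.inr (Or.inl rfl)]
          · rw [h', Sym2.mem_iff] at htf
            rcases htf with rfl|rfl
            exacts [Or.inr (Or.inl rfl), Or.inr (Or.inr (Or.inl rfl))]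
          · rw [h', Sym2.mem_iff] at htf
            rcases htf with rfl|rfl
            exacts [Or.inl rfl, Or.inr (Or.inr (Or.inl rfl))]
          · have htf' : t ∈ ((φ ⟨s(a,b), G.mem_edgeSet.2 Gab⟩ : H.edgeSet) : Sym2 W) :=
              hf' ▸ htf
            rw [← hsp, Sym2.mem_iff] at htf'
            rcases htf' with rfl|rfl
            exacts [Or.inr (Or.inl rfl), Or.inr (Or.inr (Or.inr rfl))]
          · exact absurd h' Gbc
          · exact absurd h' Gac
        refine build_iso ![v,a,b,c] ![y,x,z,p] ?_ ?_ ?_ ?_ ?_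
        · intro u
          rcases hVchar u with rfl|rfl|rfl|rfl
          exacts [⟨0,rfl⟩,⟨1,rfl⟩,⟨2,rfl⟩,⟨3,rfl⟩]
        · intro u
          rcases hWchar u with rfl|rfl|rfl|rfl
          exacts [⟨1,rfl⟩,⟨0,rfl⟩,⟨2,rfl⟩,⟨3,rfl⟩]
        · intro i j h
          fin_cases i <;> fin_cases j <;> revert h <;>
            simp [hav, hbv, hcv, hab, hbc, hac,
              Ne.symm hav, Ne.symm hbv, Ne.symm hcv, Ne.symm hab, Ne.symm hbc, Ne.symm hac]
        · intro i j h
          fin_cases i <;> fin_cases j <;> revert h <;>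
            simp [hxy, hyz, hxz, hpx, hpy, hpz,
              Ne.symm hxy, Ne.symm hyz, Ne.symm hxz, Ne.symm hpx, Ne.symm hpy, Ne.symm hpz]
        · intro i j
          fin_cases i <;> fin_cases j <;>
            simp [hGadj', hHadj, Sym2.eq_iff, hav, hbv, hcv, hab, hbc, hac,
              Ne.symm hav, Ne.symm hbv, Ne.symm hcv, Ne.symm hab, Ne.symm hbc, Ne.symm hac,
              hxy, hyz, hxz, hpx, hpy, hpz,
              Ne.symm hxy, Ne.symm hyz, Ne.symm hxz, Ne.symm hpx, Ne.symm hpy, Ne.symm hpz]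
  · by_cases Gbc : G.Adj b c
    · by_cases Gac : G.Adj a c
      · -- bc, ac
        left
        obtain ⟨hf1_bc, hf2_bc, hf3_bc⟩ := pend_bc Gbc
        set p := Sym2.Mem.other hf1_bc with hp_def
        have hpF_bc : p ∈ ((φ ⟨s(b,c), G.mem_edgeSet.2 Gbc⟩ : H.edgeSet) : Sym2 W) :=
          Sym2.other_mem hf1_bc
        have hsp_bc : s(z, p) = ((φ ⟨s(b,c), G.mem_edgeSet.2 Gbc⟩ : H.edgeSet) : Sym2 W) :=
          Sym2.other_spec hf1_bc
        have hpnz : p ≠ z := Sym2.other_ne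
          (H.not_isDiag_of_mem_edgeSet (φ ⟨s(b,c), G.mem_edgeSet.2 Gbc⟩).2) hf1_bc
        have hpnx : p ≠ x := fun hh => hf2_bc (hh ▸ hpF_bc)
        have hpny : p ≠ y := fun hh => hf3_bc (hh ▸ hpF_bc)
        obtain ⟨hf1_ac, hf2_ac, hf3_ac⟩ := pend_ac Gac
        have hnee_ac : (⟨s(b,c), G.mem_edgeSet.2 Gbc⟩ : G.edgeSet) ≠
            ⟨s(a,c), G.mem_edgeSet.2 Gac⟩ := by
          intro hh
          have hvv := congrArg Subtype.val hh
          rcases Sym2.eq_iff.1 hvv with ⟨h1, h2⟩ | ⟨h1, h2⟩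
          exacts [hab h1.symm, hbc h1]
        obtain ⟨_, t, htP_ac, hte_ac⟩ := lineGraph_adj_iff_exists.1 (map_lg_adj φ
          (lg_adj hnee_ac (Sym2.mem_mk_right b c) (Sym2.mem_mk_right a c)))
        have hpe_ac : p ∈ ((φ ⟨s(a,c), G.mem_edgeSet.2 Gac⟩ : H.edgeSet) : Sym2 W) := by
          rw [← hsp_bc, Sym2.mem_iff] at htP_ac
          rcases htP_ac with rfl | rfl
          · exact absurd hte_ac hf3_ac
          · exact hte_ac
        have hsp_ac : s(x, p) = ((φ ⟨s(a,c), G.mem_edgeSet.2 Gac⟩ : H.edgeSet) : Sym2 W) :=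
          (sym2_eq_of_mem (Ne.symm hpnx) hf1_ac hpe_ac).symm
        have hHadj : ∀ s1 s2 : W, H.Adj s1 s2 ↔
            (s(s1,s2) = s(x,y) ∨ s(s1,s2) = s(y,z) ∨ s(s1,s2) = s(x,z) ∨ s(s1,s2) = s(z, p) ∨ s(s1,s2) = s(x, p)) := by
          intro s1 s2
          rw [hHadjU s1 s2]
          constructor
          · rintro (h1|h2|h3|⟨hxab,hhab⟩|⟨hxbc,hhbc⟩|⟨hxac,hhac⟩)
            exacts [Or.inl h1, Or.inr (Or.inl h2), Or.inr (Or.inr (Or.inl h3)), absurd hxab Gab, Or.inr (Or.inr (Or.inr (Or.inl (hhbc.trans hsp_bc.symm)))), Or.inr (Or.inr (Or.inr (Or.inr ((hhac.trans hsp_ac.symm)))))]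
          · rintro (g0|g1|g2|g3|g4)
            exacts [Or.inl g0, Or.inr (Or.inl g1), Or.inr (Or.inr (Or.inl g2)), Or.inr (Or.inr (Or.inr (Or.inr (Or.inl (⟨Gbc, g3.trans hsp_bc⟩))))), Or.inr (Or.inr (Or.inr (Or.inr (Or.inr (⟨Gac, g4.trans hsp_ac⟩)))))]
        have hGadj' : ∀ t1 t2 : V, G.Adj t1 t2 ↔
            (s(t1,t2) = s(v,a) ∨ s(t1,t2) = s(v,b) ∨ s(t1,t2) = s(v,c) ∨ s(t1,t2) = s(b,c) ∨ s(t1,t2) = s(a,c)) := by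
          intro t1 t2
          rw [hGadj t1 t2]
          constructor
          · rintro (h1|h2|h3|⟨hxab,hhab⟩|⟨hxbc,hhbc⟩|⟨hxac,hhac⟩)
            exacts [Or.inl h1, Or.inr (Or.inl h2), Or.inr (Or.inr (Or.inl h3)), absurd hxab Gab, Or.inr (Or.inr (Or.inr (Or.inl hhbc))), Or.inr (Or.inr (Or.inr (Or.inr (hhac))))]
          · rintro (g0|g1|g2|g3|g4)
            exacts [Or.inl g0, Or.inr (Or.inl g1), Or.inr (Or.inr (Or.inl g2)), Or.inr (Or.inr (Or.inr (Or.inr (Or.inl (⟨Gbc, g3⟩))))), Or.inr (Or.inr (Or.inr (Or.inr (Or.inr (⟨Gac, g4⟩)))))]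
        have hWchar : ∀ t : W, t = x ∨ t = y ∨ t = z ∨ t = p := by
          intro t
          obtain ⟨f, htf⟩ := exists_edge_mem hH (φ e0) t
          rcases Hchar f with (h'|h'|h')|⟨h',hf'⟩|⟨h',hf'⟩|⟨h',hf'⟩
          · rw [h', Sym2.mem_iff] at htf
            rcases htf with rfl | rfl
            exacts [Or.inl rfl, Or.inr (Or.inl rfl)]
          · rw [h', Sym2.mem_iff] at htf
            rcases htf with rfl | rfl
            exacts [Or.inr (Or.inl rfl), Or.inr (Or.inr (Or.inl rfl))]
          · rw [h', Sym2.mem_iff] at htf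
            rcases htf with rfl | rfl
            exacts [Or.inl rfl, Or.inr (Or.inr (Or.inl rfl))]
          · exact absurd h' Gab
          · have htf' : t ∈ ((φ ⟨s(b,c), G.mem_edgeSet.2 Gbc⟩ : H.edgeSet) : Sym2 W) :=
              hf' ▸ htf
            rw [← hsp_bc, Sym2.mem_iff] at htf'
            rcases htf' with rfl | rfl
            exacts [Or.inr (Or.inr (Or.inl rfl)), Or.inr (Or.inr (Or.inr rfl))]
          · have htf' : t ∈ ((φ ⟨s(a,c), G.mem_edgeSet.2 Gac⟩ : H.edgeSet) : Sym2 W) :=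
              hf' ▸ htf
            rw [← hsp_ac, Sym2.mem_iff] at htf'
            rcases htf' with rfl | rfl
            exacts [Or.inl rfl, Or.inr (Or.inr (Or.inr rfl))]
        refine build_iso ![v,a,b,c] ![x,y,p,z] ?_ ?_ ?_ ?_ ?_
        · intro u
          rcases hVchar u with rfl|rfl|rfl|rfl
          exacts [⟨0,rfl⟩,⟨1,rfl⟩,⟨2,rfl⟩,⟨3,rfl⟩]
        · intro u
          rcases hWchar u with rfl|rfl|rfl|rfl
          exacts [⟨0,rfl⟩,⟨1,rfl⟩,⟨3,rfl⟩,⟨2,rfl⟩]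
        · intro i j h
          fin_cases i <;> fin_cases j <;> revert h <;>
            simp [hav, hbv, hcv, hab, hbc, hac, Ne.symm hav, Ne.symm hbv, Ne.symm hcv, Ne.symm hab, Ne.symm hbc, Ne.symm hac]
        · intro i j h
          fin_cases i <;> fin_cases j <;> revert h <;>
            simp [hxy, hyz, hxz, hpnx, hpny, hpnz, Ne.symm hxy, Ne.symm hyz, Ne.symm hxz, Ne.symm hpnx, Ne.symm hpny, Ne.symm hpnz]
        · intro i j
          fin_cases i <;> fin_cases j <;>
            simp [hGadj', hHadj, Sym2.eq_iff, hav, hbv, hcv, hab, hbc, hac, Ne.symm hav, Ne.symm hbv, Ne.symm hcv, Ne.symm hab, Ne.symm hbc, Ne.symm hac, hxy, hyz, hxz, hpnx, hpny, hpnz, Ne.symm hxy, Ne.symm hyz, Ne.symm hxz, Ne.symm hpnx, Ne.symm hpny, Ne.symm hpnz]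
      · -- bc only
        left
        obtain ⟨hf1_bc, hf2_bc, hf3_bc⟩ := pend_bc Gbc
        set p := Sym2.Mem.other hf1_bc with hp_def
        have hpF_bc : p ∈ ((φ ⟨s(b,c), G.mem_edgeSet.2 Gbc⟩ : H.edgeSet) : Sym2 W) :=
          Sym2.other_mem hf1_bc
        have hsp_bc : s(z, p) = ((φ ⟨s(b,c), G.mem_edgeSet.2 Gbc⟩ : H.edgeSet) : Sym2 W) :=
          Sym2.other_spec hf1_bc
        have hpnz : p ≠ z := Sym2.other_ne
          (H.not_isDiag_of_mem_edgeSet (φ ⟨s(b,c), G.mem_edgeSet.2 Gbc⟩).2) hf1_bc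
        have hpnx : p ≠ x := fun hh => hf2_bc (hh ▸ hpF_bc)
        have hpny : p ≠ y := fun hh => hf3_bc (hh ▸ hpF_bc)
        have hHadj : ∀ s1 s2 : W, H.Adj s1 s2 ↔
            (s(s1,s2) = s(x,y) ∨ s(s1,s2) = s(y,z) ∨ s(s1,s2) = s(x,z) ∨ s(s1,s2) = s(z, p)) := by
          intro s1 s2
          rw [hHadjU s1 s2]
          constructor
          · rintro (h1|h2|h3|⟨hxab,hhab⟩|⟨hxbc,hhbc⟩|⟨hxac,hhac⟩)
            exacts [Or.inl h1, Or.inr (Or.inl h2), Or.inr (Or.inr (Or.inl h3)), absurd hxab Gab, Or.inr (Or.inr (Or.inr ((hhbc.trans hsp_bc.symm)))), absurd hxac Gac]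
          · rintro (g0|g1|g2|g3)
            exacts [Or.inl g0, Or.inr (Or.inl g1), Or.inr (Or.inr (Or.inl g2)), Or.inr (Or.inr (Or.inr (Or.inr (Or.inl (⟨Gbc, g3.trans hsp_bc⟩)))))]
        have hGadj' : ∀ t1 t2 : V, G.Adj t1 t2 ↔
            (s(t1,t2) = s(v,a) ∨ s(t1,t2) = s(v,b) ∨ s(t1,t2) = s(v,c) ∨ s(t1,t2) = s(b,c)) := by
          intro t1 t2
          rw [hGadj t1 t2]
          constructor
          · rintro (h1|h2|h3|⟨hxab,hhab⟩|⟨hxbc,hhbc⟩|⟨hxac,hhac⟩)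
            exacts [Or.inl h1, Or.inr (Or.inl h2), Or.inr (Or.inr (Or.inl h3)), absurd hxab Gab, Or.inr (Or.inr (Or.inr (hhbc))), absurd hxac Gac]
          · rintro (g0|g1|g2|g3)
            exacts [Or.inl g0, Or.inr (Or.inl g1), Or.inr (Or.inr (Or.inl g2)), Or.inr (Or.inr (Or.inr (Or.inr (Or.inl (⟨Gbc, g3⟩)))))]
        have hWchar : ∀ t : W, t = x ∨ t = y ∨ t = z ∨ t = p := by
          intro t
          obtain ⟨f, htf⟩ := exists_edge_mem hH (φ e0) t
          rcases Hchar f with (h'|h'|h')|⟨h',hf'⟩|⟨h',hf'⟩|⟨h',hf'⟩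
          · rw [h', Sym2.mem_iff] at htf
            rcases htf with rfl | rfl
            exacts [Or.inl rfl, Or.inr (Or.inl rfl)]
          · rw [h', Sym2.mem_iff] at htf
            rcases htf with rfl | rfl
            exacts [Or.inr (Or.inl rfl), Or.inr (Or.inr (Or.inl rfl))]
          · rw [h', Sym2.mem_iff] at htf
            rcases htf with rfl | rfl
            exacts [Or.inl rfl, Or.inr (Or.inr (Or.inl rfl))]
          · exact absurd h' Gab
          · have htf' : t ∈ ((φ ⟨s(b,c), G.mem_edgeSet.2 Gbc⟩ : H.edgeSet) : Sym2 W) :=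
              hf' ▸ htf
            rw [← hsp_bc, Sym2.mem_iff] at htf'
            rcases htf' with rfl | rfl
            exacts [Or.inr (Or.inr (Or.inl rfl)), Or.inr (Or.inr (Or.inr rfl))]
          · exact absurd h' Gac
        refine build_iso ![v,a,b,c] ![z,p,y,x] ?_ ?_ ?_ ?_ ?_
        · intro u
          rcases hVchar u with rfl|rfl|rfl|rfl
          exacts [⟨0,rfl⟩,⟨1,rfl⟩,⟨2,rfl⟩,⟨3,rfl⟩]
        · intro u
          rcases hWchar u with rfl|rfl|rfl|rfl
          exacts [⟨3,rfl⟩,⟨2,rfl⟩,⟨0,rfl⟩,⟨1,rfl⟩]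
        · intro i j h
          fin_cases i <;> fin_cases j <;> revert h <;>
            simp [hav, hbv, hcv, hab, hbc, hac, Ne.symm hav, Ne.symm hbv, Ne.symm hcv, Ne.symm hab, Ne.symm hbc, Ne.symm hac]
        · intro i j h
          fin_cases i <;> fin_cases j <;> revert h <;>
            simp [hxy, hyz, hxz, hpnx, hpny, hpnz, Ne.symm hxy, Ne.symm hyz, Ne.symm hxz, Ne.symm hpnx, Ne.symm hpny, Ne.symm hpnz]
        · intro i j
          fin_cases i <;> fin_cases j <;>
            simp [hGadj', hHadj, Sym2.eq_iff, hav, hbv, hcv, hab, hbc, hac, Ne.symm hav, Ne.symm hbv, Ne.symm hcv, Ne.symm hab, Ne.symm hbc, Ne.symm hac, hxy, hyz, hxz, hpnx, hpny, hpnz, Ne.symm hxy, Ne.symm hyz, Ne.symm hxz, Ne.symm hpnx, Ne.symm hpny, Ne.symm hpnz]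
    · by_cases Gac : G.Adj a c
      · -- ac only
        left
        obtain ⟨hf1_ac, hf2_ac, hf3_ac⟩ := pend_ac Gac
        set p := Sym2.Mem.other hf1_ac with hp_def
        have hpF_ac : p ∈ ((φ ⟨s(a,c), G.mem_edgeSet.2 Gac⟩ : H.edgeSet) : Sym2 W) :=
          Sym2.other_mem hf1_ac
        have hsp_ac : s(x, p) = ((φ ⟨s(a,c), G.mem_edgeSet.2 Gac⟩ : H.edgeSet) : Sym2 W) :=
          Sym2.other_spec hf1_ac
        have hpnx : p ≠ x := Sym2.other_ne
          (H.not_isDiag_of_mem_edgeSet (φ ⟨s(a,c), G.mem_edgeSet.2 Gac⟩).2) hf1_ac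
        have hpny : p ≠ y := fun hh => hf2_ac (hh ▸ hpF_ac)
        have hpnz : p ≠ z := fun hh => hf3_ac (hh ▸ hpF_ac)
        have hHadj : ∀ s1 s2 : W, H.Adj s1 s2 ↔
            (s(s1,s2) = s(x,y) ∨ s(s1,s2) = s(y,z) ∨ s(s1,s2) = s(x,z) ∨ s(s1,s2) = s(x, p)) := by
          intro s1 s2
          rw [hHadjU s1 s2]
          constructor
          · rintro (h1|h2|h3|⟨hxab,hhab⟩|⟨hxbc,hhbc⟩|⟨hxac,hhac⟩)
            exacts [Or.inl h1, Or.inr (Or.inl h2), Or.inr (Or.inr (Or.inl h3)), absurd hxab Gab, absurd hxbc Gbc, Or.inr (Or.inr (Or.inr ((hhac.trans hsp_ac.symm))))]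
          · rintro (g0|g1|g2|g3)
            exacts [Or.inl g0, Or.inr (Or.inl g1), Or.inr (Or.inr (Or.inl g2)), Or.inr (Or.inr (Or.inr (Or.inr (Or.inr (⟨Gac, g3.trans hsp_ac⟩)))))]
        have hGadj' : ∀ t1 t2 : V, G.Adj t1 t2 ↔
            (s(t1,t2) = s(v,a) ∨ s(t1,t2) = s(v,b) ∨ s(t1,t2) = s(v,c) ∨ s(t1,t2) = s(a,c)) := by
          intro t1 t2
          rw [hGadj t1 t2]
          constructor
          · rintro (h1|h2|h3|⟨hxab,hhab⟩|⟨hxbc,hhbc⟩|⟨hxac,hhac⟩)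
            exacts [Or.inl h1, Or.inr (Or.inl h2), Or.inr (Or.inr (Or.inl h3)), absurd hxab Gab, absurd hxbc Gbc, Or.inr (Or.inr (Or.inr (hhac)))]
          · rintro (g0|g1|g2|g3)
            exacts [Or.inl g0, Or.inr (Or.inl g1), Or.inr (Or.inr (Or.inl g2)), Or.inr (Or.inr (Or.inr (Or.inr (Or.inr (⟨Gac, g3⟩)))))]
        have hWchar : ∀ t : W, t = x ∨ t = y ∨ t = z ∨ t = p := by
          intro t
          obtain ⟨f, htf⟩ := exists_edge_mem hH (φ e0) t
          rcases Hchar f with (h'|h'|h')|⟨h',hf'⟩|⟨h',hf'⟩|⟨h',hf'⟩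
          · rw [h', Sym2.mem_iff] at htf
            rcases htf with rfl | rfl
            exacts [Or.inl rfl, Or.inr (Or.inl rfl)]
          · rw [h', Sym2.mem_iff] at htf
            rcases htf with rfl | rfl
            exacts [Or.inr (Or.inl rfl), Or.inr (Or.inr (Or.inl rfl))]
          · rw [h', Sym2.mem_iff] at htf
            rcases htf with rfl | rfl
            exacts [Or.inl rfl, Or.inr (Or.inr (Or.inl rfl))]
          · exact absurd h' Gab
          · exact absurd h' Gbc
          · have htf' : t ∈ ((φ ⟨s(a,c), G.mem_edgeSet.2 Gac⟩ : H.edgeSet) : Sym2 W) :=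
              hf' ▸ htf
            rw [← hsp_ac, Sym2.mem_iff] at htf'
            rcases htf' with rfl | rfl
            exacts [Or.inl rfl, Or.inr (Or.inr (Or.inr rfl))]
        refine build_iso ![v,a,b,c] ![x,y,p,z] ?_ ?_ ?_ ?_ ?_
        · intro u
          rcases hVchar u with rfl|rfl|rfl|rfl
          exacts [⟨0,rfl⟩,⟨1,rfl⟩,⟨2,rfl⟩,⟨3,rfl⟩]
        · intro u
          rcases hWchar u with rfl|rfl|rfl|rfl
          exacts [⟨0,rfl⟩,⟨1,rfl⟩,⟨3,rfl⟩,⟨2,rfl⟩]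
        · intro i j h
          fin_cases i <;> fin_cases j <;> revert h <;>
            simp [hav, hbv, hcv, hab, hbc, hac, Ne.symm hav, Ne.symm hbv, Ne.symm hcv, Ne.symm hab, Ne.symm hbc, Ne.symm hac]
        · intro i j h
          fin_cases i <;> fin_cases j <;> revert h <;>
            simp [hxy, hyz, hxz, hpnx, hpny, hpnz, Ne.symm hxy, Ne.symm hyz, Ne.symm hxz, Ne.symm hpnx, Ne.symm hpny, Ne.symm hpnz]
        · intro i j
          fin_cases i <;> fin_cases j <;>
            simp [hGadj', hHadj, Sym2.eq_iff, hav, hbv, hcv, hab, hbc, hac, Ne.symm hav, Ne.symm hbv, Ne.symm hcv, Ne.symm hab, Ne.symm hbc, Ne.symm hac, hxy, hyz, hxz, hpnx, hpny, hpnz, Ne.symm hxy, Ne.symm hyz, Ne.symm hxz, Ne.symm hpnx, Ne.symm hpny, Ne.symm hpnz]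
      · -- none: exceptional pair
        right
        have hGadj' : ∀ t1 t2 : V, G.Adj t1 t2 ↔
            (s(t1,t2) = s(v,a) ∨ s(t1,t2) = s(v,b) ∨ s(t1,t2) = s(v,c)) := by
          intro t1 t2
          rw [hGadj t1 t2]
          constructor
          · rintro (h1|h2|h3|⟨hx,_⟩|⟨hx,_⟩|⟨hx,_⟩)
            exacts [Or.inl h1, Or.inr (Or.inl h2), Or.inr (Or.inr h3), absurd hx Gab,
              absurd hx Gbc, absurd hx Gac]
          · rintro (g0|g1|g2)
            exacts [Or.inl g0, Or.inr (Or.inl g1), Or.inr (Or.inr (Or.inl g2))]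
        have hHadj : ∀ s1 s2 : W, H.Adj s1 s2 ↔
            (s(s1,s2) = s(x,y) ∨ s(s1,s2) = s(y,z) ∨ s(s1,s2) = s(x,z)) := by
          intro s1 s2
          rw [hHadjU s1 s2]
          constructor
          · rintro (h1|h2|h3|⟨hx,_⟩|⟨hx,_⟩|⟨hx,_⟩)
            exacts [Or.inl h1, Or.inr (Or.inl h2), Or.inr (Or.inr h3), absurd hx Gab,
              absurd hx Gbc, absurd hx Gac]
          · rintro (g0|g1|g2)
            exacts [Or.inl g0, Or.inr (Or.inl g1), Or.inr (Or.inr (Or.inl g2))]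
        have hWchar : ∀ t : W, t = x ∨ t = y ∨ t = z := by
          intro t
          obtain ⟨f, htf⟩ := exists_edge_mem hH (φ e0) t
          rcases Hchar f with (h'|h'|h')|⟨h',_⟩|⟨h',_⟩|⟨h',_⟩
          · rw [h', Sym2.mem_iff] at htf
            rcases htf with rfl | rfl
            exacts [Or.inl rfl, Or.inr (Or.inl rfl)]
          · rw [h', Sym2.mem_iff] at htf
            rcases htf with rfl | rfl
            exacts [Or.inr (Or.inl rfl), Or.inr (Or.inr rfl)]
          · rw [h', Sym2.mem_iff] at htf
            rcases htf with rfl | rfl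
            exacts [Or.inl rfl, Or.inr (Or.inr rfl)]
          · exact absurd h' Gab
          · exact absurd h' Gbc
          · exact absurd h' Gac
        have hstarAdj : ∀ u1 u2 : Fin 4, starK13.Adj u1 u2 ↔
            ((u1 = 0 ∧ u2 ≠ 0) ∨ (u2 = 0 ∧ u1 ≠ 0)) := fun _ _ => Iff.rfl
        constructor
        · refine build_iso ![v,a,b,c] ![0,1,2,3] ?_ ?_ ?_ ?_ ?_
          · intro u
            rcases hVchar u with rfl|rfl|rfl|rfl
            exacts [⟨0,rfl⟩,⟨1,rfl⟩,⟨2,rfl⟩,⟨3,rfl⟩]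
          · decide
          · intro i j h
            fin_cases i <;> fin_cases j <;> revert h <;>
              simp [hav, hbv, hcv, hab, hbc, hac, Ne.symm hav, Ne.symm hbv, Ne.symm hcv,
                Ne.symm hab, Ne.symm hbc, Ne.symm hac]
          · decide
          · intro i j
            fin_cases i <;> fin_cases j <;>
              simp [hGadj', Sym2.eq_iff, hstarAdj, hav, hbv, hcv, hab, hbc, hac, Ne.symm hav,
                Ne.symm hbv, Ne.symm hcv, Ne.symm hab, Ne.symm hbc, Ne.symm hac]
        · refine build_iso ![x,y,z] ![0,1,2] ?_ ?_ ?_ ?_ ?_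
          · intro u
            rcases hWchar u with rfl|rfl|rfl
            exacts [⟨0,rfl⟩,⟨1,rfl⟩,⟨2,rfl⟩]
          · decide
          · intro i j h
            fin_cases i <;> fin_cases j <;> revert h <;>
              simp [hxy, hyz, hxz, Ne.symm hxy, Ne.symm hyz, Ne.symm hxz]
          · decide
          · intro i j
            fin_cases i <;> fin_cases j <;>
              simp [hHadj, Sym2.eq_iff, top_adj, hxy, hyz, hxz, Ne.symm hxy, Ne.symm hyz,
                Ne.symm hxz]


end Whitney

/-- Whitney's isomorphism theorem: if two finite connected simple graphs have isomorphic line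
graphs, and they are not (one of each) the triangle `K₃` and the star `K_{1,3}`, then the graphs
themselves are isomorphic. -/
theorem whitney_isomorphism {V W : Type*} [Fintype V] [Fintype W]
    (G : SimpleGraph V) (H : SimpleGraph W) (hG : G.Connected) (hH : H.Connected)
    (hiso : Nonempty (G.lineGraph ≃g H.lineGraph))
    (hexc : ¬ ((Nonempty (G ≃g (⊤ : SimpleGraph (Fin 3))) ∧ Nonempty (H ≃g starK13)) ∨
               (Nonempty (G ≃g starK13) ∧ Nonempty (H ≃g (⊤ : SimpleGraph (Fin 3)))))) :
    Nonempty (G ≃g H) := by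
  obtain ⟨φ⟩ := hiso
  by_cases h2 : ∃ e f : G.edgeSet, e ≠ f
  · by_cases hnb1 : NoBad φ
    · by_cases hnb2 : NoBad φ.symm
      · exact whitney_main hG hH φ hnb1 hnb2 h2
      · rcases whitney_exceptional hH hG φ.symm hnb2 with h | ⟨h1, h2'⟩
        · exact ⟨h.some.symm⟩
        · exact absurd (Or.inl ⟨h2', h1⟩) hexc
    · rcases whitney_exceptional hG hH φ hnb1 with h | ⟨h1, h2'⟩
      · exact h
      · exact absurd (Or.inr ⟨h1, h2'⟩) hexc
  · exact whitney_small hG hH φ h2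
end

section
/- Let G and H be finite connected simple graphs with G having at least 5 vertices, and let ψ be an isomorphism from the line graph L(G) to the line graph L(H). Then there exists exactly one graph isomorphism φ from G to H that induces ψ, i.e., such that for every edge {u,v} of G, ψ({u,v}) = {φ(u), φ(v)}. -/
/-!
Three pairwise adjacent vertices of a line graph are either three edges through one vertex (a
star) or the three sides of a triangle. Every edge meets an even number of the sides of a
triangle, whereas in a connected graph with at least five vertices some edge meets an odd number
of the edges of a star; this parity is preserved by `ψ`, so `ψ` maps stars to stars. Hence for a
vertex `u` of degree at least two the images of the edges at `u` pass through a common vertex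
`x`, and `ψ` maps the edges at `u` exactly onto the edges at `x`: an edge through `x` not coming
from `u` would close a triangle at `u` whose image is a star, which connectivity and the size of
`G` rule out as well. A leaf is sent to the far end of the image of its edge. The relation
"`ψ` maps the star of `u` onto the star of `x`" is then the graph of an isomorphism, and every
isomorphism inducing `ψ` satisfies it, which gives uniqueness.
-/

open Finset

namespace Sym2

variable {α : Type*}

theorem exists_mem_or_eq_triangle {e f g : Sym2 α} (hef : ∃ v, v ∈ e ∧ v ∈ f)
    (heg : ∃ v, v ∈ e ∧ v ∈ g) (hfg : ∃ v, v ∈ f ∧ v ∈ g) :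
    (∃ v, v ∈ e ∧ v ∈ f ∧ v ∈ g) ∨
      ∃ p q r, p ≠ q ∧ p ≠ r ∧ q ≠ r ∧ e = s(p, q) ∧ f = s(p, r) ∧ g = s(q, r) := by
  obtain ⟨p, hpe, hpf⟩ := hef
  obtain ⟨q, hqe, hqg⟩ := heg
  obtain ⟨r, hrf, hrg⟩ := hfg
  by_cases hpq : p = q
  · exact .inl ⟨p, hpe, hpf, hpq ▸ hqg⟩
  by_cases hpr : p = r
  · exact .inl ⟨p, hpe, hpf, hpr ▸ hrg⟩
  by_cases hqr : q = r
  · exact .inl ⟨q, hqe, hqr ▸ hrf, hqg⟩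
  exact .inr ⟨p, q, r, hpq, hpr, hqr, (mem_and_mem_iff hpq).1 ⟨hpe, hqe⟩,
    (mem_and_mem_iff hpr).1 ⟨hpf, hrf⟩, (mem_and_mem_iff hqr).1 ⟨hqg, hrg⟩⟩

end Sym2

namespace SimpleGraph

variable {α β V W : Type*} {G : SimpleGraph V} {H : SimpleGraph W}

theorem Connected.exists_adj_mem_notMem_of_card_lt [Fintype V] (hG : G.Connected)
    {S : Finset V} (hS : S.Nonempty) (hcard : #S < Fintype.card V) :
    ∃ s ∈ S, ∃ t ∉ S, G.Adj s t := by
  obtain ⟨u, hu⟩ := hS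
  obtain ⟨w, -, hw⟩ := exists_mem_notMem_of_card_lt_card (t := univ) hcard
  obtain ⟨d, -, hd, hd'⟩ := (hG.preconnected u w).some.exists_boundary_dart (S : Set V) hu hw
  exact ⟨d.fst, hd, d.snd, hd', d.adj⟩

theorem Connected.exists_mem_lineGraph_adj [Fintype V] (hG : G.Connected)
    (hcard : 2 < Fintype.card V) (u : V) :
    ∃ e f : G.edgeSet, u ∈ (e : Sym2 V) ∧ G.lineGraph.Adj e f := by
  classical
  have : Nontrivial V := Fintype.one_lt_card_iff_nontrivial.1 (by omega)
  obtain ⟨t, hut⟩ := hG.preconnected.exists_adj_of_nontrivial u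
  have ht := G.ne_of_adj hut
  obtain ⟨s, hs, r, hr, hsr⟩ :=
    hG.exists_adj_mem_notMem_of_card_lt (S := {u, t}) (by simp) (card_le_two.trans_lt hcard)
  simp only [mem_insert, mem_singleton, not_or] at hs hr
  refine ⟨⟨s(u, t), hut⟩, ⟨s(s, r), hsr⟩, Sym2.mem_mk_left _ _, ?_⟩
  simp only [lineGraph_adj_iff_exists, ne_eq, Subtype.ext_iff, Sym2.mem_iff, Sym2.eq_iff,
    or_and_right, exists_or, exists_eq_left]
  grind

theorem eq_of_forall_mem_iff_mem {Γ : SimpleGraph α} {a b : α} {e f : Γ.edgeSet}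
    (hef : Γ.lineGraph.Adj e f) (ha : a ∈ (e : Sym2 α))
    (hab : ∀ e : Γ.edgeSet, a ∈ (e : Sym2 α) ↔ b ∈ (e : Sym2 α)) : a = b := by
  by_contra hne
  obtain ⟨hne', v, hve, hvf⟩ := lineGraph_adj_iff_exists.1 hef
  have he : (e : Sym2 α) = s(a, b) := (Sym2.mem_and_mem_iff hne).1 ⟨ha, (hab e).1 ha⟩
  have hf : (f : Sym2 α) = s(a, b) := by
    refine (Sym2.mem_and_mem_iff hne).1 ?_
    rw [he, Sym2.mem_iff] at hve
    rcases hve with rfl | rfl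
    · exact ⟨hvf, (hab f).1 hvf⟩
    · exact ⟨(hab f).2 hvf, hvf⟩
  exact hne' (Subtype.ext (he.trans hf.symm))

def HasOddNeighbor (Γ : SimpleGraph α) (a b c : α) : Prop :=
  ∃ x, Xor (Γ.Adj x a) (Xor (Γ.Adj x b) (Γ.Adj x c))

theorem Iso.hasOddNeighbor_iff {Γ : SimpleGraph α} {Δ : SimpleGraph β} (φ : Γ ≃g Δ)
    {a b c : α} : Δ.HasOddNeighbor (φ a) (φ b) (φ c) ↔ Γ.HasOddNeighbor a b c := by
  simp only [HasOddNeighbor]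
  exact φ.surjective.exists.trans (by simp only [φ.map_adj_iff])

theorem lineGraph_not_hasOddNeighbor_of_triangle {p q r : V} (hpq : p ≠ q) (hpr : p ≠ r)
    (hqr : q ≠ r) {e f g : G.edgeSet} (he : (e : Sym2 V) = s(p, q))
    (hf : (f : Sym2 V) = s(p, r)) (hg : (g : Sym2 V) = s(q, r)) :
    ¬ G.lineGraph.HasOddNeighbor e f g := by
  rintro ⟨⟨h, hh⟩, hodd⟩
  induction h using Sym2.ind with | _ x y => ?_
  have hxy : x ≠ y := G.ne_of_adj hh
  simp only [lineGraph_adj_iff_exists, ne_eq, Subtype.ext_iff, he, hf, hg, Sym2.mem_iff,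
    Sym2.eq_iff, xor_def, or_and_right, exists_or, exists_eq_left] at hodd
  grind

theorem lineGraph_hasOddNeighbor_of_star [Fintype V] (hG : G.Connected)
    (hcard : 5 ≤ Fintype.card V) {u a b c : V} (hab : a ≠ b) (hac : a ≠ c) (hbc : b ≠ c)
    {e f g : G.edgeSet} (he : (e : Sym2 V) = s(u, a)) (hf : (f : Sym2 V) = s(u, b))
    (hg : (g : Sym2 V) = s(u, c)) : G.lineGraph.HasOddNeighbor e f g := by
  classical
  have hua : u ≠ a := G.ne_of_adj (G.mem_edgeSet.1 (he ▸ e.2))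
  have hub : u ≠ b := G.ne_of_adj (G.mem_edgeSet.1 (hf ▸ f.2))
  have huc : u ≠ c := G.ne_of_adj (G.mem_edgeSet.1 (hg ▸ g.2))
  obtain ⟨s, hs, t, ht, hst⟩ := hG.exists_adj_mem_notMem_of_card_lt (S := {u, a, b, c})
    (by simp) (card_le_four.trans_lt hcard)
  refine ⟨⟨s(s, t), hst⟩, ?_⟩
  simp only [mem_insert, mem_singleton, not_or] at hs ht
  simp only [lineGraph_adj_iff_exists, ne_eq, Subtype.ext_iff, he, hf, hg, Sym2.mem_iff,
    Sym2.eq_iff, xor_def, or_and_right, exists_or, exists_eq_left]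
  grind

namespace Iso

variable (ψ : G.lineGraph ≃g H.lineGraph)

theorem exists_mem_and_mem_of_mem_apply {e f : G.edgeSet} {x : W}
    (he : x ∈ (ψ e : Sym2 W)) (hf : x ∈ (ψ f : Sym2 W)) :
    ∃ v, v ∈ (e : Sym2 V) ∧ v ∈ (f : Sym2 V) := by
  by_cases hef : e = f
  · subst hef
    exact ⟨_, Sym2.out_fst_mem _, Sym2.out_fst_mem _⟩
  exact (lineGraph_adj_iff_exists.1 (ψ.map_adj_iff.1
    (lineGraph_adj_iff_exists.2 ⟨ψ.injective.ne hef, x, he, hf⟩))).2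

theorem exists_mem_apply_and_mem_apply {e f : G.edgeSet} {v : V}
    (he : v ∈ (e : Sym2 V)) (hf : v ∈ (f : Sym2 V)) :
    ∃ x, x ∈ (ψ e : Sym2 W) ∧ x ∈ (ψ f : Sym2 W) :=
  ψ.symm.exists_mem_and_mem_of_mem_apply (by rwa [ψ.symm_apply_apply])
    (by rwa [ψ.symm_apply_apply])

theorem exists_mem_apply_of_mem [Fintype V] (hG : G.Connected) (hcard : 5 ≤ Fintype.card V)
    {u : V} {e f g : G.edgeSet} (hef : e ≠ f) (heg : e ≠ g) (hfg : f ≠ g)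
    (he : u ∈ (e : Sym2 V)) (hf : u ∈ (f : Sym2 V)) (hg : u ∈ (g : Sym2 V)) :
    ∃ x, x ∈ (ψ e : Sym2 W) ∧ x ∈ (ψ f : Sym2 W) ∧ x ∈ (ψ g : Sym2 W) := by
  refine (Sym2.exists_mem_or_eq_triangle (ψ.exists_mem_apply_and_mem_apply he hf)
    (ψ.exists_mem_apply_and_mem_apply he hg)
    (ψ.exists_mem_apply_and_mem_apply hf hg)).resolve_right ?_
  rintro ⟨p, q, r, hpq, hpr, hqr, hpq', hpr', hqr'⟩
  obtain ⟨a, hea⟩ := Sym2.mem_iff_exists.1 he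
  obtain ⟨b, hfb⟩ := Sym2.mem_iff_exists.1 hf
  obtain ⟨c, hgc⟩ := Sym2.mem_iff_exists.1 hg
  have hab : a ≠ b := by rintro rfl; exact hef (Subtype.ext (hea.trans hfb.symm))
  have hac : a ≠ c := by rintro rfl; exact heg (Subtype.ext (hea.trans hgc.symm))
  have hbc : b ≠ c := by rintro rfl; exact hfg (Subtype.ext (hfb.trans hgc.symm))
  exact lineGraph_not_hasOddNeighbor_of_triangle hpq hpr hqr hpq' hpr' hqr'
    (ψ.hasOddNeighbor_iff.2 (lineGraph_hasOddNeighbor_of_star hG hcard hab hac hbc hea hfb hgc))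

theorem mem_apply_of_mem_apply_of_mem [Fintype V] (hG : G.Connected)
    (hcard : 5 ≤ Fintype.card V) {u : V} {e f g : G.edgeSet} (hef : e ≠ f)
    (he : u ∈ (e : Sym2 V)) (hf : u ∈ (f : Sym2 V)) (hg : u ∈ (g : Sym2 V)) {x : W}
    (hxe : x ∈ (ψ e : Sym2 W)) (hxf : x ∈ (ψ f : Sym2 W)) : x ∈ (ψ g : Sym2 W) := by
  by_cases hge : g = e
  · rwa [hge]
  by_cases hgf : g = f
  · rwa [hgf]
  obtain ⟨y, hye, hyf, hyg⟩ :=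
    ψ.exists_mem_apply_of_mem hG hcard hef (Ne.symm hge) (Ne.symm hgf) he hf hg
  obtain rfl : y = x := by
    by_contra hyx
    exact hef (ψ.injective (Subtype.ext (Sym2.eq_of_ne_mem hyx hye hxe hyf hxf)))
  exact hyg

theorem notMem_apply_of_triangle [Fintype V] (hG : G.Connected)
    (hcard : 5 ≤ Fintype.card V) {u a b : V} {e f g : G.edgeSet}
    (he : (e : Sym2 V) = s(u, a)) (hf : (f : Sym2 V) = s(u, b)) (hg : (g : Sym2 V) = s(a, b))
    {x : W} (hxe : x ∈ (ψ e : Sym2 W)) (hxf : x ∈ (ψ f : Sym2 W)) : x ∉ (ψ g : Sym2 W) := by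
  classical
  intro hxg
  have hua : u ≠ a := G.ne_of_adj (G.mem_edgeSet.1 (he ▸ e.2))
  have hub : u ≠ b := G.ne_of_adj (G.mem_edgeSet.1 (hf ▸ f.2))
  have hab : a ≠ b := G.ne_of_adj (G.mem_edgeSet.1 (hg ▸ g.2))
  obtain ⟨s, hs, t, ht, hst⟩ := hG.exists_adj_mem_notMem_of_card_lt (S := {u, a, b})
    (by simp) (card_le_three.trans_lt (by omega))
  simp only [mem_insert, mem_singleton, not_or] at hs ht
  -- `st` leaves the triangle at a corner `s` whose two sides both map through `x`, so `ψ st`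
  -- passes through `x` too and therefore meets the image of the side opposite to `s`.
  have meets_opposite : ∀ {e₁ e₂ e₃ : G.edgeSet}, e₁ ≠ e₂ → s ∈ (e₁ : Sym2 V) →
      s ∈ (e₂ : Sym2 V) → x ∈ (ψ e₁ : Sym2 W) → x ∈ (ψ e₂ : Sym2 W) → x ∈ (ψ e₃ : Sym2 W) →
      ∃ v, v ∈ s(s, t) ∧ v ∈ (e₃ : Sym2 V) := fun h₁₂ hs₁ hs₂ hx₁ hx₂ hx₃ =>
    ψ.exists_mem_and_mem_of_mem_apply (e := ⟨s(s, t), hst⟩)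
      (ψ.mem_apply_of_mem_apply_of_mem hG hcard h₁₂ hs₁ hs₂ (Sym2.mem_mk_left s t) hx₁ hx₂) hx₃
  have hef : e ≠ f := by rintro rfl; exact hab (Sym2.congr_right.1 (he.symm.trans hf))
  have heg : e ≠ g := by rintro rfl; rw [he, Sym2.eq_iff] at hg; grind
  have hfg : f ≠ g := by rintro rfl; rw [hf, Sym2.eq_iff] at hg; grind
  rcases hs with rfl | rfl | rfl
  · obtain ⟨v, hv, hvg⟩ := meets_opposite hef (by simp [he]) (by simp [hf]) hxe hxf hxg
    simp only [hg, Sym2.mem_iff] at hv hvg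
    grind
  · obtain ⟨v, hv, hvf⟩ := meets_opposite heg (by simp [he]) (by simp [hg]) hxe hxg hxf
    simp only [hf, Sym2.mem_iff] at hv hvf
    grind
  · obtain ⟨v, hv, hve⟩ := meets_opposite hfg (by simp [hf]) (by simp [hg]) hxf hxg hxe
    simp only [he, Sym2.mem_iff] at hv hve
    grind

def MapsStar (u : V) (x : W) : Prop :=
  ∀ e : G.edgeSet, u ∈ (e : Sym2 V) ↔ x ∈ (ψ e : Sym2 W)

theorem exists_mapsStar_of_ne [Fintype V] (hG : G.Connected) (hcard : 5 ≤ Fintype.card V)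
    {u : V} {e f : G.edgeSet} (hef : e ≠ f) (he : u ∈ (e : Sym2 V)) (hf : u ∈ (f : Sym2 V)) :
    ∃ x, ψ.MapsStar u x := by
  obtain ⟨x, hxe, hxf⟩ := ψ.exists_mem_apply_and_mem_apply he hf
  refine ⟨x, fun g => ⟨fun hg => ψ.mem_apply_of_mem_apply_of_mem hG hcard hef he hf hg hxe hxf,
    fun hxg => ?_⟩⟩
  by_contra hug
  have mem_of_side : ∀ {h : G.edgeSet} {c : V}, (h : Sym2 V) = s(u, c) →
      x ∈ (ψ h : Sym2 W) → c ∈ (g : Sym2 V) := by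
    intro h c hh hxh
    obtain ⟨v, hvh, hvg⟩ := ψ.exists_mem_and_mem_of_mem_apply hxh hxg
    rw [hh, Sym2.mem_iff] at hvh
    rcases hvh with rfl | rfl
    exacts [absurd hvg hug, hvg]
  obtain ⟨a, hea⟩ := Sym2.mem_iff_exists.1 he
  obtain ⟨b, hfb⟩ := Sym2.mem_iff_exists.1 hf
  have hab : a ≠ b := by rintro rfl; exact hef (Subtype.ext (hea.trans hfb.symm))
  exact ψ.notMem_apply_of_triangle hG hcard hea hfb
    ((Sym2.mem_and_mem_iff hab).1 ⟨mem_of_side hea hxe, mem_of_side hfb hxf⟩) hxe hxf hxg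

theorem mapsStar_of_leaf {u v : V} {y : W} {e : G.edgeSet} (he : (e : Sym2 V) = s(u, v))
    (hleaf : ∀ f : G.edgeSet, u ∈ (f : Sym2 V) → f = e) (hv : ψ.MapsStar v y)
    (hy : y ∈ (ψ e : Sym2 W)) : ψ.MapsStar u (Sym2.Mem.other hy) := by
  set x := Sym2.Mem.other hy
  have hxe : x ∈ (ψ e : Sym2 W) := Sym2.other_mem hy
  refine fun g => ⟨fun hug => hleaf g hug ▸ hxe, fun hxg => ?_⟩
  by_contra hug
  obtain ⟨w, hwe, hwg⟩ := ψ.exists_mem_and_mem_of_mem_apply hxe hxg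
  rw [he, Sym2.mem_iff] at hwe
  obtain rfl : w = v := hwe.resolve_left (by rintro rfl; exact hug hwg)
  have hxy : x ≠ y := Sym2.other_ne (H.not_isDiag_of_mem_edgeSet (ψ e).2) hy
  have hge : g ≠ e := by rintro rfl; exact hug (he ▸ Sym2.mem_mk_left u w)
  exact hge (ψ.injective (Subtype.ext (Sym2.eq_of_ne_mem hxy hxg ((hv g).1 hwg) hxe hy)))

theorem exists_mapsStar [Fintype V] (hG : G.Connected) (hcard : 5 ≤ Fintype.card V) (u : V) :
    ∃ x, ψ.MapsStar u x := by
  classical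
  have : Nontrivial V := Fintype.one_lt_card_iff_nontrivial.1 (by omega)
  obtain ⟨v, huv⟩ := hG.preconnected.exists_adj_of_nontrivial u
  let e : G.edgeSet := ⟨s(u, v), huv⟩
  by_cases hleaf : ∀ f : G.edgeSet, u ∈ (f : Sym2 V) → f = e
  swap
  · push Not at hleaf
    obtain ⟨f, huf, hfe⟩ := hleaf
    exact ψ.exists_mapsStar_of_ne hG hcard hfe huf (Sym2.mem_mk_left u v)
  obtain ⟨s, hs, t, ht, hst⟩ := hG.exists_adj_mem_notMem_of_card_lt (S := {u, v})
    (by simp) (card_le_two.trans_lt (by omega))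
  simp only [mem_insert, mem_singleton, not_or] at hs ht
  obtain rfl : s = v := hs.resolve_left <| by
    rintro rfl
    exact ht.2 (Sym2.congr_right.1 (congrArg Subtype.val (hleaf ⟨s(s, t), hst⟩ (by simp))))
  have hge : (⟨s(s, t), hst⟩ : G.edgeSet) ≠ e := by
    intro h
    rw [Subtype.ext_iff, Sym2.eq_iff] at h
    grind
  obtain ⟨y, hy⟩ :=
    ψ.exists_mapsStar_of_ne hG hcard hge (Sym2.mem_mk_left s t) (Sym2.mem_mk_right u s)
  exact ⟨_, ψ.mapsStar_of_leaf rfl hleaf hy ((hy e).1 (Sym2.mem_mk_right u s))⟩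

namespace MapsStar

variable {ψ}

theorem right_unique {u : V} {x y : W} (hx : ψ.MapsStar u x) (hy : ψ.MapsStar u y)
    {e f : G.edgeSet} (he : u ∈ (e : Sym2 V)) (hef : G.lineGraph.Adj e f) : x = y :=
  eq_of_forall_mem_iff_mem (ψ.map_adj_iff.2 hef) ((hx e).1 he) fun e' => by
    rw [← ψ.apply_symm_apply e', ← hx, hy]

theorem left_unique {u v : V} {x : W} (hu : ψ.MapsStar u x) (hv : ψ.MapsStar v x)
    {e f : G.edgeSet} (he : u ∈ (e : Sym2 V)) (hef : G.lineGraph.Adj e f) : u = v :=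
  eq_of_forall_mem_iff_mem hef he fun e => (hu e).trans (hv e).symm

theorem apply_eq {u v : V} {x y : W} (hu : ψ.MapsStar u x) (hv : ψ.MapsStar v y)
    (huv : G.Adj u v) (hxy : x ≠ y) : (ψ ⟨s(u, v), huv⟩ : Sym2 W) = s(x, y) :=
  (Sym2.mem_and_mem_iff hxy).1
    ⟨(hu _).1 (Sym2.mem_mk_left u v), (hv _).1 (Sym2.mem_mk_right u v)⟩

end MapsStar

theorem mapsStar_of_apply_eq {φ : V → W} (hφ_inj : φ.Injective)
    (hφ : ∀ u v (h : G.Adj u v), (ψ ⟨s(u, v), G.mem_edgeSet.mpr h⟩ : Sym2 W) = s(φ u, φ v))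
    (u : V) : ψ.MapsStar u (φ u) := by
  rintro ⟨e, he⟩
  induction e using Sym2.ind with | _ a b => ?_
  rw [hφ a b he]
  simp [hφ_inj.eq_iff]

theorem exists_iso_forall_mapsStar [Fintype V] (hG : G.Connected) (hH : H.Connected)
    (hcard : 5 ≤ Fintype.card V) : ∃ φ : G ≃g H, ∀ u, ψ.MapsStar u (φ u) := by
  choose φ hφ using ψ.exists_mapsStar hG hcard
  choose e f he hef using hG.exists_mem_lineGraph_adj (by omega)
  have hinj : Function.Injective φ := fun u v h =>
    (hφ u).left_unique (h ▸ hφ v) (he u) (hef u)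
  have hadj : ∀ u v, H.Adj (φ u) (φ v) ↔ G.Adj u v := by
    refine fun u v => ⟨fun h => ?_, fun h => ?_⟩
    · set e' : G.edgeSet := ψ.symm ⟨s(φ u, φ v), h⟩
      have hψe' : (ψ e' : Sym2 W) = s(φ u, φ v) := by simp [e']
      have huv : (e' : Sym2 V) = s(u, v) :=
        (Sym2.mem_and_mem_iff fun huv => H.ne_of_adj h (congrArg φ huv)).1
          ⟨(hφ u e').2 (by simp [hψe']), (hφ v e').2 (by simp [hψe'])⟩
      exact G.mem_edgeSet.1 (huv ▸ e'.2)
    · have := (ψ ⟨s(u, v), h⟩).2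
      rwa [(hφ u).apply_eq (hφ v) h (hinj.ne (G.ne_of_adj h))] at this
  have hsurj : Function.Surjective φ := by
    intro x
    have : Nontrivial W := by
      obtain ⟨u⟩ : Nonempty V := Fintype.card_pos_iff.1 (by omega)
      obtain ⟨⟨g, hg⟩⟩ : Nonempty H.edgeSet := ⟨ψ (e u)⟩
      induction g using Sym2.ind with | _ a b => exact nontrivial_of_ne a b (H.ne_of_adj hg)
    obtain ⟨y, hxy⟩ := hH.preconnected.exists_adj_of_nontrivial x
    obtain ⟨⟨g, hg⟩, hψg⟩ := ψ.surjective ⟨s(x, y), hxy⟩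
    induction g using Sym2.ind with | _ a b => ?_
    have := (hφ a).apply_eq (hφ b) hg (hinj.ne (G.ne_of_adj hg))
    rw [hψg, Sym2.eq_iff] at this
    rcases this with ⟨rfl, -⟩ | ⟨rfl, -⟩
    exacts [⟨a, rfl⟩, ⟨b, rfl⟩]
  exact ⟨⟨Equiv.ofBijective φ ⟨hinj, hsurj⟩, hadj _ _⟩, hφ⟩

end Iso

end SimpleGraph

theorem whitney_isomorphism_unique_general {V W : Type*} [Fintype V]
    (G : SimpleGraph V) (H : SimpleGraph W) (hG : G.Connected) (hH : H.Connected)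
    (hcard : 5 ≤ Fintype.card V)
    (ψ : G.lineGraph ≃g H.lineGraph) :
    ∃! φ : G ≃g H, ∀ u v, ∀ h : G.Adj u v,
      ((ψ ⟨s(u, v), G.mem_edgeSet.mpr h⟩ : H.edgeSet) : Sym2 W) = s(φ u, φ v) := by
  obtain ⟨φ, hφ⟩ := ψ.exists_iso_forall_mapsStar hG hH hcard
  choose e f he hef using hG.exists_mem_lineGraph_adj (by omega)
  refine ⟨φ, fun u v h => (hφ u).apply_eq (hφ v) h (φ.injective.ne (G.ne_of_adj h)),
    fun φ' hφ' => ?_⟩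
  ext u
  exact (ψ.mapsStar_of_apply_eq φ'.injective hφ' u).right_unique (hφ u) (he u) (hef u)

/-- Uniqueness part of Whitney's isomorphism theorem: for finite connected simple graphs,
with `G` having at least 5 vertices, every isomorphism `ψ` of the line graphs is induced by a
unique isomorphism `φ` of the underlying graphs, i.e. `ψ({u,v}) = {φ u, φ v}` for every edge
`{u,v}` of `G`. -/
theorem whitney_isomorphism_unique {V W : Type*} [Fintype V] [Fintype W]
    (G : SimpleGraph V) (H : SimpleGraph W) (hG : G.Connected) (hH : H.Connected)
    (hcard : 5 ≤ Fintype.card V)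
    (ψ : G.lineGraph ≃g H.lineGraph) :
    ∃! φ : G ≃g H, ∀ u v, ∀ h : G.Adj u v,
      ((ψ ⟨s(u, v), G.mem_edgeSet.mpr h⟩ : H.edgeSet) : Sym2 W) = s(φ u, φ v) :=
  whitney_isomorphism_unique_general G H hG hH hcard ψ
end

section
/- Let G be a finite simple graph on vertex set {1,…,n} with edge set E of size m, let c be a positive integer, and let f_c be the associated regression objective. For every subset S ⊆ {1,…,n}, the vector z^S ∈ {−1,+1}^n defined by z^S_j = 1 if j ∈ S and z^S_j = −1 otherwise satisfies f_c(z^S) = 4·(m − cut(S)). Consequently, the infimum over z ∈ ℝ^n of f_c(z) is at most 4·(m − MAXCUT(G)). -/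
open Classical Finset

/-- The regression objective `f_c(z) = Σ_{{u,v}∈E} (z_u + z_v)² + c·Σ_j (|z_j| − 1)²`
associated to a finite simple graph `G` and a positive integer `c`; it equals
`‖ |Wz| − y ‖₂²` for the corresponding ℓ₂-regression-with-hidden-signs instance. -/
noncomputable def fObj {n : ℕ} (G : SimpleGraph (Fin n)) [Fintype G.edgeSet] (c : ℕ)
    (z : Fin n → ℝ) : ℝ :=
  (∑ e ∈ G.edgeFinset, Sym2.lift ⟨fun u v => (z u + z v) ^ 2, fun u v => by ring⟩ e)
    + c * ∑ j : Fin n, (|z j| - 1) ^ 2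

/-- `cutCard G S` is the number of edges of `G` with exactly one endpoint in `S`. -/
noncomputable def cutCard {n : ℕ} (G : SimpleGraph (Fin n)) [Fintype G.edgeSet]
    (S : Finset (Fin n)) : ℕ :=
  (G.edgeFinset.filter
    (fun e => Sym2.lift ⟨fun u v => ((u ∈ S) ≠ (v ∈ S)), fun u v => propext ne_comm⟩ e)).card

/-- `maxCut G` is the maximum of `cutCard G S` over all vertex subsets `S`. -/
noncomputable def maxCut {n : ℕ} (G : SimpleGraph (Fin n)) [Fintype G.edgeSet] : ℕ :=
  Finset.univ.sup (fun S : Finset (Fin n) => cutCard G S)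

/-!
On a `±1` vector the penalty `Σ_j (|z_j| − 1)²` vanishes, and `(z_u + z_v)²` is `0` on a cut
edge and `4` on an uncut one, so `f_c(z^S) = 4·(m − cut(S))`. Since `f_c ≥ 0`, its infimum is
at most its value at `z^S` for a maximum cut `S`.
-/

section

variable {α : Type*} [DecidableEq α]

def signVec (S : Finset α) : α → ℝ := fun j => if j ∈ S then 1 else -1

theorem abs_signVec (S : Finset α) (j : α) : |signVec S j| = 1 := by
  unfold signVec; split_ifs <;> simp

theorem signVec_add_sq (S : Finset α) (u v : α) :
    (signVec S u + signVec S v) ^ 2 = if (u ∈ S) ≠ (v ∈ S) then 0 else 4 := by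
  unfold signVec
  by_cases hu : u ∈ S <;> by_cases hv : v ∈ S <;> simp [hu, hv] <;> norm_num

variable {n : ℕ} (G : SimpleGraph (Fin n)) [Fintype G.edgeSet]

theorem fObj_nonneg (c : ℕ) (z : Fin n → ℝ) : 0 ≤ fObj G c z := by
  refine add_nonneg (sum_nonneg fun e _ => ?_) (by positivity)
  induction e using Sym2.ind with
  | _ u v => exact sq_nonneg _

theorem fObj_signVec (c : ℕ) (S : Finset (Fin n)) :
    fObj G c (signVec S) = 4 * ((G.edgeFinset.card : ℝ) - cutCard G S) := by
  have penalty : ∑ j : Fin n, (|signVec S j| - 1) ^ 2 = 0 :=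
    sum_eq_zero fun j _ => by simp [abs_signVec]
  have edges : (∑ e ∈ G.edgeFinset,
      Sym2.lift ⟨fun u v => (signVec S u + signVec S v) ^ 2, fun u v => by ring⟩ e)
      = ∑ e ∈ G.edgeFinset,
        if Sym2.lift ⟨fun u v => ((u ∈ S) ≠ (v ∈ S)), fun u v => propext ne_comm⟩ e
        then (0 : ℝ) else 4 := by
    refine sum_congr rfl fun e _ => ?_
    induction e using Sym2.ind with
    -- `congr` identifies the two decidability instances of the `if`
    | _ u v => simp only [Sym2.lift_mk, signVec_add_sq]; congr
  have uncut := card_filter_add_card_filter_not (s := G.edgeFinset)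
    (fun e => Sym2.lift ⟨fun u v => ((u ∈ S) ≠ (v ∈ S)), fun u v => propext ne_comm⟩ e)
  rw [fObj, edges, penalty, sum_ite, sum_const_zero, sum_const, nsmul_eq_mul, cutCard,
    ← uncut]
  push_cast
  ring

theorem exists_cutCard_eq_maxCut : ∃ S, cutCard G S = maxCut G := by
  obtain ⟨S, -, hS⟩ := exists_mem_eq_sup univ univ_nonempty (fun S => cutCard G S)
  exact ⟨S, hS.symm⟩

end

theorem fObj_completeness_general {n : ℕ} (G : SimpleGraph (Fin n)) [Fintype G.edgeSet]
    (c : ℕ) :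
    (∀ S : Finset (Fin n),
      fObj G c (fun j => if j ∈ S then (1 : ℝ) else -1)
        = 4 * ((G.edgeFinset.card : ℝ) - cutCard G S)) ∧
    (⨅ z : Fin n → ℝ, fObj G c z) ≤ 4 * ((G.edgeFinset.card : ℝ) - maxCut G) := by
  refine ⟨fObj_signVec G c, ?_⟩
  obtain ⟨S, hS⟩ := exists_cutCard_eq_maxCut G
  have bdd : BddBelow (Set.range (fObj G c)) := ⟨0, by rintro _ ⟨z, rfl⟩; exact fObj_nonneg G c z⟩
  calc (⨅ z, fObj G c z) ≤ fObj G c (signVec S) := ciInf_le bdd _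
    _ = 4 * ((G.edgeFinset.card : ℝ) - maxCut G) := by rw [fObj_signVec, hS]

/-- Completeness direction of the MAX-CUT reduction: for every subset `S`, the ±1 vector `z^S`
indicating `S` satisfies `f_c(z^S) = 4·(m − cut(S))`; consequently
`inf_z f_c(z) ≤ 4·(m − MAXCUT(G))`. -/
theorem fObj_completeness {n : ℕ} (G : SimpleGraph (Fin n)) [Fintype G.edgeSet]
    (c : ℕ) (hc : 0 < c) :
    (∀ S : Finset (Fin n),
      fObj G c (fun j => if j ∈ S then (1 : ℝ) else -1)
        = 4 * ((G.edgeFinset.card : ℝ) - cutCard G S)) ∧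
    (⨅ z : Fin n → ℝ, fObj G c z) ≤ 4 * ((G.edgeFinset.card : ℝ) - maxCut G) :=
  fObj_completeness_general G c
end

section
/- Let G be a finite simple 3-regular graph on vertex set {1,…,n} with edge set E, let c be a positive integer, and let f_c be the associated regression objective. Let z ∈ [−1,1]^n and let z̄ ∈ {−1,+1}^n be any sign vector compatible with z, i.e., z̄_j·z_j ≥ 0 for all j. Then f_c(z̄) ≤ f_c(z) + 72·n/c. -/
open Classical Finset

/-- Sign-rounding step of the soundness analysis: for a 3-regular graph `G`, any `z ∈ [−1,1]^n`
and any compatible sign vector `z̄ ∈ {−1,+1}^n` (i.e. `z̄_j·z_j ≥ 0` for all `j`) satisfy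
`f_c(z̄) ≤ f_c(z) + 72·n/c`. -/
theorem fObj_sign_rounding {n : ℕ} (G : SimpleGraph (Fin n)) [DecidableRel G.Adj]
    (hreg : ∀ v, G.degree v = 3) (c : ℕ) (hc : 0 < c)
    (z zbar : Fin n → ℝ) (hz : ∀ j, z j ∈ Set.Icc (-1 : ℝ) 1)
    (hsign : ∀ j, zbar j = 1 ∨ zbar j = -1) (hcomp : ∀ j, 0 ≤ zbar j * z j) :
    fObj G c zbar ≤ fObj G c z + 72 * n / c := by
  classical
  set d : Fin n → ℝ := fun j => 1 - |z j| with hd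
  have hcpos : (0 : ℝ) < c := by exact_mod_cast hc
  have hd0 : ∀ j, 0 ≤ d j := fun j => by
    have := (hz j).1; have := (hz j).2
    have : |z j| ≤ 1 := abs_le.mpr ⟨(hz j).1, (hz j).2⟩
    simp [hd]; linarith
  -- per-edge bound
  have hedge : ∀ u v, G.Adj u v →
      (zbar u + zbar v) ^ 2 ≤ (z u + z v) ^ 2 + 4 * (d u + d v) := by
    intro u v _
    have hu1 := (hz u).1; have hu2 := (hz u).2
    have hv1 := (hz v).1; have hv2 := (hz v).2
    have hcu := hcomp u; have hcv := hcomp v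
    rcases hsign u with hu | hu <;> rcases hsign v with hv | hv <;>
      rw [hu] at hcu ⊢ <;> rw [hv] at hcv ⊢
    · have hzu : 0 ≤ z u := by linarith [hcu]
      have hzv : 0 ≤ z v := by linarith [hcv]
      simp only [hd, abs_of_nonneg hzu, abs_of_nonneg hzv]
      nlinarith [sq_nonneg (z u + z v - 2)]
    · have hzu : 0 ≤ z u := by linarith [hcu]
      have hzv : z v ≤ 0 := by nlinarith [hcv]
      simp only [hd, abs_of_nonneg hzu, abs_of_nonpos hzv]
      nlinarith
    · have hzu : z u ≤ 0 := by nlinarith [hcu]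
      have hzv : 0 ≤ z v := by linarith [hcv]
      simp only [hd, abs_of_nonpos hzu, abs_of_nonneg hzv]
      nlinarith
    · have hzu : z u ≤ 0 := by nlinarith [hcu]
      have hzv : z v ≤ 0 := by nlinarith [hcv]
      simp only [hd, abs_of_nonpos hzu, abs_of_nonpos hzv]
      nlinarith [sq_nonneg (z u + z v + 2)]
  -- weighted handshake
  have hhand : ∑ e ∈ G.edgeFinset,
      Sym2.lift ⟨fun u v => d u + d v, fun u v => by ring⟩ e
      = ∑ j : Fin n, (G.degree j : ℝ) * d j := by
    have step1 : ∀ e ∈ G.edgeFinset,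
        Sym2.lift ⟨fun u v => d u + d v, fun u v => by ring⟩ e
          = ∑ j : Fin n, if j ∈ e then d j else 0 := by
      intro e he
      induction e with
      | h u v =>
        have hadj : G.Adj u v := by
          rw [SimpleGraph.mem_edgeFinset] at he; exact he
        have huv : u ≠ v := hadj.ne
        rw [Sym2.lift_mk]
        have h1 : (∑ j : Fin n, if j ∈ s(u, v) then d j else 0)
            = ∑ j ∈ Finset.univ.filter (· ∈ s(u, v)), d j := (Finset.sum_filter _ _).symm
        have hfil : Finset.univ.filter (· ∈ s(u, v)) = ({u, v} : Finset (Fin n)) := by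
          ext j; simp [Sym2.mem_iff]
        rw [h1, hfil, Finset.sum_pair huv]
    rw [Finset.sum_congr rfl step1, Finset.sum_comm]
    refine Finset.sum_congr rfl fun j _ => ?_
    rw [← Finset.sum_filter, Finset.sum_const, ← SimpleGraph.incidenceFinset_eq_filter,
      SimpleGraph.card_incidenceFinset_eq_degree]
    simp [mul_comm]
  have hdeg : ∑ j : Fin n, (G.degree j : ℝ) * d j = 3 * ∑ j : Fin n, d j := by
    rw [Finset.mul_sum]
    refine Finset.sum_congr rfl fun j _ => ?_
    rw [hreg j]; norm_num
  -- per-vertex AM-GM bound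
  have hvert : ∀ j : Fin n, 12 * d j ≤ c * (d j) ^ 2 + 36 / c := by
    intro j
    have h := sq_nonneg ((c : ℝ) * d j - 6)
    have hkey : 12 * d j * c ≤ (c * (d j) ^ 2 + 36 / c) * c := by
      rw [add_mul, div_mul_cancel₀ _ (ne_of_gt hcpos)]
      nlinarith
    exact le_of_mul_le_mul_right hkey hcpos
  -- vertex term for zbar vanishes
  have hbarvert : ∑ j : Fin n, (|zbar j| - 1) ^ 2 = 0 := by
    refine Finset.sum_eq_zero fun j _ => ?_
    rcases hsign j with h | h <;> simp [h]
  -- vertex term for z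
  have hzvert : ∑ j : Fin n, (|z j| - 1) ^ 2 = ∑ j : Fin n, (d j) ^ 2 := by
    refine Finset.sum_congr rfl fun j _ => ?_
    simp [hd]; ring
  unfold fObj
  rw [hbarvert, hzvert, mul_zero, add_zero]
  have hsum1 : ∑ e ∈ G.edgeFinset,
      Sym2.lift ⟨fun u v => (zbar u + zbar v) ^ 2, fun u v => by ring⟩ e
      ≤ ∑ e ∈ G.edgeFinset,
        (Sym2.lift ⟨fun u v => (z u + z v) ^ 2, fun u v => by ring⟩ e
          + 4 * Sym2.lift ⟨fun u v => d u + d v, fun u v => by ring⟩ e) := by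
    refine Finset.sum_le_sum fun e he => ?_
    induction e with
    | h u v =>
      have hadj : G.Adj u v := by rw [SimpleGraph.mem_edgeFinset] at he; exact he
      simpa [Sym2.lift_mk] using hedge u v hadj
  rw [Finset.sum_add_distrib, ← Finset.mul_sum, hhand, hdeg] at hsum1
  have hsum2 : 4 * (3 * ∑ j : Fin n, d j) ≤ c * ∑ j : Fin n, (d j) ^ 2 + 36 * n / c := by
    have : 12 * ∑ j : Fin n, d j ≤ ∑ j : Fin n, (c * (d j) ^ 2 + 36 / c) := by
      calc (12 : ℝ) * ∑ j : Fin n, d j = ∑ j : Fin n, 12 * d j := by rw [Finset.mul_sum]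
        _ ≤ _ := Finset.sum_le_sum fun j _ => hvert j
    rw [Finset.sum_add_distrib, ← Finset.mul_sum, Finset.sum_const] at this
    simp only [Finset.card_univ, Fintype.card_fin, nsmul_eq_mul] at this
    calc 4 * (3 * ∑ j : Fin n, d j) = 12 * ∑ j : Fin n, d j := by ring
      _ ≤ c * ∑ j : Fin n, (d j) ^ 2 + (n : ℝ) * (36 / c) := this
      _ = c * ∑ j : Fin n, (d j) ^ 2 + 36 * n / c := by ring
  have h36 : (36 : ℝ) * n / c ≤ 72 * n / c := by
    have hpos : (0 : ℝ) ≤ 36 * n / c := by positivity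
    have heq : (72 : ℝ) * n / c = 36 * n / c + 36 * n / c := by ring
    linarith
  linarith
end

section
/- Let a, b ∈ [−1,1] and let ā, b̄ ∈ {−1,+1} satisfy ā·a ≥ 0 and b̄·b ≥ 0. Then (ā + b̄)² − (a + b)² ≤ 4·((1 − |a|) + (1 − |b|)). -/
/-- Per-edge sign-rounding inequality: for `a, b ∈ [−1,1]` and signs `ā, b̄ ∈ {−1,+1}`
compatible with `a` and `b` respectively, `(ā + b̄)² − (a + b)² ≤ 4·((1 − |a|) + (1 − |b|))`. -/
theorem sign_rounding_edge_inequality (a b abar bbar : ℝ)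
    (ha : a ∈ Set.Icc (-1 : ℝ) 1) (hb : b ∈ Set.Icc (-1 : ℝ) 1)
    (habar : abar = 1 ∨ abar = -1) (hbbar : bbar = 1 ∨ bbar = -1)
    (hca : 0 ≤ abar * a) (hcb : 0 ≤ bbar * b) :
    (abar + bbar) ^ 2 - (a + b) ^ 2 ≤ 4 * ((1 - |a|) + (1 - |b|)) := by
  obtain ⟨ha1, ha2⟩ := ha
  obtain ⟨hb1, hb2⟩ := hb
  rcases habar with rfl | rfl <;> rcases hbbar with rfl | rfl <;>
    rcases abs_cases a with ⟨h1, h2⟩ | ⟨h1, h2⟩ <;>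
    rcases abs_cases b with ⟨h3, h4⟩ | ⟨h3, h4⟩ <;>
    nlinarith [sq_nonneg (a + b), sq_nonneg (a - b), mul_nonneg (sub_nonneg.2 ha2) (sub_nonneg.2 hb2)]
end
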